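/- arXiv:2510.04893 — 11 statements merged into one kernel-verified Lean document; each statement's English description precedes it below -/
import Mathlib

section
/- Let L > 0 and d > 0. Let q : [0,L] → ℝ be continuously differentiable with q(0) = 0 and let l : [0,L] → ℝ be continuous. Set V = (1/2)∫₀ᴸ (l(x) + d·q(x))² dx + (1/2)∫₀ᴸ q'(x)² dx. Then min{1/(8L²d²+1), 1/2} · ∫₀ᴸ (l(x)² + q'(x)²) dx ≤ 2V ≤ max{8L²d²+1, 2} · ∫₀ᴸ (l(x)² + q'(x)²) dx. -/
open intervalIntegral

/-- Poincaré inequality on `[0, L]` for `q` with `q 0 = 0`. -/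
lemma poincare_aux (L : ℝ) (hL : 0 < L) (q : ℝ → ℝ)
    (hq : ContDiff ℝ 1 q) (hq0 : q 0 = 0) :
    (∫ x in (0:ℝ)..L, (q x)^2) ≤ 4 * L^2 * ∫ x in (0:ℝ)..L, (deriv q x)^2 := by
  have hqc : Continuous q := hq.continuous
  have hq'c : Continuous (deriv q) := hq.continuous_deriv le_rfl
  have hqd : ∀ x : ℝ, HasDerivAt q (deriv q x) x := fun x =>
    ((hq.differentiable one_ne_zero) x).hasDerivAt
  -- integration by parts: u = q*q, v = x - L
  have ibp := intervalIntegral.integral_deriv_mul_eq_sub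
    (u := fun x => q x * q x) (v := fun x => x - L)
    (u' := fun x => deriv q x * q x + q x * deriv q x) (v' := fun _ => (1:ℝ))
    (fun x _ => (hqd x).mul (hqd x))
    (fun x _ => (hasDerivAt_id x).sub_const L)
    (((hq'c.mul hqc).add (hqc.mul hq'c)).intervalIntegrable 0 L)
    (continuous_const.intervalIntegrable 0 L)
  simp only [hq0, mul_zero, zero_mul, sub_self, sub_zero, zero_sub, mul_neg] at ibp
  have int1 : IntervalIntegrable (fun x => (q x)^2) MeasureTheory.volume 0 L :=
    (hqc.pow 2).intervalIntegrable 0 L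
  have int2 : IntervalIntegrable (fun x => 2 * q x * deriv q x * (L - x))
      MeasureTheory.volume 0 L :=
    (((continuous_const.mul hqc).mul hq'c).mul
      (continuous_const.sub continuous_id)).intervalIntegrable 0 L
  have int3 : IntervalIntegrable (fun x => (q x)^2/2 + 2 * L^2 * (deriv q x)^2)
      MeasureTheory.volume 0 L :=
    (((hqc.pow 2).div_const 2).add
      (continuous_const.mul (hq'c.pow 2))).intervalIntegrable 0 L
  -- rewrite ibp into: ∫ q² = ∫ 2 q q' (L - x)
  have key : (∫ x in (0:ℝ)..L, (q x)^2)
      = ∫ x in (0:ℝ)..L, 2 * q x * deriv q x * (L - x) := by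
    have hcong : (∫ x in (0:ℝ)..L,
        ((deriv q x * q x + q x * deriv q x) * (x - L) + q x * q x * 1))
        = ∫ x in (0:ℝ)..L, ((q x)^2 - 2 * q x * deriv q x * (L - x)) := by
      apply intervalIntegral.integral_congr
      intro x _
      ring
    have hsub := intervalIntegral.integral_sub int1 int2
    rw [hcong, hsub] at ibp
    linarith [ibp]
  -- pointwise bound
  have hmono : (∫ x in (0:ℝ)..L, 2 * q x * deriv q x * (L - x))
      ≤ ∫ x in (0:ℝ)..L, ((q x)^2/2 + 2 * L^2 * (deriv q x)^2) := by
    apply intervalIntegral.integral_mono_on hL.le int2 int3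
    intro x hx
    have h1 : 0 ≤ L - x := by linarith [hx.2]
    have h2 : L - x ≤ L := by linarith [hx.1]
    nlinarith [sq_nonneg (q x - 2 * deriv q x * (L - x)), sq_nonneg (deriv q x),
      mul_nonneg (mul_nonneg (sq_nonneg (deriv q x)) hx.1) (by linarith [hx.2] : (0:ℝ) ≤ 2*L - x)]
  have hadd : (∫ x in (0:ℝ)..L, ((q x)^2/2 + 2 * L^2 * (deriv q x)^2))
      = (∫ x in (0:ℝ)..L, (q x)^2)/2 + 2 * L^2 * ∫ x in (0:ℝ)..L, (deriv q x)^2 := by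
    rw [intervalIntegral.integral_add (f := fun x => (q x)^2/2) (g := fun x => 2 * L^2 * (deriv q x)^2) (((hqc.pow 2).div_const 2).intervalIntegrable 0 L)
      ((continuous_const.mul (hq'c.pow 2)).intervalIntegrable 0 L),
      intervalIntegral.integral_div, intervalIntegral.integral_const_mul]
  rw [hadd] at hmono
  linarith [key, hmono]

/-- equivalence between the modified energy
`V = (1/2)∫₀ᴸ (l + d q)² + (1/2)∫₀ᴸ q'²` and the usual wave energy. -/
theorem modified_energy_equivalence
    (L d : ℝ) (hL : 0 < L) (hd : 0 < d)
    (q l : ℝ → ℝ)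
    (hq : ContDiff ℝ 1 q) (hq0 : q 0 = 0)
    (hl : Continuous l)
    (V : ℝ)
    (hV : V = (1/2) * (∫ x in (0:ℝ)..L, (l x + d * q x)^2)
            + (1/2) * (∫ x in (0:ℝ)..L, (deriv q x)^2)) :
    min (1 / (8 * L^2 * d^2 + 1)) (1/2)
        * (∫ x in (0:ℝ)..L, ((l x)^2 + (deriv q x)^2)) ≤ 2 * V
    ∧ 2 * V ≤ max (8 * L^2 * d^2 + 1) 2
        * (∫ x in (0:ℝ)..L, ((l x)^2 + (deriv q x)^2)) := by
  have hqc : Continuous q := hq.continuous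
  have hq'c : Continuous (deriv q) := hq.continuous_deriv le_rfl
  set A := ∫ x in (0:ℝ)..L, (l x)^2 with hA
  set B := ∫ x in (0:ℝ)..L, (deriv q x)^2 with hB
  set C := ∫ x in (0:ℝ)..L, (l x + d * q x)^2 with hC
  set D := ∫ x in (0:ℝ)..L, (q x)^2 with hD
  have intA : IntervalIntegrable (fun x => (l x)^2) MeasureTheory.volume 0 L :=
    (hl.pow 2).intervalIntegrable 0 L
  have intB : IntervalIntegrable (fun x => (deriv q x)^2) MeasureTheory.volume 0 L :=
    (hq'c.pow 2).intervalIntegrable 0 L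
  have intC : IntervalIntegrable (fun x => (l x + d * q x)^2) MeasureTheory.volume 0 L :=
    ((hl.add (continuous_const.mul hqc)).pow 2).intervalIntegrable 0 L
  have intD : IntervalIntegrable (fun x => (q x)^2) MeasureTheory.volume 0 L :=
    (hqc.pow 2).intervalIntegrable 0 L
  have hsum : (∫ x in (0:ℝ)..L, ((l x)^2 + (deriv q x)^2)) = A + B :=
    intervalIntegral.integral_add intA intB
  have hAnn : 0 ≤ A := intervalIntegral.integral_nonneg hL.le (fun x _ => sq_nonneg _)
  have hBnn : 0 ≤ B := intervalIntegral.integral_nonneg hL.le (fun x _ => sq_nonneg _)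
  have hCnn : 0 ≤ C := intervalIntegral.integral_nonneg hL.le (fun x _ => sq_nonneg _)
  have hDnn : 0 ≤ D := intervalIntegral.integral_nonneg hL.le (fun x _ => sq_nonneg _)
  have hPoin : D ≤ 4 * L^2 * B := poincare_aux L hL q hq hq0
  -- C ≤ 2A + 2 d² D
  have hCle : C ≤ 2 * A + 2 * d^2 * D := by
    have : C ≤ ∫ x in (0:ℝ)..L, (2 * (l x)^2 + 2 * d^2 * (q x)^2) := by
      apply intervalIntegral.integral_mono_on hL.le intC
        (((continuous_const.mul (hl.pow 2)).add
          (continuous_const.mul (hqc.pow 2))).intervalIntegrable 0 L)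
      intro x _
      show (l x + d * q x)^2 ≤ 2 * (l x)^2 + 2 * d^2 * (q x)^2
      nlinarith [sq_nonneg (l x - d * q x)]
    calc C ≤ ∫ x in (0:ℝ)..L, (2 * (l x)^2 + 2 * d^2 * (q x)^2) := this
      _ = 2 * A + 2 * d^2 * D := by
          rw [intervalIntegral.integral_add (f := fun x => 2 * (l x)^2) (g := fun x => 2 * d^2 * (q x)^2)
            ((continuous_const.mul (hl.pow 2)).intervalIntegrable 0 L)
            ((continuous_const.mul (hqc.pow 2)).intervalIntegrable 0 L),
            intervalIntegral.integral_const_mul, intervalIntegral.integral_const_mul]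
  -- A ≤ 2C + 2 d² D
  have hAle : A ≤ 2 * C + 2 * d^2 * D := by
    have : A ≤ ∫ x in (0:ℝ)..L, (2 * (l x + d * q x)^2 + 2 * d^2 * (q x)^2) := by
      apply intervalIntegral.integral_mono_on hL.le intA
        (((continuous_const.mul ((hl.add (continuous_const.mul hqc)).pow 2)).add
          (continuous_const.mul (hqc.pow 2))).intervalIntegrable 0 L)
      intro x _
      show (l x)^2 ≤ 2 * (l x + d * q x)^2 + 2 * d^2 * (q x)^2
      nlinarith [sq_nonneg (l x + 2 * d * q x)]
    calc A ≤ ∫ x in (0:ℝ)..L, (2 * (l x + d * q x)^2 + 2 * d^2 * (q x)^2) := this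
      _ = 2 * C + 2 * d^2 * D := by
          rw [intervalIntegral.integral_add (f := fun x => 2 * (l x + d * q x)^2) (g := fun x => 2 * d^2 * (q x)^2)
            ((continuous_const.mul ((hl.add (continuous_const.mul hqc)).pow 2)).intervalIntegrable 0 L)
            ((continuous_const.mul (hqc.pow 2)).intervalIntegrable 0 L),
            intervalIntegral.integral_const_mul, intervalIntegral.integral_const_mul]
  have h2V : 2 * V = C + B := by rw [hV]; ring
  have hMpos : (0:ℝ) < 8 * L^2 * d^2 + 1 := by positivity
  have hd2 : 0 ≤ d^2 := sq_nonneg d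
  constructor
  · -- lower bound
    rw [hsum, h2V]
    set m := min (1 / (8 * L^2 * d^2 + 1)) (1/2) with hm
    have hm1 : m ≤ 1 / (8 * L^2 * d^2 + 1) := min_le_left _ _
    have hm2 : m ≤ 1/2 := min_le_right _ _
    have hmnn : 0 ≤ m := le_min (by positivity) (by norm_num)
    have hmM : m * (8 * L^2 * d^2 + 1) ≤ 1 := by
      calc m * (8 * L^2 * d^2 + 1) ≤ (1 / (8 * L^2 * d^2 + 1)) * (8 * L^2 * d^2 + 1) := by
            apply mul_le_mul_of_nonneg_right hm1 hMpos.le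
        _ = 1 := by field_simp
    -- A + B ≤ 2C + (8L²d²+1) B
    have hAB : A + B ≤ 2 * C + (8 * L^2 * d^2 + 1) * B := by nlinarith
    calc m * (A + B) ≤ m * (2 * C + (8 * L^2 * d^2 + 1) * B) :=
          mul_le_mul_of_nonneg_left hAB hmnn
      _ = (m * 2) * C + (m * (8 * L^2 * d^2 + 1)) * B := by ring
      _ ≤ 1 * C + 1 * B := by
          apply add_le_add
          · exact mul_le_mul_of_nonneg_right (by linarith) hCnn
          · exact mul_le_mul_of_nonneg_right hmM hBnn
      _ = C + B := by ring
  · -- upper bound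
    rw [hsum, h2V]
    set M := max (8 * L^2 * d^2 + 1) (2:ℝ) with hM
    have hM1 : 8 * L^2 * d^2 + 1 ≤ M := le_max_left _ _
    have hM2 : (2:ℝ) ≤ M := le_max_right _ _
    have hCB : C + B ≤ 2 * A + (8 * L^2 * d^2 + 1) * B := by nlinarith
    calc C + B ≤ 2 * A + (8 * L^2 * d^2 + 1) * B := hCB
      _ ≤ M * A + M * B := by
          apply add_le_add
          · exact mul_le_mul_of_nonneg_right hM2 hAnn
          · exact mul_le_mul_of_nonneg_right hM1 hBnn
      _ = M * (A + B) := by ring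
end

section
/- Let L > 0 and d > 0. Let w : [0,∞) × [0,L] → ℝ be twice continuously differentiable and satisfy w_tt = w_xx − 2d·w_t − d²·w for all (t,x) ∈ (0,∞) × (0,L) and w(t,0) = 0 for all t ≥ 0. Define V(t) = (1/2)∫₀ᴸ (w_t(t,x) + d·w(t,x))² dx + (1/2)∫₀ᴸ w_x(t,x)² dx. Then V is differentiable on (0,∞) and V'(t) = −2d·V(t) + w_x(t,L)·(w_t(t,L) + d·w(t,L)) for every t > 0. -/
open MeasureTheory intervalIntegral Set

/-- First partial derivative (in the first variable) of a function on `ℝ × ℝ`. -/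
noncomputable def pd1 (F : ℝ × ℝ → ℝ) : ℝ × ℝ → ℝ := fun p => fderiv ℝ F p (1, 0)

/-- First partial derivative (in the second variable) of a function on `ℝ × ℝ`. -/
noncomputable def pd2 (F : ℝ × ℝ → ℝ) : ℝ × ℝ → ℝ := fun p => fderiv ℝ F p (0, 1)

lemma hasDerivAt_pd1 {F : ℝ × ℝ → ℝ} (hF : Differentiable ℝ F) (s x : ℝ) :
    HasDerivAt (fun u => F (u, x)) (pd1 F (s, x)) s :=
  (hF (s, x)).hasFDerivAt.comp_hasDerivAt s (HasDerivAt.prodMk (hasDerivAt_id s) (hasDerivAt_const s x))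

lemma hasDerivAt_pd2 {F : ℝ × ℝ → ℝ} (hF : Differentiable ℝ F) (s x : ℝ) :
    HasDerivAt (fun y => F (s, y)) (pd2 F (s, x)) x :=
  (hF (s, x)).hasFDerivAt.comp_hasDerivAt x (HasDerivAt.prodMk (hasDerivAt_const x s) (hasDerivAt_id x))

lemma contDiff_pd1 {F : ℝ × ℝ → ℝ} {n : ℕ∞} (hF : ContDiff ℝ (n + 1) F) :
    ContDiff ℝ n (pd1 F) :=
  (ContinuousLinearMap.apply ℝ ℝ ((1 : ℝ), (0 : ℝ))).contDiff.comp (hF.fderiv_right le_rfl)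

lemma contDiff_pd2 {F : ℝ × ℝ → ℝ} {n : ℕ∞} (hF : ContDiff ℝ (n + 1) F) :
    ContDiff ℝ n (pd2 F) :=
  (ContinuousLinearMap.apply ℝ ℝ ((0 : ℝ), (1 : ℝ))).contDiff.comp (hF.fderiv_right le_rfl)

lemma fderiv_apply_eq {F : ℝ × ℝ → ℝ} (hF : ContDiff ℝ 2 F) (p : ℝ × ℝ) (u v : ℝ × ℝ) :
    fderiv ℝ (fun q => fderiv ℝ F q v) p u = fderiv ℝ (fderiv ℝ F) p u v := by
  have h1 : ContDiff ℝ 1 (fderiv ℝ F) := hF.fderiv_right (by norm_num)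
  have hfd : HasFDerivAt (fderiv ℝ F) (fderiv ℝ (fderiv ℝ F) p) p :=
    (h1.differentiable one_ne_zero p).hasFDerivAt
  have h2 : HasFDerivAt (fun q => fderiv ℝ F q v)
      ((ContinuousLinearMap.apply ℝ ℝ v).comp (fderiv ℝ (fderiv ℝ F) p)) p :=
    (ContinuousLinearMap.apply ℝ ℝ v).hasFDerivAt.comp p hfd
  rw [h2.fderiv]; rfl

/-- Symmetry of second derivatives. -/
lemma pd_symm {F : ℝ × ℝ → ℝ} (hF : ContDiff ℝ 2 F) (p : ℝ × ℝ) :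
    pd1 (pd2 F) p = pd2 (pd1 F) p := by
  have hd : Differentiable ℝ F := hF.differentiable two_ne_zero
  have h1 : ContDiff ℝ 1 (fderiv ℝ F) := hF.fderiv_right (by norm_num)
  have hfd : HasFDerivAt (fderiv ℝ F) (fderiv ℝ (fderiv ℝ F) p) p :=
    (h1.differentiable one_ne_zero p).hasFDerivAt
  show fderiv ℝ (pd2 F) p (1, 0) = fderiv ℝ (pd1 F) p (0, 1)
  unfold pd1 pd2
  rw [fderiv_apply_eq hF, fderiv_apply_eq hF]
  exact second_derivative_symmetric (fun y => (hd y).hasFDerivAt) hfd _ _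

/-- Differentiation under the interval integral sign, for continuous data. -/
lemma paramDeriv {G G' : ℝ × ℝ → ℝ} (hG : Continuous G) (hG' : Continuous G')
    (hdiff : ∀ s x : ℝ, HasDerivAt (fun u => G (u, x)) (G' (s, x)) s)
    (a b t : ℝ) :
    HasDerivAt (fun s => ∫ x in a..b, G (s, x)) (∫ x in a..b, G' (t, x)) t := by
  obtain ⟨C, hC⟩ :=
    ((isCompact_closedBall t 1).prod isCompact_uIcc).exists_bound_of_continuousOn
      (s := Metric.closedBall t 1 ×ˢ uIcc a b) hG'.continuousOn
  refine (intervalIntegral.hasDerivAt_integral_of_dominated_loc_of_deriv_le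
    (F := fun s x => G (s, x)) (F' := fun s x => G' (s, x)) (x₀ := t)
    (bound := fun _ => |C|) (a := a) (b := b) (μ := volume) (s := Metric.ball t 1) (Metric.ball_mem_nhds t one_pos)
    (Filter.Eventually.of_forall fun s =>
      (hG.comp (Continuous.prodMk_right s)).aestronglyMeasurable)
    ((hG.comp (Continuous.prodMk_right t)).intervalIntegrable a b)
    ((hG'.comp (Continuous.prodMk_right t)).aestronglyMeasurable)
    (Filter.Eventually.of_forall fun x hx s hs => ?_)
    intervalIntegrable_const
    (Filter.Eventually.of_forall fun x _ s _ => hdiff s x)).2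
  calc ‖G' (s, x)‖ ≤ C := hC (s, x)
        ⟨Metric.ball_subset_closedBall hs, uIoc_subset_uIcc hx⟩
    _ ≤ |C| := le_abs_self C

/-- Interval integrals agree if the integrands agree on the open interval. -/
lemma integral_congr_Ioo {L : ℝ} (hL : 0 < L) {f g : ℝ → ℝ}
    (h : ∀ x ∈ Set.Ioo (0 : ℝ) L, f x = g x) :
    ∫ x in (0:ℝ)..L, f x = ∫ x in (0:ℝ)..L, g x := by
  apply intervalIntegral.integral_congr_ae
  rw [MeasureTheory.ae_iff]
  have hsub : {x | ¬(x ∈ Set.uIoc (0:ℝ) L → f x = g x)} ⊆ ({L} : Set ℝ) := by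
    intro x hx
    simp only [Set.mem_setOf_eq, Classical.not_imp] at hx
    obtain ⟨hx1, hx2⟩ := hx
    rw [Set.uIoc_of_le hL.le] at hx1
    by_contra hne
    exact hx2 (h x ⟨hx1.1, lt_of_le_of_ne hx1.2 fun hEq => hne hEq⟩)
  exact MeasureTheory.measure_mono_null hsub Real.volume_singleton

/-- derivative of the modified energy along the damped wave target
system `w_tt = w_xx − 2d w_t − d² w`, `w(t,0) = 0`. -/
theorem modified_energy_derivative
    (L d : ℝ) (hL : 0 < L) (hd : 0 < d)
    (w : ℝ → ℝ → ℝ)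
    (hw : ContDiff ℝ 2 (fun p : ℝ × ℝ => w p.1 p.2))
    (hPDE : ∀ t ∈ Set.Ioi (0:ℝ), ∀ x ∈ Set.Ioo (0:ℝ) L,
      deriv (deriv (fun s => w s x)) t =
        deriv (deriv (fun y => w t y)) x
        - 2 * d * deriv (fun s => w s x) t - d^2 * w t x)
    (hbc : ∀ t ≥ (0:ℝ), w t 0 = 0)
    (V : ℝ → ℝ)
    (hV : ∀ t, V t =
        (1/2) * (∫ x in (0:ℝ)..L, (deriv (fun s => w s x) t + d * w t x)^2)
      + (1/2) * (∫ x in (0:ℝ)..L, (deriv (fun y => w t y) x)^2)) :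
    ∀ t ∈ Set.Ioi (0:ℝ),
      HasDerivAt V
        (-(2 * d) * V t
          + deriv (fun y => w t y) L * (deriv (fun s => w s L) t + d * w t L)) t := by
  intro t ht
  have ht' : (0:ℝ) < t := ht
  set W : ℝ × ℝ → ℝ := fun p : ℝ × ℝ => w p.1 p.2 with hWdef
  have hWd : Differentiable ℝ W := hw.differentiable two_ne_zero
  have hwt1 : ContDiff ℝ 1 (pd1 W) := contDiff_pd1 (by exact_mod_cast hw)
  have hwx1 : ContDiff ℝ 1 (pd2 W) := contDiff_pd2 (by exact_mod_cast hw)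
  have hwtd : Differentiable ℝ (pd1 W) := hwt1.differentiable one_ne_zero
  have hwxd : Differentiable ℝ (pd2 W) := hwx1.differentiable one_ne_zero
  -- first derivatives
  have hA : ∀ s x : ℝ, HasDerivAt (fun u => w u x) (pd1 W (s, x)) s :=
    fun s x => hasDerivAt_pd1 hWd s x
  have hB : ∀ s x : ℝ, HasDerivAt (fun y => w s y) (pd2 W (s, x)) x :=
    fun s x => hasDerivAt_pd2 hWd s x
  have derivA : ∀ s x : ℝ, deriv (fun u => w u x) s = pd1 W (s, x) :=
    fun s x => (hA s x).deriv
  have derivB : ∀ s x : ℝ, deriv (fun y => w s y) x = pd2 W (s, x) :=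
    fun s x => (hB s x).deriv
  -- second derivatives
  have hAt : ∀ s x : ℝ, HasDerivAt (fun u => pd1 W (u, x)) (pd1 (pd1 W) (s, x)) s :=
    fun s x => hasDerivAt_pd1 hwtd s x
  have hAx : ∀ s x : ℝ, HasDerivAt (fun y => pd1 W (s, y)) (pd2 (pd1 W) (s, x)) x :=
    fun s x => hasDerivAt_pd2 hwtd s x
  have hBt : ∀ s x : ℝ, HasDerivAt (fun u => pd2 W (u, x)) (pd1 (pd2 W) (s, x)) s :=
    fun s x => hasDerivAt_pd1 hwxd s x
  have hBx : ∀ s x : ℝ, HasDerivAt (fun y => pd2 W (s, y)) (pd2 (pd2 W) (s, x)) x :=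
    fun s x => hasDerivAt_pd2 hwxd s x
  -- continuity
  have hWc : Continuous W := hw.continuous
  have hAc : Continuous (pd1 W) := hwt1.continuous
  have hBc : Continuous (pd2 W) := hwx1.continuous
  have hAtc : Continuous (pd1 (pd1 W)) :=
    (ContinuousLinearMap.apply ℝ ℝ ((1:ℝ),(0:ℝ))).continuous.comp
      (hwt1.continuous_fderiv one_ne_zero)
  have hBtc : Continuous (pd1 (pd2 W)) :=
    (ContinuousLinearMap.apply ℝ ℝ ((1:ℝ),(0:ℝ))).continuous.comp
      (hwx1.continuous_fderiv one_ne_zero)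
  have hAxc : Continuous (pd2 (pd1 W)) :=
    (ContinuousLinearMap.apply ℝ ℝ ((0:ℝ),(1:ℝ))).continuous.comp
      (hwt1.continuous_fderiv one_ne_zero)
  have hBxc : Continuous (pd2 (pd2 W)) :=
    (ContinuousLinearMap.apply ℝ ℝ ((0:ℝ),(1:ℝ))).continuous.comp
      (hwx1.continuous_fderiv one_ne_zero)
  have hsymm : ∀ p : ℝ × ℝ, pd1 (pd2 W) p = pd2 (pd1 W) p := pd_symm hw
  -- the PDE in terms of pd
  have hPDE' : ∀ x ∈ Set.Ioo (0:ℝ) L,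
      pd1 (pd1 W) (t, x) =
        pd2 (pd2 W) (t, x) - 2 * d * pd1 W (t, x) - d ^ 2 * w t x := by
    intro x hx
    have e1 : deriv (fun u => w u x) = fun s => pd1 W (s, x) :=
      funext fun s => derivA s x
    have e2 : deriv (fun y => w t y) = fun y => pd2 W (t, y) :=
      funext fun y => derivB t y
    have := hPDE t ht x hx
    rw [e1, e2, (hAt t x).deriv, (hBx t x).deriv] at this
    simpa using this
  -- boundary facts
  have hwt0 : pd1 W (t, 0) = 0 := by
    have hev : (fun s => w s 0) =ᶠ[nhds t] (fun _ => (0:ℝ)) := by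
      filter_upwards [Ioi_mem_nhds ht'] with s hs
      exact hbc s (le_of_lt hs)
    exact (hA t 0).unique ((hasDerivAt_const t (0:ℝ)).congr_of_eventuallyEq hev)
  have hw0 : w t 0 = 0 := hbc t ht'.le
  -- the two integrand families for differentiation under the integral
  set G1 : ℝ × ℝ → ℝ := fun p => (pd1 W p + d * W p) ^ 2 with hG1def
  set G1' : ℝ × ℝ → ℝ :=
    fun p => 2 * (pd1 W p + d * W p) * (pd1 (pd1 W) p + d * pd1 W p) with hG1'def
  set G2 : ℝ × ℝ → ℝ := fun p => (pd2 W p) ^ 2 with hG2def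
  set G2' : ℝ × ℝ → ℝ := fun p => 2 * pd2 W p * pd1 (pd2 W) p with hG2'def
  have hG1c : Continuous G1 := ((hAc.add (continuous_const.mul hWc)).pow 2)
  have hG1'c : Continuous G1' :=
    (continuous_const.mul (hAc.add (continuous_const.mul hWc))).mul
      (hAtc.add (continuous_const.mul hAc))
  have hG2c : Continuous G2 := hBc.pow 2
  have hG2'c : Continuous G2' := (continuous_const.mul hBc).mul hBtc
  have hG1diff : ∀ s x : ℝ, HasDerivAt (fun u => G1 (u, x)) (G1' (s, x)) s := by
    intro s x
    have h := ((hAt s x).add ((hA s x).const_mul d)).pow 2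
    convert h using 1
    show 2 * (pd1 W (s, x) + d * w s x) * (pd1 (pd1 W) (s, x) + d * pd1 W (s, x)) =
      ((2:ℕ):ℝ) * (pd1 W (s, x) + d * w s x) ^ 1 * (pd1 (pd1 W) (s, x) + d * pd1 W (s, x))
    push_cast; ring
    all_goals rfl
  have hG2diff : ∀ s x : ℝ, HasDerivAt (fun u => G2 (u, x)) (G2' (s, x)) s := by
    intro s x
    have h := (hBt s x).pow 2
    convert h using 1
    show 2 * pd2 W (s, x) * pd1 (pd2 W) (s, x) = ((2:ℕ):ℝ) * pd2 W (s, x) ^ 1 * pd1 (pd2 W) (s, x)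
    push_cast; ring
    all_goals rfl
  -- derivative of V
  have hI1 : HasDerivAt (fun s => ∫ x in (0:ℝ)..L, G1 (s, x))
      (∫ x in (0:ℝ)..L, G1' (t, x)) t := paramDeriv hG1c hG1'c hG1diff 0 L t
  have hI2 : HasDerivAt (fun s => ∫ x in (0:ℝ)..L, G2 (s, x))
      (∫ x in (0:ℝ)..L, G2' (t, x)) t := paramDeriv hG2c hG2'c hG2diff 0 L t
  have hVfun : V = fun s => (1/2) * (∫ x in (0:ℝ)..L, G1 (s, x))
      + (1/2) * (∫ x in (0:ℝ)..L, G2 (s, x)) := by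
    funext s
    rw [hV s]
    congr 1
    · congr 1
      apply intervalIntegral.integral_congr
      intro x _
      simp only [hG1def]
      rw [derivA]
    · congr 1
      apply intervalIntegral.integral_congr
      intro x _
      simp only [hG2def]
      rw [derivB]
  have hDV : HasDerivAt V
      ((1/2) * (∫ x in (0:ℝ)..L, G1' (t, x)) + (1/2) * (∫ x in (0:ℝ)..L, G2' (t, x))) t := by
    rw [hVfun]
    exact (hI1.const_mul (1/2)).add (hI2.const_mul (1/2))
  -- now compute the value of the derivative
  -- abbreviations for the integrals
  set J1 : ℝ := ∫ x in (0:ℝ)..L, (pd1 W (t, x) + d * w t x) ^ 2 with hJ1def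
  set J2 : ℝ := ∫ x in (0:ℝ)..L, (pd2 W (t, x)) ^ 2 with hJ2def
  set J3 : ℝ := ∫ x in (0:ℝ)..L, pd2 (pd2 W) (t, x) * pd1 W (t, x) with hJ3def
  set J4 : ℝ := ∫ x in (0:ℝ)..L, w t x * pd2 (pd2 W) (t, x) with hJ4def
  -- integrability facts at time t
  have cx : ∀ (F : ℝ × ℝ → ℝ), Continuous F → Continuous (fun x => F (t, x)) :=
    fun F hF => hF.comp (Continuous.prodMk_right t)
  have cw : Continuous (fun x => w t x) := cx W hWc
  have int1 : IntervalIntegrable (fun x => (pd1 W (t, x) + d * w t x) ^ 2) volume 0 L :=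
    (((cx _ hAc).add (continuous_const.mul cw)).pow 2).intervalIntegrable 0 L
  have int2 : IntervalIntegrable (fun x => (pd2 W (t, x)) ^ 2) volume 0 L :=
    ((cx _ hBc).pow 2).intervalIntegrable 0 L
  have int3 : IntervalIntegrable (fun x => pd2 (pd2 W) (t, x) * pd1 W (t, x)) volume 0 L :=
    ((cx _ hBxc).mul (cx _ hAc)).intervalIntegrable 0 L
  have int4 : IntervalIntegrable (fun x => w t x * pd2 (pd2 W) (t, x)) volume 0 L :=
    (cw.mul (cx _ hBxc)).intervalIntegrable 0 L
  -- Step 1 : rewrite ∫ G1' using the PDE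
  have step1 : (∫ x in (0:ℝ)..L, G1' (t, x)) = 2 * J3 + (2*d) * J4 - (2*d) * J1 := by
    have e : (∫ x in (0:ℝ)..L, G1' (t, x)) =
        ∫ x in (0:ℝ)..L, (2 * (pd2 (pd2 W) (t, x) * pd1 W (t, x))
          + (2*d) * (w t x * pd2 (pd2 W) (t, x))
          - (2*d) * ((pd1 W (t, x) + d * w t x) ^ 2)) := by
      apply integral_congr_Ioo hL
      intro x hx
      simp only [hG1'def]
      rw [hPDE' x hx]
      show 2 * (pd1 W (t,x) + d * w t x) * _ = _
      ring
    rw [e, intervalIntegral.integral_sub ((int3.const_mul 2).add (int4.const_mul (2*d)))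
        (int1.const_mul (2*d)),
      intervalIntegral.integral_add (int3.const_mul 2) (int4.const_mul (2*d)),
      intervalIntegral.integral_const_mul, intervalIntegral.integral_const_mul,
      intervalIntegral.integral_const_mul]
  -- Step 2 : rewrite ∫ G2' using symmetry of second derivatives and integration by parts
  have ibp1 : (∫ x in (0:ℝ)..L, G2' (t, x)) =
      2 * (pd2 W (t, L) * pd1 W (t, L)) - 2 * J3 := by
    have e : (∫ x in (0:ℝ)..L, G2' (t, x)) =
        2 * ∫ x in (0:ℝ)..L, pd2 W (t, x) * pd2 (pd1 W) (t, x) := by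
      rw [← intervalIntegral.integral_const_mul]
      apply intervalIntegral.integral_congr
      intro x _
      simp only [hG2'def]
      rw [hsymm]
      ring
    have hparts := intervalIntegral.integral_deriv_mul_eq_sub
      (u := fun x => pd2 W (t, x)) (u' := fun x => pd2 (pd2 W) (t, x))
      (v := fun x => pd1 W (t, x)) (v' := fun x => pd2 (pd1 W) (t, x))
      (a := (0:ℝ)) (b := L)
      (fun x _ => hBx t x) (fun x _ => hAx t x)
      ((cx _ hBxc).intervalIntegrable 0 L)
      ((cx _ hAxc).intervalIntegrable 0 L)
    have hsplit : (∫ x in (0:ℝ)..L,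
        (pd2 (pd2 W) (t, x) * pd1 W (t, x) + pd2 W (t, x) * pd2 (pd1 W) (t, x)))
        = J3 + ∫ x in (0:ℝ)..L, pd2 W (t, x) * pd2 (pd1 W) (t, x) := by
      rw [intervalIntegral.integral_add (g := fun x => pd2 W (t, x) * pd2 (pd1 W) (t, x)) int3
        (((cx _ hBc).mul (cx _ hAxc)).intervalIntegrable 0 L)]
    rw [hsplit] at hparts
    rw [e]
    have hw00 : pd1 W (t, (0:ℝ)) = 0 := hwt0
    have hkey : (∫ x in (0:ℝ)..L, pd2 W (t, x) * pd2 (pd1 W) (t, x))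
        = pd2 W (t, L) * pd1 W (t, L) - pd2 W (t, 0) * pd1 W (t, 0) - J3 := by
      linarith [hparts]
    rw [hkey, hw00]
    ring
  -- Step 3 : integration by parts for ∫ w * w_xx
  have ibp2 : J4 = w t L * pd2 W (t, L) - J2 := by
    have hparts := intervalIntegral.integral_deriv_mul_eq_sub
      (u := fun x => w t x) (u' := fun x => pd2 W (t, x))
      (v := fun x => pd2 W (t, x)) (v' := fun x => pd2 (pd2 W) (t, x))
      (a := (0:ℝ)) (b := L)
      (fun x _ => hB t x) (fun x _ => hBx t x)
      ((cx _ hBc).intervalIntegrable 0 L)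
      ((cx _ hBxc).intervalIntegrable 0 L)
    have hsplit : (∫ x in (0:ℝ)..L,
        (pd2 W (t, x) * pd2 W (t, x) + w t x * pd2 (pd2 W) (t, x)))
        = J2 + J4 := by
      rw [intervalIntegral.integral_add (f := fun x => pd2 W (t, x) * pd2 W (t, x)) (((cx _ hBc).mul (cx _ hBc)).intervalIntegrable 0 L)
        int4]
      congr 1
      apply intervalIntegral.integral_congr
      intro x _
      ring
    rw [hsplit] at hparts
    simp only [hw0, zero_mul, sub_zero] at hparts
    linarith [hparts]
  -- Final assembly
  have hJ1' : (∫ x in (0:ℝ)..L, (deriv (fun s => w s x) t + d * w t x)^2) = J1 := by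
    rw [hJ1def]
    exact intervalIntegral.integral_congr fun x _ => by rw [derivA]
  have hJ2' : (∫ x in (0:ℝ)..L, (deriv (fun y => w t y) x)^2) = J2 := by
    rw [hJ2def]
    exact intervalIntegral.integral_congr fun x _ => by rw [derivB]
  have hVt : V t = (1/2) * J1 + (1/2) * J2 := by
    rw [hV t, hJ1', hJ2']
  have hfinal : (1/2) * (∫ x in (0:ℝ)..L, G1' (t, x)) + (1/2) * (∫ x in (0:ℝ)..L, G2' (t, x))
      = -(2 * d) * V t
        + deriv (fun y => w t y) L * (deriv (fun s => w s L) t + d * w t L) := by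
    rw [step1, ibp1, ibp2, hVt, derivA, derivB]
    ring
  rw [← hfinal]
  exact hDV
end

section
/- Let L > 0, d > 0, P > 0 and h_L > 0. Let w : [0,∞) × [0,L] → ℝ be twice continuously differentiable and satisfy w_tt = w_xx − 2d·w_t − d²·w for all (t,x) ∈ (0,∞) × (0,L) and w(t,0) = 0 for all t ≥ 0. Suppose there are functions p, θ : (0,∞) → ℝ with |p(t)| ≤ P, |θ(t)| ≤ 1, θ(t)·w_x(t,L) = |w_x(t,L)|, and w(t,L) + (1/d)·w_t(t,L) = h_L·p(t) − h_L·P·θ(t) for every t > 0. Define V(t) = (1/2)∫₀ᴸ (w_t(t,x) + d·w(t,x))² dx + (1/2)∫₀ᴸ w_x(t,x)² dx. Then V(t) ≤ e^{−2dt}·V(0) for all t ≥ 0. -/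
open MeasureTheory Set intervalIntegral

lemma param_hasDerivAt {F F' : ℝ → ℝ → ℝ} {a b t₀ : ℝ}
    (hF : Continuous fun q : ℝ × ℝ => F q.1 q.2)
    (hF' : Continuous fun q : ℝ × ℝ => F' q.1 q.2)
    (hd : ∀ t x, HasDerivAt (fun s => F s x) (F' t x) t) :
    HasDerivAt (fun s => ∫ x in a..b, F s x) (∫ x in a..b, F' t₀ x) t₀ := by
  obtain ⟨C, hC⟩ := ((isCompact_Icc (a := t₀ - 1) (b := t₀ + 1)).prod
    (isCompact_uIcc (a := a) (b := b))).exists_bound_of_continuousOn hF'.continuousOn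
  refine (intervalIntegral.hasDerivAt_integral_of_dominated_loc_of_deriv_le
    (F := F) (F' := F') (bound := fun _ => C) (Metric.ball_mem_nhds t₀ one_pos) ?_ ?_ ?_ ?_ ?_ ?_).2
  · exact Filter.Eventually.of_forall fun s =>
      (hF.comp (Continuous.prodMk_right s)).aestronglyMeasurable
  · exact (hF.comp (Continuous.prodMk_right t₀)).intervalIntegrable a b
  · exact (hF'.comp (Continuous.prodMk_right t₀)).aestronglyMeasurable
  · refine Filter.Eventually.of_forall fun x hx s hs => ?_
    have : (s, x) ∈ Icc (t₀ - 1) (t₀ + 1) ×ˢ uIcc a b := by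
      constructor
      · have := Metric.mem_ball.1 hs
        rw [Real.dist_eq] at this
        constructor <;> [linarith [(abs_le.1 this.le).1]; linarith [(abs_le.1 this.le).2]]
      · exact uIoc_subset_uIcc hx
    simpa using hC _ this
  · exact intervalIntegrable_const
  · exact Filter.Eventually.of_forall fun x _ s _ => hd s x

/-- Lyapunov decay `V(t) ≤ e^{−2dt} V(0)` for the Dirichlet–Dirichlet
closed-loop target system, where `θ(t)` is a selection of `sign(w_x(t,L))` and the
right boundary condition is `w(t,L) + (1/d)w_t(t,L) = h_L p(t) − h_L P θ(t)`. -/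
theorem lyapunov_decay_dirichlet_dirichlet
    (L d P hL_ : ℝ) (hL : 0 < L) (hd : 0 < d) (hP : 0 < P) (hh : 0 < hL_)
    (w : ℝ → ℝ → ℝ)
    (hw : ContDiff ℝ 2 (fun p : ℝ × ℝ => w p.1 p.2))
    (hPDE : ∀ t ∈ Set.Ioi (0:ℝ), ∀ x ∈ Set.Ioo (0:ℝ) L,
      deriv (deriv (fun s => w s x)) t =
        deriv (deriv (fun y => w t y)) x
        - 2 * d * deriv (fun s => w s x) t - d^2 * w t x)
    (hbc0 : ∀ t ≥ (0:ℝ), w t 0 = 0)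
    (p θ : ℝ → ℝ)
    (hp : ∀ t ∈ Set.Ioi (0:ℝ), |p t| ≤ P)
    (hθ : ∀ t ∈ Set.Ioi (0:ℝ), |θ t| ≤ 1)
    (hsel : ∀ t ∈ Set.Ioi (0:ℝ),
      θ t * deriv (fun y => w t y) L = |deriv (fun y => w t y) L|)
    (hbcL : ∀ t ∈ Set.Ioi (0:ℝ),
      w t L + (1/d) * deriv (fun s => w s L) t = hL_ * p t - hL_ * P * θ t)
    (V : ℝ → ℝ)
    (hV : ∀ t, V t =
        (1/2) * (∫ x in (0:ℝ)..L, (deriv (fun s => w s x) t + d * w t x)^2)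
      + (1/2) * (∫ x in (0:ℝ)..L, (deriv (fun y => w t y) x)^2)) :
    ∀ t ≥ (0:ℝ), V t ≤ Real.exp (-(2 * d * t)) * V 0 := by
  -- basic objects
  set W : ℝ × ℝ → ℝ := fun q => w q.1 q.2 with hWdef
  set D : ℝ × ℝ → (ℝ × ℝ →L[ℝ] ℝ) := fderiv ℝ W with hDdef
  set D2 : ℝ × ℝ → (ℝ × ℝ →L[ℝ] (ℝ × ℝ →L[ℝ] ℝ)) := fderiv ℝ D with hD2def
  have hWd : ∀ q, HasFDerivAt W (D q) q :=
    fun q => (hw.differentiable two_ne_zero q).hasFDerivAt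
  have hDc1 : ContDiff ℝ 1 D := hw.fderiv_right (by norm_num)
  have hDd : ∀ q, HasFDerivAt D (D2 q) q :=
    fun q => (hDc1.differentiable one_ne_zero q).hasFDerivAt
  have hsymm : ∀ q u v, D2 q u v = D2 q v u :=
    fun q => second_derivative_symmetric hWd (hDd q)
  have hDcont : Continuous D := hDc1.continuous
  have hD2cont : Continuous D2 := (hDc1.fderiv_right (m := 0) (by norm_num)).continuous
  set et : ℝ × ℝ := ((1:ℝ), (0:ℝ)) with hetdef
  set ex : ℝ × ℝ := ((0:ℝ), (1:ℝ)) with hexdef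
  set wt : ℝ → ℝ → ℝ := fun t x => D (t, x) et with hwtdef
  set wx : ℝ → ℝ → ℝ := fun t x => D (t, x) ex with hwxdef
  set wtt : ℝ → ℝ → ℝ := fun t x => D2 (t, x) et et with hwttdef
  set wtx : ℝ → ℝ → ℝ := fun t x => D2 (t, x) ex et with hwtxdef
  set wxt : ℝ → ℝ → ℝ := fun t x => D2 (t, x) et ex with hwxtdef
  set wxx : ℝ → ℝ → ℝ := fun t x => D2 (t, x) ex ex with hwxxdef
  -- line derivatives
  have hlt : ∀ x t : ℝ, HasDerivAt (fun s : ℝ => (s, x)) et t :=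
    fun x t => (hasDerivAt_id t).prodMk (hasDerivAt_const t x)
  have hlx : ∀ t x : ℝ, HasDerivAt (fun y : ℝ => (t, y)) ex x :=
    fun t x => (hasDerivAt_const x t).prodMk (hasDerivAt_id x)
  have hwt : ∀ t x, HasDerivAt (fun s => w s x) (wt t x) t :=
    fun t x => by have := (hWd (t, x)).comp_hasDerivAt t (hlt x t); exact this
  have hwx : ∀ t x, HasDerivAt (fun y => w t y) (wx t x) x :=
    fun t x => (hWd (t, x)).comp_hasDerivAt x (hlx t x)
  -- second derivatives of coordinate slices
  have hDapp : ∀ (v : ℝ × ℝ) q, HasFDerivAt (fun q => D q v)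
      ((ContinuousLinearMap.apply ℝ ℝ v).comp (D2 q)) q :=
    fun v q => (ContinuousLinearMap.apply ℝ ℝ v).hasFDerivAt.comp q (hDd q)
  have hwt_t : ∀ t x, HasDerivAt (fun s => wt s x) (wtt t x) t := by
    intro t x
    exact (hDapp et (t, x)).comp_hasDerivAt t (hlt x t)
  have hwt_x : ∀ t x, HasDerivAt (fun y => wt t y) (wtx t x) x := by
    intro t x
    exact (hDapp et (t, x)).comp_hasDerivAt x (hlx t x)
  have hwx_t : ∀ t x, HasDerivAt (fun s => wx s x) (wxt t x) t := by
    intro t x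
    exact (hDapp ex (t, x)).comp_hasDerivAt t (hlt x t)
  have hwx_x : ∀ t x, HasDerivAt (fun y => wx t y) (wxx t x) x := by
    intro t x
    exact (hDapp ex (t, x)).comp_hasDerivAt x (hlx t x)
  -- joint continuity
  have cw : Continuous fun q : ℝ × ℝ => w q.1 q.2 := hw.continuous
  have cwt : Continuous fun q : ℝ × ℝ => wt q.1 q.2 :=
    (hDcont.clm_apply continuous_const : Continuous fun q : ℝ × ℝ => D q et)
  have cwx : Continuous fun q : ℝ × ℝ => wx q.1 q.2 :=
    (hDcont.clm_apply continuous_const : Continuous fun q : ℝ × ℝ => D q ex)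
  have cwtt : Continuous fun q : ℝ × ℝ => wtt q.1 q.2 :=
    ((hD2cont.clm_apply continuous_const).clm_apply continuous_const :
      Continuous fun q : ℝ × ℝ => D2 q et et)
  have cwtx : Continuous fun q : ℝ × ℝ => wtx q.1 q.2 :=
    ((hD2cont.clm_apply continuous_const).clm_apply continuous_const :
      Continuous fun q : ℝ × ℝ => D2 q ex et)
  have cwxt : Continuous fun q : ℝ × ℝ => wxt q.1 q.2 :=
    ((hD2cont.clm_apply continuous_const).clm_apply continuous_const :
      Continuous fun q : ℝ × ℝ => D2 q et ex)
  have cwxx : Continuous fun q : ℝ × ℝ => wxx q.1 q.2 :=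
    ((hD2cont.clm_apply continuous_const).clm_apply continuous_const :
      Continuous fun q : ℝ × ℝ => D2 q ex ex)
  -- rewrite `deriv`s
  have hder_t : ∀ t x, deriv (fun s => w s x) t = wt t x := fun t x => (hwt t x).deriv
  have hder_x : ∀ t x, deriv (fun y => w t y) x = wx t x := fun t x => (hwx t x).deriv
  have hPDE' : ∀ t ∈ Set.Ioi (0:ℝ), ∀ x ∈ Set.Ioo (0:ℝ) L,
      wtt t x = wxx t x - 2*d*wt t x - d^2 * w t x := by
    intro t ht x hx
    have h1 : deriv (deriv (fun s => w s x)) t = wtt t x := by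
      have he : deriv (fun s => w s x) = fun s => wt s x := funext fun s => (hwt s x).deriv
      rw [he]; exact (hwt_t t x).deriv
    have h2 : deriv (deriv (fun y => w t y)) x = wxx t x := by
      have he : deriv (fun y => w t y) = fun y => wx t y := funext fun y => (hwx t y).deriv
      rw [he]; exact (hwx_x t x).deriv
    have h := hPDE t ht x hx
    rw [h1, h2, hder_t] at h
    exact h
  -- u and its x-derivative
  set u : ℝ → ℝ → ℝ := fun t x => wt t x + d * w t x with hudef
  set ux : ℝ → ℝ → ℝ := fun t x => wtx t x + d * wx t x with huxdef
  have cu : Continuous fun q : ℝ × ℝ => u q.1 q.2 := cwt.add (continuous_const.mul cw)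
  have cux : Continuous fun q : ℝ × ℝ => ux q.1 q.2 := cwtx.add (continuous_const.mul cwx)
  have hu_t : ∀ t x, HasDerivAt (fun s => u s x) (wtt t x + d * wt t x) t :=
    fun t x => (hwt_t t x).add ((hwt t x).const_mul d)
  have hu_x : ∀ t x, HasDerivAt (fun y => u t y) (ux t x) x :=
    fun t x => (hwt_x t x).add ((hwx t x).const_mul d)
  -- V formula
  have hVformula : V = fun t => (1/2) * (∫ x in (0:ℝ)..L, (u t x)^2)
      + (1/2) * (∫ x in (0:ℝ)..L, (wx t x)^2) := by
    funext t
    rw [hV t]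
    have e1 : (fun x => (deriv (fun s => w s x) t + d * w t x)^2) = fun x => (u t x)^2 :=
      funext fun x => by rw [hder_t]
    have e2 : (fun x => (deriv (fun y => w t y) x)^2) = fun x => (wx t x)^2 :=
      funext fun x => by rw [hder_x]
    rw [e1, e2]
  -- derivative of V
  set VD : ℝ → ℝ := fun t => (∫ x in (0:ℝ)..L, u t x * (wtt t x + d * wt t x))
      + (∫ x in (0:ℝ)..L, wx t x * wxt t x) with hVDdef
  have hVderiv : ∀ t, HasDerivAt V (VD t) t := by
    intro t
    rw [hVformula]
    have h1 : HasDerivAt (fun s => ∫ x in (0:ℝ)..L, (u s x)^2)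
        (∫ x in (0:ℝ)..L, 2 * (u t x * (wtt t x + d * wt t x))) t := by
      apply param_hasDerivAt (F := fun s x => (u s x)^2)
        (F' := fun t x => 2 * (u t x * (wtt t x + d * wt t x)))
      · exact cu.pow 2
      · exact continuous_const.mul (cu.mul (cwtt.add (continuous_const.mul cwt)))
      · intro s x
        have h := ((hu_t s x).fun_pow 2)
        simpa [mul_assoc, mul_comm, mul_left_comm] using h
    have h2 : HasDerivAt (fun s => ∫ x in (0:ℝ)..L, (wx s x)^2)
        (∫ x in (0:ℝ)..L, 2 * (wx t x * wxt t x)) t := by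
      apply param_hasDerivAt (F := fun s x => (wx s x)^2)
        (F' := fun t x => 2 * (wx t x * wxt t x))
      · exact cwx.pow 2
      · exact continuous_const.mul (cwx.mul cwxt)
      · intro s x
        have h := ((hwx_t s x).fun_pow 2)
        simpa [mul_assoc, mul_comm, mul_left_comm] using h
    have h := (h1.const_mul (1/2 : ℝ)).fun_add (h2.const_mul (1/2 : ℝ))
    have e1 : (∫ x in (0:ℝ)..L, 2 * (u t x * (wtt t x + d * wt t x)))
        = 2 * ∫ x in (0:ℝ)..L, u t x * (wtt t x + d * wt t x) :=
      intervalIntegral.integral_const_mul 2 _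
    have e2 : (∫ x in (0:ℝ)..L, 2 * (wx t x * wxt t x))
        = 2 * ∫ x in (0:ℝ)..L, wx t x * wxt t x :=
      intervalIntegral.integral_const_mul 2 _
    rw [e1, e2] at h
    convert h using 1
    · rfl
    · rfl
    rw [hVDdef]
    ring
  
  -- fixed-time continuity helpers
  have cu_x : ∀ t, Continuous fun x => u t x := fun t => cu.comp (Continuous.prodMk_right t)
  have cux_x : ∀ t, Continuous fun x => ux t x := fun t => cux.comp (Continuous.prodMk_right t)
  have cwx_x : ∀ t, Continuous fun x => wx t x := fun t => cwx.comp (Continuous.prodMk_right t)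
  have cwt_x : ∀ t, Continuous fun x => wt t x := fun t => cwt.comp (Continuous.prodMk_right t)
  have cwtt_x : ∀ t, Continuous fun x => wtt t x := fun t => cwtt.comp (Continuous.prodMk_right t)
  have cwxt_x : ∀ t, Continuous fun x => wxt t x := fun t => cwxt.comp (Continuous.prodMk_right t)
  have cwxx_x : ∀ t, Continuous fun x => wxx t x := fun t => cwxx.comp (Continuous.prodMk_right t)
  have cw_x : ∀ t, Continuous fun x => w t x := fun t => cw.comp (Continuous.prodMk_right t)
  -- key identity: VD t = boundary term - 2 d V t  for t > 0
  have key : ∀ t ∈ Set.Ioi (0:ℝ), VD t = (u t L * wx t L - u t 0 * wx t 0) - 2*d*V t := by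
    intro t ht
    -- Step A : PDE substitution in the first integral
    have hA : (∫ x in (0:ℝ)..L, u t x * (wtt t x + d * wt t x))
        = ∫ x in (0:ℝ)..L, (u t x * wxx t x - d * (u t x)^2) := by
      apply intervalIntegral.integral_congr_ae
      have hne : ∀ᵐ x : ℝ, x ≠ L := by
        refine ae_iff.2 ?_
        simpa using (measure_singleton L : (volume : Measure ℝ) {L} = 0)
      filter_upwards [hne] with x hxne hxI
      rw [Set.uIoc_of_le hL.le] at hxI
      have hxIoo : x ∈ Set.Ioo (0:ℝ) L := ⟨hxI.1, lt_of_le_of_ne hxI.2 hxne⟩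
      rw [hPDE' t ht x hxIoo]
      rw [show u t x = wt t x + d * w t x from rfl]
      ring
    -- Step B : symmetry of second derivative in the second integral
    have hB : (∫ x in (0:ℝ)..L, wx t x * wxt t x)
        = ∫ x in (0:ℝ)..L, (wx t x * ux t x - d * (wx t x)^2) := by
      congr 1
      funext x
      have hs : wxt t x = wtx t x := hsymm (t, x) et ex
      rw [hs, show ux t x = wtx t x + d * wx t x from rfl]
      ring
    -- integrability of pieces
    have i1 : IntervalIntegrable (fun x => u t x * wxx t x) volume 0 L :=
      ((cu_x t).mul (cwxx_x t)).intervalIntegrable 0 L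
    have i2 : IntervalIntegrable (fun x => d * (u t x)^2) volume 0 L :=
      (continuous_const.mul ((cu_x t).pow 2)).intervalIntegrable 0 L
    have i3 : IntervalIntegrable (fun x => wx t x * ux t x) volume 0 L :=
      ((cwx_x t).mul (cux_x t)).intervalIntegrable 0 L
    have i4 : IntervalIntegrable (fun x => d * (wx t x)^2) volume 0 L :=
      (continuous_const.mul ((cwx_x t).pow 2)).intervalIntegrable 0 L
    -- integration by parts / FTC
    have hFTC : (∫ x in (0:ℝ)..L, (ux t x * wx t x + u t x * wxx t x))
        = u t L * wx t L - u t 0 * wx t 0 := by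
      apply intervalIntegral.integral_eq_sub_of_hasDerivAt
      · intro x _
        exact (hu_x t x).mul (hwx_x t x)
      · exact (((cux_x t).mul (cwx_x t)).add ((cu_x t).mul (cwxx_x t))).intervalIntegrable 0 L
    have hsplit1 : (∫ x in (0:ℝ)..L, (u t x * wxx t x - d * (u t x)^2))
        = (∫ x in (0:ℝ)..L, u t x * wxx t x) - d * ∫ x in (0:ℝ)..L, (u t x)^2 := by
      rw [intervalIntegral.integral_sub i1 i2, intervalIntegral.integral_const_mul]
    have hsplit2 : (∫ x in (0:ℝ)..L, (wx t x * ux t x - d * (wx t x)^2))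
        = (∫ x in (0:ℝ)..L, wx t x * ux t x) - d * ∫ x in (0:ℝ)..L, (wx t x)^2 := by
      rw [intervalIntegral.integral_sub i3 i4, intervalIntegral.integral_const_mul]
    have hsplit3 : (∫ x in (0:ℝ)..L, (ux t x * wx t x + u t x * wxx t x))
        = (∫ x in (0:ℝ)..L, wx t x * ux t x) + (∫ x in (0:ℝ)..L, u t x * wxx t x) := by
      rw [show (fun x => ux t x * wx t x + u t x * wxx t x)
          = fun x => wx t x * ux t x + u t x * wxx t x from funext fun x => by ring]
      exact intervalIntegral.integral_add i3 i1
    have hVt : V t = (1/2) * (∫ x in (0:ℝ)..L, (u t x)^2)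
        + (1/2) * (∫ x in (0:ℝ)..L, (wx t x)^2) := by rw [hVformula]
    rw [show VD t = (∫ x in (0:ℝ)..L, u t x * (wtt t x + d * wt t x))
      + (∫ x in (0:ℝ)..L, wx t x * wxt t x) from rfl]
    rw [hA, hB, hsplit1, hsplit2, ← hFTC, hsplit3, hVt]
    ring
  -- boundary term is nonpositive for t > 0
  have hbound : ∀ t ∈ Set.Ioi (0:ℝ), u t L * wx t L - u t 0 * wx t 0 ≤ 0 := by
    intro t ht
    have hu0 : u t 0 = 0 := by
      have hev : (fun s => w s 0) =ᶠ[nhds t] fun _ => (0:ℝ) :=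
        Filter.eventuallyEq_of_mem (Ioi_mem_nhds ht) fun s hs => hbc0 s (le_of_lt hs)
      have hwt0 : wt t 0 = 0 := by
        rw [← hder_t t 0, hev.deriv_eq, deriv_const]
      rw [show u t 0 = wt t 0 + d * w t 0 from rfl, hwt0, hbc0 t (le_of_lt ht)]
      ring
    have hsel' : θ t * wx t L = |wx t L| := by
      have := hsel t ht; rwa [hder_x] at this
    have hbcL' : w t L + (1/d) * wt t L = hL_ * p t - hL_ * P * θ t := by
      have := hbcL t ht; rwa [hder_t] at this
    have huL : u t L = d * (hL_ * p t - hL_ * P * θ t) := by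
      rw [show u t L = wt t L + d * w t L from rfl, ← hbcL']
      field_simp
      ring
    have hpw : p t * wx t L ≤ P * |wx t L| := by
      calc p t * wx t L ≤ |p t * wx t L| := le_abs_self _
        _ = |p t| * |wx t L| := abs_mul _ _
        _ ≤ P * |wx t L| := by
            have := hp t ht
            exact mul_le_mul_of_nonneg_right this (abs_nonneg _)
    have : u t L * wx t L = d * hL_ * (p t * wx t L) - d * hL_ * P * |wx t L| := by
      rw [huL, ← hsel']
      ring
    rw [hu0, this]
    have hdh : (0:ℝ) ≤ d * hL_ := (mul_pos hd hh).le
    have h1 : d * hL_ * (p t * wx t L) ≤ d * hL_ * (P * |wx t L|) :=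
      mul_le_mul_of_nonneg_left hpw hdh
    have h2 : d * hL_ * (P * |wx t L|) = d * hL_ * P * |wx t L| := by ring
    linarith
  -- Gronwall
  have hVD_le : ∀ t ∈ Set.Ioi (0:ℝ), VD t ≤ -(2*d) * V t := by
    intro t ht
    rw [key t ht]
    have h := hbound t ht
    linarith
  set g : ℝ → ℝ := fun t => Real.exp (2*d*t) * V t with hgdef
  have hg : ∀ t, HasDerivAt g (Real.exp (2*d*t) * (2*d) * V t + Real.exp (2*d*t) * VD t) t := by
    intro t
    have he : HasDerivAt (fun s => Real.exp (2*d*s)) (Real.exp (2*d*t) * (2*d)) t := by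
      have := ((hasDerivAt_id t).const_mul (2*d)).exp
      simpa using this
    exact he.mul (hVderiv t)
  have hmono : AntitoneOn g (Set.Ici (0:ℝ)) := by
    apply antitoneOn_of_deriv_nonpos (convex_Ici 0)
    · exact fun s _ => ((hg s).differentiableAt.continuousAt).continuousWithinAt
    · intro t ht
      exact (hg t).differentiableAt.differentiableWithinAt
    · intro t ht
      rw [interior_Ici] at ht
      rw [(hg t).deriv]
      have h1 : VD t ≤ -(2*d) * V t := hVD_le t ht
      have h2 : Real.exp (2*d*t) * VD t ≤ Real.exp (2*d*t) * (-(2*d) * V t) :=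
        mul_le_mul_of_nonneg_left h1 (Real.exp_pos _).le
      have h3 : Real.exp (2*d*t) * (-(2*d) * V t) = -(Real.exp (2*d*t) * (2*d) * V t) := by
        ring
      linarith
  intro t ht
  have hgle : g t ≤ g 0 := hmono (Set.self_mem_Ici) ht ht
  have hg0 : g 0 = V 0 := by rw [hgdef]; simp
  have hexp : Real.exp (-(2*d*t)) * Real.exp (2*d*t) = 1 := by
    rw [← Real.exp_add]; simp
  have : Real.exp (-(2*d*t)) * g t ≤ Real.exp (-(2*d*t)) * g 0 :=
    mul_le_mul_of_nonneg_left hgle (Real.exp_pos _).le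
  rw [hg0] at this
  calc V t = Real.exp (-(2*d*t)) * g t := by
        rw [hgdef, ← mul_assoc, hexp, one_mul]
    _ ≤ Real.exp (-(2*d*t)) * V 0 := this
    _ = Real.exp (-(2*d*t)) * V 0 := rfl
end

section
/- Let L > 0, d > 0, P > 0 and h_L > 0. Let w : [0,∞) × [0,L] → ℝ be twice continuously differentiable and satisfy w_tt = w_xx − 2d·w_t − d²·w for all (t,x) ∈ (0,∞) × (0,L) and w(t,0) = 0 for all t ≥ 0. Suppose there are functions p, θ : (0,∞) → ℝ with |p(t)| ≤ P, |θ(t)| ≤ 1, θ(t)·w_x(t,L) = |w_x(t,L)|, and w(t,L) + (1/d)·w_t(t,L) = h_L·p(t) − h_L·P·θ(t) for every t > 0. Set K = max{8L²d²+1, 2} / min{1/(8L²d²+1), 1/2}. Then ∫₀ᴸ (w_t(t,x)² + w_x(t,x)²) dx ≤ K·e^{−2dt}·∫₀ᴸ (w_t(0,x)² + w_x(0,x)²) dx for all t ≥ 0. -/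
open MeasureTheory intervalIntegral Metric Set

/-- Parametric differentiation under interval integral, continuous case. -/
lemma param_deriv {F F' : ℝ → ℝ → ℝ} {a b t₀ : ℝ}
    (hF : Continuous (fun q : ℝ × ℝ => F q.1 q.2))
    (hF' : Continuous (fun q : ℝ × ℝ => F' q.1 q.2))
    (hd : ∀ t x, HasDerivAt (fun s => F s x) (F' t x) t) :
    HasDerivAt (fun t => ∫ x in a..b, F t x) (∫ x in a..b, F' t₀ x) t₀ := by
  have hcomp : IsCompact ((Icc (t₀-1) (t₀+1)) ×ˢ (uIcc a b)) :=
    isCompact_Icc.prod isCompact_uIcc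
  obtain ⟨C, hC⟩ := hcomp.exists_bound_of_continuousOn hF'.continuousOn
  have main := intervalIntegral.hasDerivAt_integral_of_dominated_loc_of_deriv_le
    (F := F) (F' := F') (x₀ := t₀) (a := a) (b := b) (μ := volume)
    (bound := fun _ => C) (s := ball t₀ 1) (ball_mem_nhds t₀ one_pos)
    (Filter.Eventually.of_forall (fun t =>
      ((hF.comp (continuous_const.prodMk continuous_id)).aestronglyMeasurable)))
    ((hF.comp (continuous_const.prodMk continuous_id)).intervalIntegrable a b)
    ((hF'.comp (continuous_const.prodMk continuous_id)).aestronglyMeasurable)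
    (Filter.Eventually.of_forall (fun x hx t ht => by
      have : (t, x) ∈ (Icc (t₀-1) (t₀+1)) ×ˢ (uIcc a b) := by
        constructor
        · have := mem_ball_iff_norm.1 ht
          simp only [Real.norm_eq_abs] at this
          constructor <;> [linarith [abs_le.1 this.le |>.1]; linarith [abs_le.1 this.le |>.2]]
        · exact uIoc_subset_uIcc hx
      simpa using hC _ this))
    (intervalIntegrable_const)
    (Filter.Eventually.of_forall (fun x _ t _ => hd t x))
  exact main.2

structure PartialData (w : ℝ → ℝ → ℝ) : Type where
  u : ℝ → ℝ → ℝ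
  v : ℝ → ℝ → ℝ
  A : ℝ → ℝ → ℝ
  B : ℝ → ℝ → ℝ
  C : ℝ → ℝ → ℝ
  hu : ∀ t x, HasDerivAt (fun s => w s x) (u t x) t
  hv : ∀ t x, HasDerivAt (fun y => w t y) (v t x) x
  hut : ∀ t x, HasDerivAt (fun s => u s x) (A t x) t
  hux : ∀ t x, HasDerivAt (fun y => u t y) (B t x) x
  hvt : ∀ t x, HasDerivAt (fun s => v s x) (B t x) t
  hvx : ∀ t x, HasDerivAt (fun y => v t y) (C t x) x
  cu : Continuous fun q : ℝ × ℝ => u q.1 q.2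
  cv : Continuous fun q : ℝ × ℝ => v q.1 q.2
  cA : Continuous fun q : ℝ × ℝ => A q.1 q.2
  cB : Continuous fun q : ℝ × ℝ => B q.1 q.2
  cC : Continuous fun q : ℝ × ℝ => C q.1 q.2

noncomputable def mkPartialData (w : ℝ → ℝ → ℝ)
    (hw : ContDiff ℝ 2 (fun p : ℝ × ℝ => w p.1 p.2)) : PartialData w := by
  set W : ℝ × ℝ → ℝ := fun p => w p.1 p.2 with hW
  have hW1 : ContDiff ℝ 1 (fderiv ℝ W) := by
    have := hw.fderiv_right (m := 1) (by norm_num)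
    exact this
  have hcurve_t : ∀ (x t : ℝ), HasDerivAt (fun s : ℝ => (s, x)) ((1:ℝ), (0:ℝ)) t :=
    fun x t => (hasDerivAt_id t).prodMk (hasDerivAt_const t x)
  have hcurve_x : ∀ (t x : ℝ), HasDerivAt (fun y : ℝ => (t, y)) ((0:ℝ), (1:ℝ)) x :=
    fun t x => (hasDerivAt_const x t).prodMk (hasDerivAt_id x)
  -- second derivative as bilinear data
  have hWd : ∀ q, HasFDerivAt W (fderiv ℝ W q) q :=
    fun q => (hw.differentiable (by norm_num) q).hasFDerivAt
  have hW1d : ∀ q, HasFDerivAt (fderiv ℝ W) (fderiv ℝ (fderiv ℝ W) q) q :=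
    fun q => (hW1.differentiable (by norm_num) q).hasFDerivAt
  have hsym : ∀ q a b, fderiv ℝ (fderiv ℝ W) q a b = fderiv ℝ (fderiv ℝ W) q b a :=
    fun q => (hw.contDiffAt).isSymmSndFDerivAt (by simp [minSmoothness_of_isRCLikeNormedField])
  -- fderiv of (fun q => fderiv W q e)
  have happ : ∀ (e : ℝ × ℝ) q,
      HasFDerivAt (fun q' => fderiv ℝ W q' e)
        ((fderiv ℝ (fderiv ℝ W) q).flip e) q := by
    intro e q
    have h := (hW1d q).clm_apply (hasFDerivAt_const e q)
    simpa using h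
  refine
    { u := fun t x => fderiv ℝ W (t, x) (1, 0)
      v := fun t x => fderiv ℝ W (t, x) (0, 1)
      A := fun t x => fderiv ℝ (fderiv ℝ W) (t, x) (1, 0) (1, 0)
      B := fun t x => fderiv ℝ (fderiv ℝ W) (t, x) (0, 1) (1, 0)
      C := fun t x => fderiv ℝ (fderiv ℝ W) (t, x) (0, 1) (0, 1)
      hu := fun t x => by
        have := (hWd (t, x)).comp_hasDerivAt t (hcurve_t x t)
        exact this
      hv := fun t x => by
        have := (hWd (t, x)).comp_hasDerivAt x (hcurve_x t x)
        exact this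
      hut := fun t x => by
        have := ((happ (1,0) (t,x)).comp_hasDerivAt t (hcurve_t x t))
        exact this
      hux := fun t x => by
        have := ((happ (1,0) (t,x)).comp_hasDerivAt x (hcurve_x t x))
        exact this
      hvt := fun t x => by
        have := ((happ (0,1) (t,x)).comp_hasDerivAt t (hcurve_t x t))
        rw [ContinuousLinearMap.flip_apply, hsym (t,x) ((1:ℝ),(0:ℝ)) ((0:ℝ),(1:ℝ))] at this; exact this
      hvx := fun t x => by
        have := ((happ (0,1) (t,x)).comp_hasDerivAt x (hcurve_x t x))
        exact this
      cu := ?_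
      cv := ?_
      cA := ?_
      cB := ?_
      cC := ?_ }
  · exact (hw.continuous_fderiv (by norm_num)).clm_apply continuous_const
  · exact (hw.continuous_fderiv (by norm_num)).clm_apply continuous_const
  · exact ((hW1.continuous_fderiv (by norm_num)).clm_apply continuous_const).clm_apply continuous_const
  · exact ((hW1.continuous_fderiv (by norm_num)).clm_apply continuous_const).clm_apply continuous_const
  · exact ((hW1.continuous_fderiv (by norm_num)).clm_apply continuous_const).clm_apply continuous_const

lemma cs_sq {f : ℝ → ℝ} {x : ℝ} (hx : 0 ≤ x) (hf : Continuous f) :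
    (∫ y in (0:ℝ)..x, f y)^2 ≤ x * ∫ y in (0:ℝ)..x, (f y)^2 := by
  rcases eq_or_lt_of_le hx with h | h
  · simp [← h]
  set I := ∫ y in (0:ℝ)..x, f y with hI
  set c : ℝ := I / x with hc'
  have hint : IntervalIntegrable f volume 0 x := hf.intervalIntegrable _ _
  have hint2 : IntervalIntegrable (fun y => (f y)^2) volume 0 x :=
    (hf.pow 2).intervalIntegrable _ _
  have h0 : (0:ℝ) ≤ ∫ y in (0:ℝ)..x, (f y - c)^2 :=
    intervalIntegral.integral_nonneg hx (fun y _ => sq_nonneg _)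
  have hexp : (∫ y in (0:ℝ)..x, (f y - c)^2)
      = (∫ y in (0:ℝ)..x, (f y)^2) - 2*c*I + c^2 * x := by
    have hptw : ∀ y, (f y - c)^2 = (f y)^2 - (2*c) * f y + c^2 := fun y => by ring
    simp_rw [hptw]
    rw [intervalIntegral.integral_add ((hint2.sub (hint.const_mul _)))
        intervalIntegrable_const,
      intervalIntegral.integral_sub hint2 (hint.const_mul _),
      intervalIntegral.integral_const_mul, intervalIntegral.integral_const]
    simp [hI]
    ring
  rw [hexp] at h0
  have hcx : c * x = I := div_mul_cancel₀ _ h.ne'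
  nlinarith [mul_nonneg h0 h.le]

lemma poincare {g g' : ℝ → ℝ} {L : ℝ} (hL : 0 < L) (hg0 : g 0 = 0)
    (hd : ∀ x, HasDerivAt g (g' x) x) (hc : Continuous g') :
    ∫ x in (0:ℝ)..L, (g x)^2 ≤ L^2/2 * ∫ x in (0:ℝ)..L, (g' x)^2 := by
  have hgc : Continuous g := by
    have : Differentiable ℝ g := fun x => (hd x).differentiableAt
    exact this.continuous
  set Bv := ∫ x in (0:ℝ)..L, (g' x)^2 with hBv'
  have hrep : ∀ x, (∫ y in (0:ℝ)..x, g' y) = g x := fun x => by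
    rw [intervalIntegral.integral_eq_sub_of_hasDerivAt (fun y _ => hd y)
      (hc.intervalIntegrable _ _), hg0, sub_zero]
  have hpt : ∀ x ∈ Set.Icc (0:ℝ) L, (g x)^2 ≤ x * Bv := by
    intro x hx
    rw [← hrep x]
    refine le_trans (cs_sq hx.1 hc) ?_
    have hmono : (∫ y in (0:ℝ)..x, (g' y)^2) ≤ Bv :=
      intervalIntegral.integral_mono_interval le_rfl hx.1 hx.2
        (Filter.Eventually.of_forall (fun y => sq_nonneg _))
        ((hc.pow 2).intervalIntegrable _ _)
    exact mul_le_mul_of_nonneg_left hmono hx.1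
  calc (∫ x in (0:ℝ)..L, (g x)^2) ≤ ∫ x in (0:ℝ)..L, x * Bv :=
        intervalIntegral.integral_mono_on hL.le ((hgc.pow 2).intervalIntegrable _ _)
          ((continuous_id.mul continuous_const).intervalIntegrable _ _) hpt
    _ = L^2/2 * Bv := by
        rw [intervalIntegral.integral_mul_const, integral_id]; ring

/-- rapid exponential decay of the energy with explicit constant `K`
for the Dirichlet–Dirichlet closed-loop target system. -/
theorem energy_decay_dirichlet_dirichlet
    (L d P hL_ : ℝ) (hL : 0 < L) (hd : 0 < d) (hP : 0 < P) (hh : 0 < hL_)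
    (w : ℝ → ℝ → ℝ)
    (hw : ContDiff ℝ 2 (fun p : ℝ × ℝ => w p.1 p.2))
    (hPDE : ∀ t ∈ Set.Ioi (0:ℝ), ∀ x ∈ Set.Ioo (0:ℝ) L,
      deriv (deriv (fun s => w s x)) t =
        deriv (deriv (fun y => w t y)) x
        - 2 * d * deriv (fun s => w s x) t - d^2 * w t x)
    (hbc0 : ∀ t ≥ (0:ℝ), w t 0 = 0)
    (p θ : ℝ → ℝ)
    (hp : ∀ t ∈ Set.Ioi (0:ℝ), |p t| ≤ P)
    (hθ : ∀ t ∈ Set.Ioi (0:ℝ), |θ t| ≤ 1)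
    (hsel : ∀ t ∈ Set.Ioi (0:ℝ),
      θ t * deriv (fun y => w t y) L = |deriv (fun y => w t y) L|)
    (hbcL : ∀ t ∈ Set.Ioi (0:ℝ),
      w t L + (1/d) * deriv (fun s => w s L) t = hL_ * p t - hL_ * P * θ t) :
    ∀ t ≥ (0:ℝ),
      (∫ x in (0:ℝ)..L,
          ((deriv (fun s => w s x) t)^2 + (deriv (fun y => w t y) x)^2))
        ≤ (max (8 * L^2 * d^2 + 1) 2 / min (1 / (8 * L^2 * d^2 + 1)) (1/2))
          * Real.exp (-(2 * d * t))
          * (∫ x in (0:ℝ)..L,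
              ((deriv (fun s => w s x) 0)^2 + (deriv (fun y => w 0 y) x)^2)) := by
  intro t ht
  obtain ⟨u, v, A, B, C, hu, hv, hut, hux, hvt, hvx, cu, cv, cA, cB, cC⟩ := mkPartialData w hw
  have cw : Continuous fun q : ℝ × ℝ => w q.1 q.2 := hw.continuous
  have fixc : ∀ {f : ℝ → ℝ → ℝ}, Continuous (fun q : ℝ × ℝ => f q.1 q.2) →
      ∀ τ : ℝ, Continuous (f τ) := fun hf τ =>
    hf.comp (continuous_const.prodMk continuous_id)
  have hdu : ∀ τ x, deriv (fun s => w s x) τ = u τ x := fun τ x => (hu τ x).deriv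
  have hdv : ∀ τ x, deriv (fun y => w τ y) x = v τ x := fun τ x => (hv τ x).deriv
  have hdA : ∀ τ x, deriv (deriv (fun s => w s x)) τ = A τ x := by
    intro τ x
    have h1 : deriv (fun s => w s x) = fun s => u s x := funext fun s => (hu s x).deriv
    rw [h1]; exact (hut τ x).deriv
  have hdC : ∀ τ x, deriv (deriv (fun y => w τ y)) x = C τ x := by
    intro τ x
    have h1 : deriv (fun y => w τ y) = fun y => v τ y := funext fun y => (hv τ y).deriv
    rw [h1]; exact (hvx τ x).deriv
  simp only [hdu, hdv]
  -- rewritten hypotheses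
  have hPDE' : ∀ τ ∈ Set.Ioi (0:ℝ), ∀ x ∈ Set.Ioo (0:ℝ) L,
      A τ x = C τ x - 2 * d * u τ x - d^2 * w τ x := by
    intro τ hτ x hx
    have := hPDE τ hτ x hx
    rwa [hdA, hdC, hdu] at this
  -- the modified energy
  set V : ℝ → ℝ := fun τ => ∫ x in (0:ℝ)..L,
    ((u τ x + d * w τ x)^2/2 + (v τ x)^2/2) with hVdef
  set DV : ℝ → ℝ := fun τ => ∫ x in (0:ℝ)..L,
    ((u τ x + d * w τ x) * (A τ x + d * u τ x) + v τ x * B τ x) with hDVdef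
  have hVderiv : ∀ τ, HasDerivAt V (DV τ) τ := by
    intro τ
    rw [hVdef, hDVdef]
    beta_reduce
    refine param_deriv (t₀ := τ) (a := (0:ℝ)) (b := L)
      (F := fun s x => (u s x + d * w s x)^2/2 + (v s x)^2/2)
      (F' := fun s x => (u s x + d * w s x) * (A s x + d * u s x) + v s x * B s x)
      ?_ ?_ ?_
    · exact (((cu.add (continuous_const.mul cw)).pow 2).div_const 2).add
        ((cv.pow 2).div_const 2)
    · exact ((cu.add (continuous_const.mul cw)).mul
        (cA.add (continuous_const.mul cu))).add (cv.mul cB)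
    · intro s x
      have h1 : HasDerivAt (fun s' => u s' x + d * w s' x)
          (A s x + d * u s x) s := (hut s x).add ((hu s x).const_mul d)
      have h4 := ((h1.pow 2).div_const 2).add (((hvt s x).pow 2).div_const 2)
      exact h4.congr_deriv (by rw [show (2:ℕ) - 1 = 1 from rfl]; push_cast; ring)
  have hVcont : Continuous V := by
    have : Differentiable ℝ V := fun τ => (hVderiv τ).differentiableAt
    exact this.continuous
  -- nonnegativity of V
  have hVnn : ∀ τ, 0 ≤ V τ :=
    fun τ => intervalIntegral.integral_nonneg hL.le (fun x _ => by positivity)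
  -- split V into its two pieces
  have hVsplit : ∀ τ, V τ = (∫ x in (0:ℝ)..L, (u τ x + d * w τ x)^2)/2
      + (∫ x in (0:ℝ)..L, (v τ x)^2)/2 := by
    intro τ
    rw [hVdef]
    beta_reduce
    have i1 : IntervalIntegrable (fun x => (u τ x + d * w τ x)^2/2) MeasureTheory.volume 0 L :=
      ((((fixc cu τ).add (continuous_const.mul (fixc cw τ))).pow 2).div_const 2).intervalIntegrable _ _
    have i2 : IntervalIntegrable (fun x => (v τ x)^2/2) MeasureTheory.volume 0 L :=
      (((fixc cv τ).pow 2).div_const 2).intervalIntegrable _ _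
    rw [intervalIntegral.integral_add i1 i2]
    rw [intervalIntegral.integral_div, intervalIntegral.integral_div]
  -- Step B : differential inequality
  have hDV : ∀ τ ∈ Set.Ioi (0:ℝ), DV τ ≤ -(2*d) * V τ := by
    intro τ hτ
    have hτ' : (0:ℝ) < τ := hτ
    set Gf : ℝ → ℝ := fun x => (u τ x + d * w τ x) * v τ x with hGf
    have hG : ∀ x, HasDerivAt Gf
        ((B τ x + d * v τ x) * v τ x + (u τ x + d * w τ x) * C τ x) x :=
      fun x => ((hux τ x).add ((hv τ x).const_mul d)).mul (hvx τ x)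
    have cG' : Continuous fun x =>
        (B τ x + d * v τ x) * v τ x + (u τ x + d * w τ x) * C τ x :=
      (((fixc cB τ).add (continuous_const.mul (fixc cv τ))).mul (fixc cv τ)).add
        (((fixc cu τ).add (continuous_const.mul (fixc cw τ))).mul (fixc cC τ))
    have hae : ∀ᵐ x : ℝ, x ≠ L := by
      have h0 : (volume : MeasureTheory.Measure ℝ) {L} = 0 := measure_singleton L
      rw [MeasureTheory.ae_iff]
      convert h0 using 2
      ext x; simp
    have hcongr : DV τ = ∫ x in (0:ℝ)..L,
        (((B τ x + d * v τ x) * v τ x + (u τ x + d * w τ x) * C τ x)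
          - d * (v τ x)^2 - d * (u τ x + d * w τ x)^2) := by
      rw [hDVdef]
      apply intervalIntegral.integral_congr_ae
      filter_upwards [hae] with x hxL hx
      rw [Set.uIoc_of_le hL.le] at hx
      have hxIoo : x ∈ Set.Ioo (0:ℝ) L := ⟨hx.1, lt_of_le_of_ne hx.2 hxL⟩
      have hA := hPDE' τ hτ x hxIoo
      rw [hA]; ring
    have hFTC : (∫ x in (0:ℝ)..L,
        ((B τ x + d * v τ x) * v τ x + (u τ x + d * w τ x) * C τ x))
        = Gf L - Gf 0 :=
      intervalIntegral.integral_eq_sub_of_hasDerivAt (fun x _ => hG x)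
        (cG'.intervalIntegrable _ _)
    have hsplit2 : DV τ = (Gf L - Gf 0)
        - d * (∫ x in (0:ℝ)..L, (v τ x)^2)
        - d * (∫ x in (0:ℝ)..L, (u τ x + d * w τ x)^2) := by
      rw [hcongr]
      have j1 : IntervalIntegrable (fun x =>
          (B τ x + d * v τ x) * v τ x + (u τ x + d * w τ x) * C τ x) MeasureTheory.volume 0 L :=
        ((((fixc cB τ).add (continuous_const.mul (fixc cv τ))).mul (fixc cv τ)).add
          (((fixc cu τ).add (continuous_const.mul (fixc cw τ))).mul (fixc cC τ))).intervalIntegrable _ _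
      have j2 : IntervalIntegrable (fun x => d * (v τ x)^2) MeasureTheory.volume 0 L :=
        (continuous_const.mul ((fixc cv τ).pow 2)).intervalIntegrable _ _
      have j3 : IntervalIntegrable (fun x => d * (u τ x + d * w τ x)^2) MeasureTheory.volume 0 L :=
        (continuous_const.mul (((fixc cu τ).add (continuous_const.mul (fixc cw τ))).pow 2)).intervalIntegrable _ _
      rw [intervalIntegral.integral_sub (j1.sub j2) j3,
        intervalIntegral.integral_sub j1 j2,
        intervalIntegral.integral_const_mul, intervalIntegral.integral_const_mul, hFTC]
    -- boundary terms
    have hu0 : u τ 0 = 0 := by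
      have hev : (fun s => w s 0) =ᶠ[nhds τ] fun _ => (0:ℝ) := by
        filter_upwards [isOpen_Ioi.mem_nhds hτ'] with s hs
        exact hbc0 s (le_of_lt hs)
      have := hev.deriv_eq
      rw [deriv_const] at this
      rw [← (hu τ 0).deriv, this]
    have hw0 : w τ 0 = 0 := hbc0 τ hτ'.le
    have hG0 : Gf 0 = 0 := by rw [hGf]; simp [hu0, hw0]
    have hGL : Gf L ≤ 0 := by
      have hv1 : θ τ * v τ L = |v τ L| := by
        have := hsel τ hτ; rwa [hdv] at this
      have hb : w τ L + (1/d) * u τ L = hL_ * p τ - hL_ * P * θ τ := by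
        have := hbcL τ hτ; rwa [hdu] at this
      have hd0 : d ≠ 0 := hd.ne'
      have hGLeq : Gf L = d * hL_ * (p τ * v τ L) - d * hL_ * P * (θ τ * v τ L) := by
        rw [hGf]
        have : u τ L + d * w τ L = d * (w τ L + (1/d) * u τ L) := by field_simp; ring
        simp only []
        rw [this, hb]; ring
      rw [hGLeq, hv1]
      have hpv : p τ * v τ L ≤ P * |v τ L| := by
        calc p τ * v τ L ≤ |p τ * v τ L| := le_abs_self _
          _ = |p τ| * |v τ L| := abs_mul _ _
          _ ≤ P * |v τ L| := mul_le_mul_of_nonneg_right (hp τ hτ) (abs_nonneg _)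
      nlinarith [mul_pos hd hh]
    have h2V : (∫ x in (0:ℝ)..L, (v τ x)^2)
        + (∫ x in (0:ℝ)..L, (u τ x + d * w τ x)^2) = 2 * V τ := by
      rw [hVsplit τ]; ring
    rw [hsplit2]
    nlinarith [h2V]
  -- Step C : Gronwall
  have hf : ∀ τ, HasDerivAt (fun s => Real.exp (2*d*s) * V s)
      (Real.exp (2*d*τ) * (2*d) * V τ + Real.exp (2*d*τ) * DV τ) τ := by
    intro τ
    have h1 : HasDerivAt (fun s : ℝ => 2*d*s) (2*d) τ := by
      simpa using (hasDerivAt_id τ).const_mul (2*d)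
    have he : HasDerivAt (fun s => Real.exp (2*d*s)) (Real.exp (2*d*τ) * (2*d)) τ :=
      (Real.hasDerivAt_exp _).comp τ h1
    exact he.mul (hVderiv τ)
  have hanti : AntitoneOn (fun s => Real.exp (2*d*s) * V s) (Set.Ici (0:ℝ)) := by
    apply antitoneOn_of_deriv_nonpos (convex_Ici 0)
    · exact ((Real.continuous_exp.comp (continuous_const.mul continuous_id)).mul
        hVcont).continuousOn
    · intro x hx
      exact (hf x).differentiableAt.differentiableWithinAt
    · intro x hx
      rw [interior_Ici] at hx
      rw [(hf x).deriv]
      have h1 := hDV x hx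
      nlinarith [Real.exp_pos (2*d*x), mul_le_mul_of_nonneg_left h1 (Real.exp_pos (2*d*x)).le]
  have hVt : V t ≤ Real.exp (-(2*d*t)) * V 0 := by
    have h1 := hanti Set.self_mem_Ici ht ht
    simp only [mul_zero, Real.exp_zero, one_mul] at h1
    rw [Real.exp_neg, ← sub_nonneg]
    have hep := Real.exp_pos (2*d*t)
    have hne : Real.exp (2*d*t) ≠ 0 := hep.ne'
    have h2 : 0 ≤ (V 0 - Real.exp (2*d*t) * V t) / Real.exp (2*d*t) :=
      div_nonneg (by linarith) hep.le
    calc (0:ℝ) ≤ (V 0 - Real.exp (2*d*t) * V t) / Real.exp (2*d*t) := h2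
      _ = (Real.exp (2*d*t))⁻¹ * V 0 - V t := by field_simp
  -- Step D/E : energy equivalence
  set M : ℝ := max (8 * L^2 * d^2 + 1) 2 with hM
  have hM2 : (2:ℝ) ≤ M := le_max_right _ _
  have hM1 : 8 * L^2 * d^2 + 1 ≤ M := le_max_left _ _
  have hMpos : (0:ℝ) < M := lt_of_lt_of_le two_pos hM2
  have hLd : 0 ≤ L^2 * d^2 := by positivity
  -- Poincaré at a given nonnegative time
  have hPoin : ∀ τ : ℝ, 0 ≤ τ → (∫ x in (0:ℝ)..L, (w τ x)^2)
      ≤ L^2/2 * ∫ x in (0:ℝ)..L, (v τ x)^2 :=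
    fun τ hτ => poincare hL (hbc0 τ hτ) (fun x => hv τ x) (fixc cv τ)
  -- integrals and their basic bounds at a fixed time
  have key : ∀ τ : ℝ, 0 ≤ τ → True := fun _ _ => trivial
  have hIf_le : ∀ τ : ℝ, (∫ x in (0:ℝ)..L, (u τ x + d * w τ x)^2)
      ≤ 2 * (∫ x in (0:ℝ)..L, (u τ x)^2) + 2 * d^2 * (∫ x in (0:ℝ)..L, (w τ x)^2) := by
    intro τ
    have h1 : (∫ x in (0:ℝ)..L, (u τ x + d * w τ x)^2)
        ≤ ∫ x in (0:ℝ)..L, (2 * (u τ x)^2 + 2 * d^2 * (w τ x)^2) := by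
      apply intervalIntegral.integral_mono_on hL.le
        ((((fixc cu τ).add (continuous_const.mul (fixc cw τ))).pow 2).intervalIntegrable _ _)
        (((continuous_const.mul ((fixc cu τ).pow 2)).add
          (continuous_const.mul ((fixc cw τ).pow 2))).intervalIntegrable _ _)
      intro x _
      simp only [Pi.add_apply, Pi.mul_apply, Pi.pow_apply]
      nlinarith [sq_nonneg (u τ x - d * w τ x)]
    calc (∫ x in (0:ℝ)..L, (u τ x + d * w τ x)^2)
        ≤ ∫ x in (0:ℝ)..L, (2 * (u τ x)^2 + 2 * d^2 * (w τ x)^2) := h1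
      _ = 2 * (∫ x in (0:ℝ)..L, (u τ x)^2) + 2 * d^2 * (∫ x in (0:ℝ)..L, (w τ x)^2) := by
          rw [intervalIntegral.integral_add (f := fun x => 2 * (u τ x)^2) (g := fun x => 2 * d^2 * (w τ x)^2)
            ((continuous_const.mul ((fixc cu τ).pow 2)).intervalIntegrable _ _)
            ((continuous_const.mul ((fixc cw τ).pow 2)).intervalIntegrable _ _),
            intervalIntegral.integral_const_mul, intervalIntegral.integral_const_mul]
  have hIu_le : ∀ τ : ℝ, (∫ x in (0:ℝ)..L, (u τ x)^2)
      ≤ 2 * (∫ x in (0:ℝ)..L, (u τ x + d * w τ x)^2)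
        + 2 * d^2 * (∫ x in (0:ℝ)..L, (w τ x)^2) := by
    intro τ
    have h1 : (∫ x in (0:ℝ)..L, (u τ x)^2)
        ≤ ∫ x in (0:ℝ)..L, (2 * (u τ x + d * w τ x)^2 + 2 * d^2 * (w τ x)^2) := by
      apply intervalIntegral.integral_mono_on hL.le
        (((fixc cu τ).pow 2).intervalIntegrable _ _)
        (((continuous_const.mul (((fixc cu τ).add (continuous_const.mul (fixc cw τ))).pow 2)).add
          (continuous_const.mul ((fixc cw τ).pow 2))).intervalIntegrable _ _)
      intro x _
      simp only [Pi.add_apply, Pi.mul_apply, Pi.pow_apply]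
      nlinarith [sq_nonneg (u τ x + d * w τ x + d * w τ x)]
    calc (∫ x in (0:ℝ)..L, (u τ x)^2)
        ≤ ∫ x in (0:ℝ)..L, (2 * (u τ x + d * w τ x)^2 + 2 * d^2 * (w τ x)^2) := h1
      _ = 2 * (∫ x in (0:ℝ)..L, (u τ x + d * w τ x)^2)
          + 2 * d^2 * (∫ x in (0:ℝ)..L, (w τ x)^2) := by
          rw [intervalIntegral.integral_add (f := fun x => 2 * (u τ x + d * w τ x)^2) (g := fun x => 2 * d^2 * (w τ x)^2)
            ((continuous_const.mul (((fixc cu τ).add (continuous_const.mul (fixc cw τ))).pow 2)).intervalIntegrable _ _)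
            ((continuous_const.mul ((fixc cw τ).pow 2)).intervalIntegrable _ _),
            intervalIntegral.integral_const_mul, intervalIntegral.integral_const_mul]
  have hE2split : ∀ τ : ℝ, (∫ x in (0:ℝ)..L, ((u τ x)^2 + (v τ x)^2))
      = (∫ x in (0:ℝ)..L, (u τ x)^2) + (∫ x in (0:ℝ)..L, (v τ x)^2) := by
    intro τ
    rw [intervalIntegral.integral_add (f := fun x => (u τ x)^2) (g := fun x => (v τ x)^2) (((fixc cu τ).pow 2).intervalIntegrable _ _)
      (((fixc cv τ).pow 2).intervalIntegrable _ _)]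
  have hIv_nn : ∀ τ : ℝ, 0 ≤ ∫ x in (0:ℝ)..L, (v τ x)^2 :=
    fun τ => intervalIntegral.integral_nonneg hL.le (fun x _ => sq_nonneg _)
  have hIu_nn : ∀ τ : ℝ, 0 ≤ ∫ x in (0:ℝ)..L, (u τ x)^2 :=
    fun τ => intervalIntegral.integral_nonneg hL.le (fun x _ => sq_nonneg _)
  have hIf_nn : ∀ τ : ℝ, 0 ≤ ∫ x in (0:ℝ)..L, (u τ x + d * w τ x)^2 :=
    fun τ => intervalIntegral.integral_nonneg hL.le (fun x _ => sq_nonneg _)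
  -- E1 : E2 t ≤ 2 M V t
  have hE1 : (∫ x in (0:ℝ)..L, ((u t x)^2 + (v t x)^2)) ≤ 2 * M * V t := by
    rw [hE2split t, hVsplit t]
    have h1 := hIu_le t
    have h2 := hPoin t ht
    nlinarith [hIv_nn t, hIf_nn t,
      mul_le_mul_of_nonneg_left h2 (by positivity : (0:ℝ) ≤ 2*d^2)]
  -- E2 : 2 V 0 ≤ M * E2 0
  have hE0 : 2 * V 0 ≤ M * (∫ x in (0:ℝ)..L, ((u 0 x)^2 + (v 0 x)^2)) := by
    rw [hE2split 0, hVsplit 0]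
    have h1 := hIf_le 0
    have h2 := hPoin 0 le_rfl
    nlinarith [hIv_nn 0, hIu_nn 0,
      mul_le_mul_of_nonneg_left h2 (by positivity : (0:ℝ) ≤ 2*d^2)]
  -- the constant
  have ha : (0:ℝ) < 8 * L^2 * d^2 + 1 := by positivity
  have hKM : M / min (1 / (8 * L^2 * d^2 + 1)) (1/2) = M * M := by
    have hmin : min (1 / (8 * L^2 * d^2 + 1)) (1/2) = 1 / M := by
      rcases le_total (8 * L^2 * d^2 + 1) 2 with h | h
      · rw [min_eq_right (one_div_le_one_div_of_le ha h), hM, max_eq_right h]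
      · rw [min_eq_left (one_div_le_one_div_of_le two_pos h), hM, max_eq_left h]
    rw [hmin]
    field_simp
  rw [hKM]
  have hexp_pos := Real.exp_pos (-(2*d*t))
  have hE20nn : 0 ≤ (∫ x in (0:ℝ)..L, ((u 0 x)^2 + (v 0 x)^2)) :=
    intervalIntegral.integral_nonneg hL.le (fun x _ => by positivity)
  calc (∫ x in (0:ℝ)..L, ((u t x)^2 + (v t x)^2))
      ≤ 2 * M * V t := hE1
    _ ≤ 2 * M * (Real.exp (-(2*d*t)) * V 0) := by
        apply mul_le_mul_of_nonneg_left hVt (by positivity)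
    _ ≤ 2 * M * (Real.exp (-(2*d*t)) * (M/2 * (∫ x in (0:ℝ)..L, ((u 0 x)^2 + (v 0 x)^2)))) := by
        apply mul_le_mul_of_nonneg_left _ (by positivity : (0:ℝ) ≤ 2*M)
        apply mul_le_mul_of_nonneg_left _ hexp_pos.le
        linarith
    _ = M * M * Real.exp (-(2*d*t)) * (∫ x in (0:ℝ)..L, ((u 0 x)^2 + (v 0 x)^2)) := by
        ring
    _ = M * M * Real.exp (-(2 * d * t)) * (∫ x in (0:ℝ)..L, ((u 0 x)^2 + (v 0 x)^2)) := by
        norm_num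
end

section
/- Let L > 0, d > 0, P > 0 and h_L > 0. For j = 1, 2, let q_j : [0,L] → ℝ be twice continuously differentiable with q_j(0) = 0, let l_j : [0,L] → ℝ be continuously differentiable with l_j(0) = 0, and suppose there is θ_j ∈ ℝ with |θ_j| ≤ 1, θ_j·q_j'(L) = |q_j'(L)|, and d·q_j(L) + l_j(L) = −d·h_L·P·θ_j. Set q = q₁ − q₂ and l = l₁ − l₂. Then ∫₀ᴸ (−l'(x))·q'(x) dx + ∫₀ᴸ ((−q''(x) + 2d·l(x) + d²·q(x)) + d·(−l(x)))·(l(x) + d·q(x)) dx ≥ 0. -/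
/-- monotonicity of the Dirichlet–Dirichlet closed-loop operator
`A(q,l) = (−l, −q'' + 2dl + d²q)` on its domain, with respect to the inner product
`⟨(q₁,l₁),(q₂,l₂)⟩ = ∫ q₁'q₂' + ∫ (l₁ + dq₁)(l₂ + dq₂)`. -/
theorem operator_monotone_dirichlet_dirichlet
    (L d P hL_ : ℝ) (hL : 0 < L) (hd : 0 < d) (hP : 0 < P) (hh : 0 < hL_)
    (q1 q2 l1 l2 : ℝ → ℝ)
    (hq1 : ContDiff ℝ 2 q1) (hq2 : ContDiff ℝ 2 q2)
    (hq10 : q1 0 = 0) (hq20 : q2 0 = 0)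
    (hl1 : ContDiff ℝ 1 l1) (hl2 : ContDiff ℝ 1 l2)
    (hl10 : l1 0 = 0) (hl20 : l2 0 = 0)
    (θ1 θ2 : ℝ) (hθ1 : |θ1| ≤ 1) (hθ2 : |θ2| ≤ 1)
    (hsel1 : θ1 * deriv q1 L = |deriv q1 L|)
    (hsel2 : θ2 * deriv q2 L = |deriv q2 L|)
    (hbc1 : d * q1 L + l1 L = -(d * hL_ * P) * θ1)
    (hbc2 : d * q2 L + l2 L = -(d * hL_ * P) * θ2) :
    0 ≤ (∫ x in (0:ℝ)..L,
            (-(deriv (fun y => l1 y - l2 y) x)) * deriv (fun y => q1 y - q2 y) x)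
      + (∫ x in (0:ℝ)..L,
            ((-(deriv (deriv (fun y => q1 y - q2 y)) x)
                + 2 * d * (l1 x - l2 x) + d^2 * (q1 x - q2 x))
              + d * (-(l1 x - l2 x)))
            * ((l1 x - l2 x) + d * (q1 x - q2 x))) := by
  have hq1d : Differentiable ℝ q1 := hq1.differentiable (by norm_num)
  have hq2d : Differentiable ℝ q2 := hq2.differentiable (by norm_num)
  have hl1d : Differentiable ℝ l1 := hl1.differentiable one_ne_zero
  have hl2d : Differentiable ℝ l2 := hl2.differentiable one_ne_zero
  have hq1' : ContDiff ℝ 1 (deriv q1) := (contDiff_succ_iff_deriv.mp (show ContDiff ℝ (1+1) q1 by norm_num; exact hq1)).2.2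
  have hq2' : ContDiff ℝ 1 (deriv q2) := (contDiff_succ_iff_deriv.mp (show ContDiff ℝ (1+1) q2 by norm_num; exact hq2)).2.2
  have hq1'd : Differentiable ℝ (deriv q1) := hq1'.differentiable one_ne_zero
  have hq2'd : Differentiable ℝ (deriv q2) := hq2'.differentiable one_ne_zero
  have cq1'' : Continuous (deriv (deriv q1)) :=
    (contDiff_succ_iff_deriv.mp (show ContDiff ℝ (0+1) (deriv q1) by norm_num; exact hq1')).2.2.continuous
  have cq2'' : Continuous (deriv (deriv q2)) :=
    (contDiff_succ_iff_deriv.mp (show ContDiff ℝ (0+1) (deriv q2) by norm_num; exact hq2')).2.2.continuous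
  have cl1' : Continuous (deriv l1) :=
    (contDiff_succ_iff_deriv.mp (show ContDiff ℝ (0+1) l1 by norm_num; exact hl1)).2.2.continuous
  have cl2' : Continuous (deriv l2) :=
    (contDiff_succ_iff_deriv.mp (show ContDiff ℝ (0+1) l2 by norm_num; exact hl2)).2.2.continuous
  -- rewrite derivatives of differences
  have hQ' : deriv (fun y => q1 y - q2 y) = fun x => deriv q1 x - deriv q2 x :=
    funext fun x => deriv_sub (hq1d x) (hq2d x)
  have hQ'' : deriv (deriv (fun y => q1 y - q2 y))
      = fun x => deriv (deriv q1) x - deriv (deriv q2) x := by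
    rw [hQ']; exact funext fun x => deriv_sub (hq1'd x) (hq2'd x)
  have hL' : deriv (fun y => l1 y - l2 y) = fun x => deriv l1 x - deriv l2 x :=
    funext fun x => deriv_sub (hl1d x) (hl2d x)
  rw [hQ'', hQ', hL']
  set M : ℝ → ℝ := fun x => (l1 x - l2 x) + d * (q1 x - q2 x) with hM
  set F : ℝ → ℝ := fun x => M x * (deriv q1 x - deriv q2 x) with hF
  set φ : ℝ → ℝ := fun x =>
    (deriv l1 x - deriv l2 x + d * (deriv q1 x - deriv q2 x)) * (deriv q1 x - deriv q2 x)
      + M x * (deriv (deriv q1) x - deriv (deriv q2) x) with hφ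
  have hFderiv : ∀ x, HasDerivAt F (φ x) x := by
    intro x
    have hM' : HasDerivAt M (deriv l1 x - deriv l2 x + d * (deriv q1 x - deriv q2 x)) x :=
      (((hl1d x).hasDerivAt.sub (hl2d x).hasDerivAt)).add
        (HasDerivAt.const_mul d ((hq1d x).hasDerivAt.sub (hq2d x).hasDerivAt))
    have hq' : HasDerivAt (fun x => deriv q1 x - deriv q2 x)
        (deriv (deriv q1) x - deriv (deriv q2) x) x :=
      (hq1'd x).hasDerivAt.sub (hq2'd x).hasDerivAt
    exact hM'.mul hq'
  have cM : Continuous M := ((hl1d.continuous.sub hl2d.continuous)).add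
    (continuous_const.mul (hq1d.continuous.sub hq2d.continuous))
  have cQ' : Continuous (fun x => deriv q1 x - deriv q2 x) :=
    hq1'.continuous.sub hq2'.continuous
  have cφ : Continuous φ := by
    apply Continuous.add
    · exact ((cl1'.sub cl2').add (continuous_const.mul cQ')).mul cQ'
    · exact cM.mul (cq1''.sub cq2'')
  have hFTC : ∫ x in (0:ℝ)..L, φ x = F L - F 0 :=
    intervalIntegral.integral_eq_sub_of_hasDerivAt (fun x _ => hFderiv x)
      (cφ.intervalIntegrable _ _)
  -- integrands
  set i1 : ℝ → ℝ := fun x => (-(deriv l1 x - deriv l2 x)) * (deriv q1 x - deriv q2 x)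
    with hi1
  set i2 : ℝ → ℝ := fun x =>
    ((-(deriv (deriv q1) x - deriv (deriv q2) x) + 2 * d * (l1 x - l2 x)
        + d ^ 2 * (q1 x - q2 x)) + d * (-(l1 x - l2 x))) * M x with hi2
  have ci1 : Continuous i1 := ((cl1'.sub cl2').neg).mul cQ'
  have ci2 : Continuous i2 := by
    apply Continuous.mul _ cM
    apply Continuous.add
    · apply Continuous.add
      · apply Continuous.add
        · exact (cq1''.sub cq2'').neg
        · exact continuous_const.mul (hl1d.continuous.sub hl2d.continuous)
      · exact continuous_const.mul (hq1d.continuous.sub hq2d.continuous)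
    · exact continuous_const.mul ((hl1d.continuous.sub hl2d.continuous).neg)
  have hsum : (∫ x in (0:ℝ)..L, i1 x) + (∫ x in (0:ℝ)..L, i2 x)
      + (∫ x in (0:ℝ)..L, φ x)
      = ∫ x in (0:ℝ)..L, (d * (deriv q1 x - deriv q2 x) ^ 2 + d * (M x) ^ 2) := by
    rw [← intervalIntegral.integral_add (ci1.intervalIntegrable _ _) (ci2.intervalIntegrable _ _),
      ← intervalIntegral.integral_add (f := fun x => i1 x + i2 x) ((ci1.add ci2).intervalIntegrable _ _)
        (cφ.intervalIntegrable _ _)]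
    apply intervalIntegral.integral_congr
    intro x _
    simp only [hi1, hi2, hφ, hM]
    ring
  have hpos : 0 ≤ ∫ x in (0:ℝ)..L,
      (d * (deriv q1 x - deriv q2 x) ^ 2 + d * (M x) ^ 2) := by
    apply intervalIntegral.integral_nonneg hL.le
    intro x _
    have := sq_nonneg (deriv q1 x - deriv q2 x)
    have := sq_nonneg (M x)
    nlinarith
  have hF0 : F 0 = 0 := by simp [hF, hM, hq10, hq20, hl10, hl20]
  have hFL : F L ≤ 0 := by
    have hML : M L = -(d * hL_ * P) * (θ1 - θ2) := by
      simp only [hM]; linarith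
    have ht1 : θ1 * deriv q2 L ≤ |deriv q2 L| := by
      refine (le_abs_self _).trans ?_
      rw [abs_mul]
      exact mul_le_of_le_one_left (abs_nonneg _) hθ1
    have ht2 : θ2 * deriv q1 L ≤ |deriv q1 L| := by
      refine (le_abs_self _).trans ?_
      rw [abs_mul]
      exact mul_le_of_le_one_left (abs_nonneg _) hθ2
    have hθq : 0 ≤ (θ1 - θ2) * (deriv q1 L - deriv q2 L) := by nlinarith
    have : F L = -(d * hL_ * P) * ((θ1 - θ2) * (deriv q1 L - deriv q2 L)) := by
      rw [hF]; dsimp only; rw [hML]; ring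
    rw [this]
    have hdP : 0 < d * hL_ * P := by positivity
    nlinarith
  have hgoal : (∫ x in (0:ℝ)..L, i1 x) + (∫ x in (0:ℝ)..L, i2 x)
      = (∫ x in (0:ℝ)..L, (d * (deriv q1 x - deriv q2 x) ^ 2 + d * (M x) ^ 2))
        - (F L - F 0) := by
    rw [← hFTC]; linarith
  calc (0:ℝ) ≤ (∫ x in (0:ℝ)..L,
        (d * (deriv q1 x - deriv q2 x) ^ 2 + d * (M x) ^ 2)) - (F L - F 0) := by
        linarith
    _ = _ := hgoal.symm
end

section
/- Let L > 0, d > 0, P > 0, h_L > 0 and σ > 0. Let m : [0,L] → ℝ be continuously differentiable with m(0) = 0 and let n : [0,L] → ℝ be continuous. Then there exists a twice continuously differentiable function q : [0,L] → ℝ such that −q''(x) + (1 + 2d + d²)·q(x) = n(x) + (1 + 2d)·m(x) for all x ∈ [0,L], q(0) = 0, and d·q(L) + (q(L) − m(L)) = −d·h_L·P·α_σ(q'(L)). -/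
/-- The Yosida approximation `α_σ` of the multivalued sign operator:
`α_σ(x) = x/σ` if `|x| ≤ σ` and `α_σ(x) = x/|x|` otherwise. -/
noncomputable def yosidaSign (σ x : ℝ) : ℝ := if |x| ≤ σ then x / σ else x / |x|

lemma yosidaSign_eq (σ : ℝ) (hσ : 0 < σ) (x : ℝ) :
    yosidaSign σ x = x / max σ |x| := by
  unfold yosidaSign
  split_ifs with h
  · rw [max_eq_left h]
  · rw [max_eq_right (le_of_not_ge h)]

lemma yosidaSign_cont (σ : ℝ) (hσ : 0 < σ) : Continuous (yosidaSign σ) := by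
  have : (yosidaSign σ) = fun x => x / max σ |x| := funext (yosidaSign_eq σ hσ)
  rw [this]
  exact continuous_id.div (continuous_const.max continuous_abs)
    (fun x => by positivity)

lemma yosidaSign_abs_le (σ : ℝ) (hσ : 0 < σ) (x : ℝ) : |yosidaSign σ x| ≤ 1 := by
  rw [yosidaSign_eq σ hσ, abs_div, abs_of_pos (lt_max_of_lt_left hσ : (0:ℝ) < max σ |x|)]
  rw [div_le_one (lt_max_of_lt_left hσ)]
  exact le_max_right _ _

lemma hasDerivAt_primitive {f : ℝ → ℝ} (hf : Continuous f) (x : ℝ) :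
    HasDerivAt (fun u => ∫ t in (0:ℝ)..u, f t) (f x) x :=
  intervalIntegral.integral_hasDerivAt_right (hf.intervalIntegrable 0 x)
    hf.aestronglyMeasurable.stronglyMeasurableAtFilter hf.continuousAt

lemma exists_family (k : ℝ) (hk : 0 < k) (g : ℝ → ℝ) (hg : Continuous g) :
    ∃ Q : ℝ → ℝ → ℝ,
      (∀ c, ContDiff ℝ 2 (Q c)) ∧
      (∀ c x, deriv (deriv (Q c)) x = k^2 * Q c x - g x) ∧
      (∀ c, Q c 0 = 0) ∧
      (∀ c x, Q c x = Q 0 x + c * Real.sinh (k*x)) ∧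
      (∀ c x, deriv (Q c) x = deriv (Q 0) x + c * (k * Real.cosh (k*x))) := by
  set A : ℝ → ℝ := fun x => ∫ t in (0:ℝ)..x, Real.cosh (k*t) * g t with hAdef
  set B : ℝ → ℝ := fun x => ∫ t in (0:ℝ)..x, Real.sinh (k*t) * g t with hBdef
  have hA : ∀ x, HasDerivAt A (Real.cosh (k*x) * g x) x := fun x =>
    hasDerivAt_primitive ((Real.continuous_cosh.comp (continuous_const.mul continuous_id)).mul hg) x
  have hB : ∀ x, HasDerivAt B (Real.sinh (k*x) * g x) x := fun x =>
    hasDerivAt_primitive ((Real.continuous_sinh.comp (continuous_const.mul continuous_id)).mul hg) x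
  set Q : ℝ → ℝ → ℝ := fun c x =>
    (Real.cosh (k*x) * B x - Real.sinh (k*x) * A x) / k + c * Real.sinh (k*x) with hQdef
  set Q1 : ℝ → ℝ → ℝ := fun c x =>
    Real.sinh (k*x) * B x - Real.cosh (k*x) * A x + c * (k * Real.cosh (k*x)) with hQ1def
  have hkx : ∀ x : ℝ, HasDerivAt (fun y => k*y) k x := fun x => by
    simpa using (hasDerivAt_id x).const_mul k
  have hch : ∀ x : ℝ, HasDerivAt (fun y => Real.cosh (k*y)) (Real.sinh (k*x) * k) x :=
    fun x => (hkx x).cosh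
  have hsh : ∀ x : ℝ, HasDerivAt (fun y => Real.sinh (k*y)) (Real.cosh (k*x) * k) x :=
    fun x => (hkx x).sinh
  have hQ1 : ∀ c x, HasDerivAt (Q c) (Q1 c x) x := by
    intro c x
    have h := ((((hch x).mul (hB x)).sub ((hsh x).mul (hA x))).div_const k).add
      ((hsh x).const_mul c)
    refine h.congr_deriv (Eq.symm ?_)
    simp only [hQdef, hQ1def]
    field_simp
    ring
  have hQ2 : ∀ c x, HasDerivAt (Q1 c) (k^2 * Q c x - g x) x := by
    intro c x
    have h := (((hsh x).mul (hB x)).sub ((hch x).mul (hA x))).add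
      (((hch x).const_mul k).const_mul c)
    refine h.congr_deriv (Eq.symm ?_)
    have hcs := Real.cosh_sq_sub_sinh_sq (k*x)
    simp only [hQdef, hQ1def]
    field_simp
    linear_combination (g x) * hcs
  have hdQ : ∀ c, deriv (Q c) = Q1 c := fun c => funext fun x => (hQ1 c x).deriv
  have hddQ : ∀ c x, deriv (deriv (Q c)) x = k^2 * Q c x - g x := fun c x => by
    rw [hdQ c]; exact (hQ2 c x).deriv
  refine ⟨Q, ?_, hddQ, ?_, ?_, ?_⟩
  · intro c
    rw [show (2 : WithTop ℕ∞) = 1 + 1 by rfl]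
    have hdiff : Differentiable ℝ (Q c) := fun x => (hQ1 c x).differentiableAt
    refine contDiff_succ_iff_deriv.mpr ⟨hdiff, by intro h; exact absurd h (by norm_num), ?_⟩
    rw [hdQ c]
    refine contDiff_one_iff_deriv.mpr ⟨fun x => (hQ2 c x).differentiableAt, ?_⟩
    have : deriv (Q1 c) = fun x => k^2 * Q c x - g x := funext fun x => (hQ2 c x).deriv
    rw [this]
    exact (continuous_const.mul hdiff.continuous).sub hg
  · intro c; simp [hQdef, hAdef, hBdef, intervalIntegral.integral_same]
  · intro c x; simp [hQdef]
  · intro c x; rw [hdQ, hdQ]; simp [hQ1def]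

/-- solvability of the Yosida-regularized resolvent boundary value
problem in the Dirichlet–Dirichlet case. -/
theorem regularized_resolvent_dirichlet_dirichlet
    (L d P hL_ σ : ℝ) (hL : 0 < L) (hd : 0 < d) (hP : 0 < P) (hh : 0 < hL_)
    (hσ : 0 < σ)
    (m n : ℝ → ℝ) (hm : ContDiff ℝ 1 m) (hm0 : m 0 = 0) (hn : Continuous n) :
    ∃ q : ℝ → ℝ, ContDiff ℝ 2 q
      ∧ (∀ x ∈ Set.Icc (0:ℝ) L,
          -(deriv (deriv q) x) + (1 + 2 * d + d^2) * q x
            = n x + (1 + 2 * d) * m x)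
      ∧ q 0 = 0
      ∧ d * q L + (q L - m L) = -(d * hL_ * P) * yosidaSign σ (deriv q L) := by
  have hgc : Continuous (fun x => n x + (1 + 2*d) * m x) :=
    hn.add (continuous_const.mul hm.continuous)
  have hk : (0:ℝ) < 1 + d := by linarith
  obtain ⟨Q, hC2, hODE, hQ0, hQL, hQ1L⟩ := exists_family (1+d) hk _ hgc
  set S := Real.sinh ((1+d)*L) with hSdef
  have hSpos : 0 < S := Real.sinh_pos_iff.mpr (by positivity)
  set R := d * hL_ * P with hRdef
  have hRpos : 0 < R := by positivity
  set C0 := (d+1) * Q 0 L - m L with hC0def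
  set F : ℝ → ℝ := fun c =>
    d * Q c L + (Q c L - m L) + R * yosidaSign σ (deriv (Q c) L) with hFdef
  have hFc : Continuous F := by
    have h1 : Continuous fun c : ℝ => Q c L := by
      have he : (fun c : ℝ => Q c L) = fun c => Q 0 L + c * S :=
        funext fun c => by rw [hQL c L]
      rw [he]
      exact continuous_const.add (continuous_id.mul continuous_const)
    have h2 : Continuous fun c : ℝ => deriv (Q c) L := by
      have he : (fun c : ℝ => deriv (Q c) L)
          = fun c => deriv (Q 0) L + c * ((1+d) * Real.cosh ((1+d)*L)) :=
        funext fun c => hQ1L c L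
      rw [he]
      exact continuous_const.add (continuous_id.mul continuous_const)
    exact ((continuous_const.mul h1).add (h1.sub continuous_const)).add
      (continuous_const.mul ((yosidaSign_cont σ hσ).comp h2))
  set c2 := (|C0| + R) / ((d+1) * S) with hc2def
  have hc2nonneg : 0 ≤ c2 := by positivity
  have hmul : (d+1) * S * c2 = |C0| + R := by
    rw [hc2def]
    field_simp
  have hC0abs := abs_nonneg C0
  have hC0le := le_abs_self C0
  have hC0ge := neg_abs_le C0
  have hF2 : 0 ≤ F c2 := by
    have h := abs_le.1 (yosidaSign_abs_le σ hσ (deriv (Q c2) L))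
    have hQc2 : Q c2 L = Q 0 L + c2 * S := hQL c2 L
    simp only [hFdef]
    rw [hQc2]
    nlinarith [h.1, h.2, hRpos.le]
  have hF1 : F (-c2) ≤ 0 := by
    have h := abs_le.1 (yosidaSign_abs_le σ hσ (deriv (Q (-c2)) L))
    have hQc1 : Q (-c2) L = Q 0 L + (-c2) * S := hQL (-c2) L
    simp only [hFdef]
    rw [hQc1]
    nlinarith [h.1, h.2, hRpos.le]
  obtain ⟨c, _, hc⟩ := intermediate_value_Icc
    (by linarith : -c2 ≤ c2) hFc.continuousOn ⟨hF1, hF2⟩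
  refine ⟨Q c, hC2 c, ?_, hQ0 c, ?_⟩
  · intro x hx
    rw [hODE c x]
    ring
  · simp only [hFdef] at hc
    linarith [hc]
end

section
/- Let L > 0 and d > 0. There exist constants C₅ > 0 and C₆ > 0, depending only on L and d, with the following property: for every σ > 0, every P > 0, every h_L > 0, every continuously differentiable m : [0,L] → ℝ with m(0) = 0, every continuous n : [0,L] → ℝ, and every twice continuously differentiable q : [0,L] → ℝ satisfying −q''(x) + (1 + 2d + d²)·q(x) = n(x) + (1 + 2d)·m(x) on [0,L], q(0) = 0, and d·q(L) + (q(L) − m(L)) = −d·h_L·P·α_σ(q'(L)), one has ∫₀ᴸ (q(x)² + q'(x)² + q''(x)²) dx ≤ C₅·∫₀ᴸ (n(x) + (1+2d)·m(x))² dx + C₆·m(L)². -/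
lemma yosida_mul_nonneg (σ x : ℝ) (hσ : 0 < σ) : 0 ≤ yosidaSign σ x * x := by
  unfold yosidaSign
  split_ifs with h
  · rw [div_mul_eq_mul_div]; exact div_nonneg (mul_self_nonneg x) hσ.le
  · rw [div_mul_eq_mul_div]; exact div_nonneg (mul_self_nonneg x) (abs_nonneg x)

lemma young_aux (lam a b : ℝ) (hlam : 0 < lam) :
    a*b ≤ lam/2*a^2 + 1/(2*lam)*b^2 := by
  have h1 : a*b ≤ (lam^2*a^2 + b^2)/(2*lam) := by
    rw [le_div_iff₀ (by positivity)]
    nlinarith [sq_nonneg (lam*a - b)]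
  have h2 : (lam^2*a^2 + b^2)/(2*lam) = lam/2*a^2 + 1/(2*lam)*b^2 := by
    field_simp
  linarith

set_option maxHeartbeats 1000000 in
/-- uniform-in-σ H² estimate for solutions of the Yosida-regularized
resolvent boundary value problem in the Dirichlet–Dirichlet case. -/
theorem uniform_H2_bound_dirichlet_dirichlet
    (L d : ℝ) (hL : 0 < L) (hd : 0 < d) :
    ∃ C₅ C₆ : ℝ, 0 < C₅ ∧ 0 < C₆ ∧
      ∀ σ P hL_ : ℝ, 0 < σ → 0 < P → 0 < hL_ →
      ∀ m n q : ℝ → ℝ,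
        ContDiff ℝ 1 m → m 0 = 0 → Continuous n → ContDiff ℝ 2 q →
        (∀ x ∈ Set.Icc (0:ℝ) L,
          -(deriv (deriv q) x) + (1 + 2 * d + d^2) * q x
            = n x + (1 + 2 * d) * m x) →
        q 0 = 0 →
        d * q L + (q L - m L) = -(d * hL_ * P) * yosidaSign σ (deriv q L) →
        (∫ x in (0:ℝ)..L,
            ((q x)^2 + (deriv q x)^2 + (deriv (deriv q) x)^2))
          ≤ C₅ * (∫ x in (0:ℝ)..L, (n x + (1 + 2 * d) * m x)^2)
            + C₆ * (m L)^2 := by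
  set lam : ℝ := 1 + 2*d + d^2 with hlam_def
  have hlam1 : (1:ℝ) ≤ lam := by nlinarith
  have hlam0 : (0:ℝ) < lam := by linarith
  set ε : ℝ := min (L/(2*(L+1))) (1/(8*lam)) with hε_def
  have hε0 : (0:ℝ) < ε := lt_min (by positivity) (by positivity)
  have hεL : ε ≤ L/(2*(L+1)) := min_le_left _ _
  have hεlam : ε ≤ 1/(8*lam) := min_le_right _ _
  have hε1 : ε*(1+1/L) ≤ 1/2 := by
    have h1 : ε*(1+1/L) ≤ (L/(2*(L+1)))*(1+1/L) :=
      mul_le_mul_of_nonneg_right hεL (by positivity)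
    have h2 : (L/(2*(L+1)))*(1+1/L) = 1/2 := by field_simp
    linarith
  have hε2 : ε*(2*lam^2) ≤ lam/4 := by
    have h1 : ε*(2*lam^2) ≤ (1/(8*lam))*(2*lam^2) :=
      mul_le_mul_of_nonneg_right hεlam (by positivity)
    have h2 : (1/(8*lam))*(2*lam^2) = lam/4 := by field_simp; ring
    linarith
  refine ⟨((1+2*lam^2)*(4/lam)+2)*(1/(2*lam)+2*ε)+2,
    ((1+2*lam^2)*(4/lam)+2)/(4*ε), by positivity, by positivity, ?_⟩
  intro σ P hℓ hσ hP hhℓ m n q hm hm0 hn hq heq hq0 hbc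
  -- regularity
  have hq1 : ContDiff ℝ 1 (deriv q) := by
    have h2 : (2 : WithTop ℕ∞) = 1 + 1 := by norm_num
    rw [h2] at hq
    exact (contDiff_succ_iff_deriv.mp hq).2.2
  have hqd : Differentiable ℝ q := hq.differentiable (by norm_num)
  have hqd' : Differentiable ℝ (deriv q) := hq1.differentiable (by norm_num)
  have hcq : Continuous q := hqd.continuous
  have hcq' : Continuous (deriv q) := hqd'.continuous
  have hcq'' : Continuous (deriv (deriv q)) := (contDiff_one_iff_deriv.mp hq1).2
  have hcg : Continuous (fun x => n x + (1 + 2*d) * m x) :=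
    hn.add (continuous_const.mul hm.continuous)
  -- integrability
  have Iq2 : IntervalIntegrable (fun x => (q x)^2) MeasureTheory.volume 0 L :=
    (hcq.pow 2).intervalIntegrable 0 L
  have Iq'2 : IntervalIntegrable (fun x => (deriv q x)^2) MeasureTheory.volume 0 L :=
    (hcq'.pow 2).intervalIntegrable 0 L
  have Iq''2 : IntervalIntegrable (fun x => (deriv (deriv q) x)^2) MeasureTheory.volume 0 L :=
    (hcq''.pow 2).intervalIntegrable 0 L
  have Ig2 : IntervalIntegrable (fun x => (n x + (1 + 2*d) * m x)^2) MeasureTheory.volume 0 L :=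
    (hcg.pow 2).intervalIntegrable 0 L
  set A : ℝ := ∫ x in (0:ℝ)..L, (q x)^2 with hA_def
  set B : ℝ := ∫ x in (0:ℝ)..L, (deriv q x)^2 with hB_def
  set Cq : ℝ := ∫ x in (0:ℝ)..L, (deriv (deriv q) x)^2 with hCq_def
  set G : ℝ := ∫ x in (0:ℝ)..L, (n x + (1 + 2*d) * m x)^2 with hG_def
  have hA0 : 0 ≤ A := intervalIntegral.integral_nonneg hL.le (fun x _ => sq_nonneg _)
  have hB0 : 0 ≤ B := intervalIntegral.integral_nonneg hL.le (fun x _ => sq_nonneg _)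
  have hC0 : 0 ≤ Cq := intervalIntegral.integral_nonneg hL.le (fun x _ => sq_nonneg _)
  have hG0 : 0 ≤ G := intervalIntegral.integral_nonneg hL.le (fun x _ => sq_nonneg _)
  have hIcc : Set.uIcc (0:ℝ) L = Set.Icc 0 L := Set.uIcc_of_le hL.le
  have hq'' : ∀ x ∈ Set.Icc (0:ℝ) L,
      deriv (deriv q) x = lam * q x - (n x + (1 + 2*d) * m x) := by
    intro x hx; have := heq x hx; linarith
  -- bound on Cq
  have hCqB : Cq ≤ 2*lam^2*A + 2*G := by
    have e1 : Cq = ∫ x in (0:ℝ)..L, (lam * q x - (n x + (1 + 2*d) * m x))^2 := by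
      apply intervalIntegral.integral_congr
      intro x hx
      rw [hIcc] at hx
      simp only [hq'' x hx]
    have e2 : (∫ x in (0:ℝ)..L, (lam * q x - (n x + (1 + 2*d) * m x))^2)
        ≤ ∫ x in (0:ℝ)..L, (2*lam^2*(q x)^2 + 2*(n x + (1 + 2*d) * m x)^2) := by
      apply intervalIntegral.integral_mono_on hL.le
      · exact ((continuous_const.mul hcq).sub hcg).pow 2 |>.intervalIntegrable 0 L
      · exact ((continuous_const.mul (hcq.pow 2)).add
          (continuous_const.mul (hcg.pow 2))).intervalIntegrable 0 L
      · intro x _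
        nlinarith [sq_nonneg (lam * q x + (n x + (1 + 2*d) * m x))]
    have e3 : (∫ x in (0:ℝ)..L, (2*lam^2*(q x)^2 + 2*(n x + (1 + 2*d) * m x)^2))
        = 2*lam^2*A + 2*G := by
      rw [intervalIntegral.integral_add (Iq2.const_mul _) (Ig2.const_mul _),
        intervalIntegral.integral_const_mul, intervalIntegral.integral_const_mul]
    linarith [e1 ▸ e2, e3 ▸ e2]
  -- energy identity
  have hftc1 : (∫ x in (0:ℝ)..L, ((deriv q x)^2 + q x * deriv (deriv q) x))
      = q L * deriv q L - q 0 * deriv q 0 := by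
    apply intervalIntegral.integral_eq_sub_of_hasDerivAt
    · intro x _
      have h1 := ((hqd x).hasDerivAt).mul ((hqd' x).hasDerivAt)
      convert h1 using 1
      · rfl
      · rfl
      · ring
    · exact (Iq'2.add ((hcq.mul hcq'').intervalIntegrable 0 L))
  have hsplit1 : (∫ x in (0:ℝ)..L, ((deriv q x)^2 + q x * deriv (deriv q) x))
      = B + ∫ x in (0:ℝ)..L, q x * deriv (deriv q) x :=
    intervalIntegral.integral_add Iq'2 ((hcq.mul hcq'').intervalIntegrable 0 L)
  have hqq'' : (∫ x in (0:ℝ)..L, q x * deriv (deriv q) x)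
      = lam * A - ∫ x in (0:ℝ)..L, q x * (n x + (1 + 2*d) * m x) := by
    have e1 : (∫ x in (0:ℝ)..L, q x * deriv (deriv q) x)
        = ∫ x in (0:ℝ)..L, (lam * (q x)^2 - q x * (n x + (1 + 2*d) * m x)) := by
      apply intervalIntegral.integral_congr
      intro x hx
      rw [hIcc] at hx
      simp only [hq'' x hx]; ring
    rw [e1, intervalIntegral.integral_sub (g := fun x => q x * (n x + (1 + 2*d) * m x)) (Iq2.const_mul _)
      ((hcq.mul hcg).intervalIntegrable 0 L), intervalIntegral.integral_const_mul]
  have hEnergy : B + lam * A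
      = (∫ x in (0:ℝ)..L, q x * (n x + (1 + 2*d) * m x)) + q L * deriv q L := by
    rw [hftc1] at hsplit1
    rw [hq0] at hsplit1
    rw [hqq''] at hsplit1
    linarith
  -- bound ∫ q g
  have hqg : (∫ x in (0:ℝ)..L, q x * (n x + (1 + 2*d) * m x))
      ≤ lam/2 * A + 1/(2*lam) * G := by
    have e2 : (∫ x in (0:ℝ)..L, q x * (n x + (1 + 2*d) * m x))
        ≤ ∫ x in (0:ℝ)..L, (lam/2 * (q x)^2 + 1/(2*lam) * (n x + (1 + 2*d) * m x)^2) := by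
      apply intervalIntegral.integral_mono_on hL.le
      · exact (hcq.mul hcg).intervalIntegrable 0 L
      · exact ((continuous_const.mul (hcq.pow 2)).add
          (continuous_const.mul (hcg.pow 2))).intervalIntegrable 0 L
      · intro x _
        exact young_aux lam (q x) (n x + (1 + 2*d) * m x) hlam0
    have e3 : (∫ x in (0:ℝ)..L, (lam/2 * (q x)^2 + 1/(2*lam) * (n x + (1 + 2*d) * m x)^2))
        = lam/2 * A + 1/(2*lam) * G := by
      rw [intervalIntegral.integral_add (Iq2.const_mul _) (Ig2.const_mul _),
        intervalIntegral.integral_const_mul, intervalIntegral.integral_const_mul]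
    linarith [e3 ▸ e2]
  -- boundary term
  have hbd : q L * deriv q L ≤ |m L| * |deriv q L| := by
    have hα : 0 ≤ yosidaSign σ (deriv q L) * deriv q L := yosida_mul_nonneg σ _ hσ
    have hqL : (1 + d) * q L = m L - (d * hℓ * P) * yosidaSign σ (deriv q L) := by
      linarith [hbc]
    have h1 : (1 + d) * q L * deriv q L
        = (m L - (d * hℓ * P) * yosidaSign σ (deriv q L)) * deriv q L := by
      rw [hqL]
    have h2 : 0 ≤ (d * hℓ * P) * (yosidaSign σ (deriv q L) * deriv q L) :=
      mul_nonneg (by positivity) hα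
    have h3 : m L * deriv q L ≤ |m L| * |deriv q L| := by
      rw [← abs_mul]; exact le_abs_self _
    rcases le_or_gt (q L * deriv q L) 0 with h4 | h4
    · exact h4.trans (mul_nonneg (abs_nonneg _) (abs_nonneg _))
    · nlinarith [h1, h2, h3]
  -- trace inequality
  have htrace : (deriv q L)^2 ≤ 1/L * B + (B + Cq) := by
    obtain ⟨x₀, hx₀mem, hx₀min⟩ := isCompact_Icc.exists_isMinOn
      (Set.nonempty_Icc.mpr hL.le) ((hcq'.pow 2).continuousOn :
        ContinuousOn (fun x => (deriv q x)^2) (Set.Icc 0 L))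
    have hmin : L * (deriv q x₀)^2 ≤ B := by
      have h1 : (∫ _x in (0:ℝ)..L, (deriv q x₀)^2) ≤ B := by
        apply intervalIntegral.integral_mono_on hL.le intervalIntegrable_const Iq'2
        intro x hx
        exact hx₀min hx
      simpa using h1
    have hx₀2 : (deriv q x₀)^2 ≤ 1/L * B := by
      rw [div_mul_eq_mul_div, le_div_iff₀ hL]
      nlinarith [hmin]
    have hftc2 : (∫ x in x₀..L, (2 * deriv q x * deriv (deriv q) x))
        = (deriv q L)^2 - (deriv q x₀)^2 := by
      apply intervalIntegral.integral_eq_sub_of_hasDerivAt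
      · intro x _
        have h1 := ((hqd' x).hasDerivAt).pow 2
        convert h1 using 1
        · rfl
        · rfl
        · norm_num
      · exact ((continuous_const.mul hcq').mul hcq'').intervalIntegrable x₀ L
    have h2qq : (∫ x in x₀..L, (2 * deriv q x * deriv (deriv q) x))
        ≤ ∫ x in x₀..L, ((deriv q x)^2 + (deriv (deriv q) x)^2) := by
      apply intervalIntegral.integral_mono_on hx₀mem.2
      · exact ((continuous_const.mul hcq').mul hcq'').intervalIntegrable x₀ L
      · exact ((hcq'.pow 2).add (hcq''.pow 2)).intervalIntegrable x₀ L
      · intro x _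
        nlinarith [sq_nonneg (deriv q x - deriv (deriv q) x)]
    have hsub : (∫ x in x₀..L, ((deriv q x)^2 + (deriv (deriv q) x)^2))
        ≤ ∫ x in (0:ℝ)..L, ((deriv q x)^2 + (deriv (deriv q) x)^2) := by
      apply intervalIntegral.integral_mono_interval hx₀mem.1 hx₀mem.2 le_rfl
      · exact MeasureTheory.ae_of_all _ (fun x => by positivity)
      · exact ((hcq'.pow 2).add (hcq''.pow 2)).intervalIntegrable 0 L
    have hsplitBC : (∫ x in (0:ℝ)..L, ((deriv q x)^2 + (deriv (deriv q) x)^2)) = B + Cq :=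
      intervalIntegral.integral_add Iq'2 Iq''2
    have := hsplitBC ▸ (hftc2 ▸ (h2qq.trans hsub))
    linarith
  -- Young inequality
  have hyoung : |m L| * |deriv q L| ≤ ε * (deriv q L)^2 + (m L)^2/(4*ε) := by
    have h1 : |m L| * |deriv q L| ≤ (4*ε^2*(deriv q L)^2 + (m L)^2)/(4*ε) := by
      rw [le_div_iff₀ (by positivity)]
      nlinarith [sq_nonneg (|m L| - 2*ε*|deriv q L|), sq_abs (m L), sq_abs (deriv q L),
        abs_nonneg (m L), abs_nonneg (deriv q L), hε0]
    have h2 : (4*ε^2*(deriv q L)^2 + (m L)^2)/(4*ε)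
        = ε * (deriv q L)^2 + (m L)^2/(4*ε) := by
      field_simp
    linarith
  -- assembly
  clear_value A B Cq G
  clear_value ε
  clear_value lam
  have hS : 1/2*B + lam/4*A ≤ (1/(2*lam)+2*ε)*G + (m L)^2/(4*ε) := by
    have t1 : ε*(deriv q L)^2 ≤ ε*(1/L * B + (B + Cq)) :=
      mul_le_mul_of_nonneg_left htrace hε0.le
    have t2 : ε*Cq ≤ ε*(2*lam^2*A + 2*G) := mul_le_mul_of_nonneg_left hCqB hε0.le
    have t3 : ε*(1+1/L)*B ≤ 1/2*B := mul_le_mul_of_nonneg_right hε1 hB0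
    have t4 : ε*(2*lam^2)*A ≤ lam/4*A := mul_le_mul_of_nonneg_right hε2 hA0
    linarith [hEnergy, hqg, hbd, hyoung, t1, t2, t3, t4]
  have hlamA : lam/4*A ≤ (1/(2*lam)+2*ε)*G + (m L)^2/(4*ε) := by linarith
  have hBB : B ≤ 2*((1/(2*lam)+2*ε)*G + (m L)^2/(4*ε)) := by
    linarith [hS, mul_nonneg hlam0.le hA0]
  have hAS : A ≤ 4/lam*((1/(2*lam)+2*ε)*G + (m L)^2/(4*ε)) := by
    have h1 := mul_le_mul_of_nonneg_left hlamA (le_of_lt (show (0:ℝ) < 4/lam by positivity))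
    have h2 : 4/lam*(lam/4*A) = A := by field_simp
    linarith
  have hgoalT : (∫ x in (0:ℝ)..L, ((q x)^2 + (deriv q x)^2 + (deriv (deriv q) x)^2))
      = A + B + Cq := by
    rw [intervalIntegral.integral_add (Iq2.add Iq'2) Iq''2,
      intervalIntegral.integral_add Iq2 Iq'2, ← hA_def, ← hB_def, ← hCq_def]
  rw [hgoalT]
  have hfin2 : (1+2*lam^2)*A ≤ ((1+2*lam^2)*(4/lam))*((1/(2*lam)+2*ε)*G + (m L)^2/(4*ε)) := by
    calc (1+2*lam^2)*A
        ≤ (1+2*lam^2)*(4/lam*((1/(2*lam)+2*ε)*G + (m L)^2/(4*ε))) :=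
          mul_le_mul_of_nonneg_left hAS (by positivity)
      _ = ((1+2*lam^2)*(4/lam))*((1/(2*lam)+2*ε)*G + (m L)^2/(4*ε)) := by ring
  have hfin4 : (((1+2*lam^2)*(4/lam))+2)*((1/(2*lam)+2*ε)*G + (m L)^2/(4*ε)) + 2*G
      = (((1+2*lam^2)*(4/lam)+2)*(1/(2*lam)+2*ε)+2)*G
        + (((1+2*lam^2)*(4/lam)+2)/(4*ε))*(m L)^2 := by
    ring
  linarith [hCqB, hfin2, hBB, hfin4]
end

section
/- Let L > 0 and d > 0. There exist constants C₇ > 0 and C₈ > 0, depending only on L and d, with the following property: for every σ > 0, every P > 0, every h_L > 0, every continuously differentiable m : [0,L] → ℝ with m(0) = 0, every continuous n : [0,L] → ℝ, and every twice continuously differentiable q : [0,L] → ℝ satisfying −q''(x) + (1 + 2d + d²)·q(x) = n(x) + (1 + 2d)·m(x) on [0,L], q(0) = 0, and d·q(L) + (q(L) − m(L)) = −d·h_L·P·α_σ(q'(L)), one has |α_σ(q'(L))| ≤ (C₇/(h_L·P))·(∫₀ᴸ (n(x) + (1+2d)·m(x))² dx)^{1/2} + (C₈/(h_L·P))·|m(L)|.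 -/
/-- Cauchy–Schwarz for interval integrals of continuous functions. -/
lemma cs_L1_L2 (f : ℝ → ℝ) (hf : Continuous f) (L : ℝ) (hL : 0 < L) :
    ∫ x in (0:ℝ)..L, |f x| ≤ Real.sqrt L * Real.sqrt (∫ x in (0:ℝ)..L, (f x)^2) := by
  set A := ∫ x in (0:ℝ)..L, |f x| with hA
  set B := ∫ x in (0:ℝ)..L, (f x)^2 with hB
  have hAnn : 0 ≤ A := intervalIntegral.integral_nonneg hL.le (fun x _ => abs_nonneg _)
  have hint1 : IntervalIntegrable (fun x => |f x|) MeasureTheory.volume 0 L :=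
    (hf.abs).intervalIntegrable _ _
  have hint2 : IntervalIntegrable (fun x => (f x)^2) MeasureTheory.volume 0 L :=
    (hf.pow 2).intervalIntegrable _ _
  have key : 0 ≤ ∫ x in (0:ℝ)..L, (A - L * |f x|)^2 :=
    intervalIntegral.integral_nonneg hL.le (fun x _ => sq_nonneg _)
  have expand : (∫ x in (0:ℝ)..L, (A - L * |f x|)^2)
      = L * A^2 - 2 * L * A * A + L^2 * B := by
    have : (fun x => (A - L * |f x|)^2)
        = fun x => (A^2 - 2 * L * A * |f x|) + L^2 * (f x)^2 := by
      funext x; nlinarith [sq_abs (f x)]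
    rw [this, intervalIntegral.integral_add, intervalIntegral.integral_sub,
      intervalIntegral.integral_const, intervalIntegral.integral_const_mul,
      intervalIntegral.integral_const_mul]
    · simp [hA, hB]
      try ring
    · exact intervalIntegrable_const
    · exact hint1.const_mul _
    · exact (intervalIntegrable_const.sub (hint1.const_mul _))
    · exact hint2.const_mul _
  have hsq : A^2 ≤ L * B := by nlinarith [key, expand, hL]
  have : A ≤ Real.sqrt (L * B) := by
    rw [Real.le_sqrt hAnn]
    · exact hsq
    · nlinarith [sq_nonneg A]
  calc A ≤ Real.sqrt (L * B) := this
    _ = Real.sqrt L * Real.sqrt B := Real.sqrt_mul hL.le _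

lemma yosidaSign_pos_imp {σ x : ℝ} (hσ : 0 < σ) (h : 0 < yosidaSign σ x) : 0 < x := by
  unfold yosidaSign at h
  split_ifs at h with hc
  · exact (div_pos_iff.mp h).resolve_right
      (fun ⟨_, h2⟩ => absurd h2 (not_lt.mpr hσ.le)) |>.1
  · exact (div_pos_iff.mp h).resolve_right
      (fun ⟨_, h2⟩ => absurd h2 (not_lt.mpr (abs_nonneg x))) |>.1

lemma yosidaSign_neg_imp {σ x : ℝ} (hσ : 0 < σ) (h : yosidaSign σ x < 0) : x < 0 := by
  unfold yosidaSign at h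
  split_ifs at h with hc
  · rcases div_neg_iff.mp h with ⟨_, h2⟩ | ⟨h1, _⟩
    · exact absurd h2 (not_lt.mpr hσ.le)
    · exact h1
  · rcases div_neg_iff.mp h with ⟨_, h2⟩ | ⟨h1, _⟩
    · exact absurd h2 (not_lt.mpr (abs_nonneg x))
    · exact h1

/-- uniform-in-σ bound on the boundary Yosida term for solutions of the
regularized resolvent boundary value problem in the Dirichlet–Dirichlet case. -/
theorem uniform_yosida_bound_dirichlet_dirichlet
    (L d : ℝ) (hL : 0 < L) (hd : 0 < d) :
    ∃ C₇ C₈ : ℝ, 0 < C₇ ∧ 0 < C₈ ∧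
      ∀ σ P hL_ : ℝ, 0 < σ → 0 < P → 0 < hL_ →
      ∀ m n q : ℝ → ℝ,
        ContDiff ℝ 1 m → m 0 = 0 → Continuous n → ContDiff ℝ 2 q →
        (∀ x ∈ Set.Icc (0:ℝ) L,
          -(deriv (deriv q) x) + (1 + 2 * d + d^2) * q x
            = n x + (1 + 2 * d) * m x) →
        q 0 = 0 →
        d * q L + (q L - m L) = -(d * hL_ * P) * yosidaSign σ (deriv q L) →
        |yosidaSign σ (deriv q L)|
          ≤ (C₇ / (hL_ * P))
              * Real.sqrt (∫ x in (0:ℝ)..L, (n x + (1 + 2 * d) * m x)^2)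
            + (C₈ / (hL_ * P)) * |m L| := by
  refine ⟨Real.sqrt L / d, 1 / d, by positivity, by positivity, ?_⟩
  intro σ P hL_ hσ hP hhL m n q hm hm0 hn hq hode hq0 hbc
  have hk : (0:ℝ) < 1 + d := by positivity
  set f : ℝ → ℝ := fun x => n x + (1 + 2 * d) * m x with hf
  have hfc : Continuous f := hn.add (continuous_const.mul (hm.continuous))
  have hq1 : Differentiable ℝ q := hq.differentiable (by norm_num)
  have hq2 : Differentiable ℝ (deriv q) := by
    have h2 : ContDiff ℝ ((1:ℕ∞)+1) q := by exact_mod_cast hq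
    exact (contDiff_succ_iff_deriv.mp h2).2.2.differentiable (by simp)
  set g : ℝ → ℝ :=
    fun x => q x * ((1+d) * Real.cosh ((1+d) * x)) - deriv q x * Real.sinh ((1+d) * x)
    with hgdef
  have hode' : ∀ x ∈ Set.Icc (0:ℝ) L, deriv (deriv q) x = (1+d)^2 * q x - f x := by
    intro x hx
    have h := hode x hx
    simp only [hf]
    linear_combination -h
  have hg : ∀ x ∈ Set.uIcc (0:ℝ) L, HasDerivAt g (f x * Real.sinh ((1+d) * x)) x := by
    intro x hx
    have hx' : x ∈ Set.Icc (0:ℝ) L := by rwa [Set.uIcc_of_le hL.le] at hx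
    have hqd : HasDerivAt q (deriv q x) x := (hq1 x).hasDerivAt
    have hqd2 : HasDerivAt (deriv q) (deriv (deriv q) x) x := (hq2 x).hasDerivAt
    have hlin : HasDerivAt (fun y : ℝ => (1+d) * y) (1+d) x := by
      simpa using (hasDerivAt_id x).const_mul (1+d)
    have hsinh : HasDerivAt (fun y => Real.sinh ((1+d) * y))
        ((1+d) * Real.cosh ((1+d) * x)) x := by
      have h := (Real.hasDerivAt_sinh ((1+d) * x)).comp x hlin
      rw [mul_comm] at h
      exact h
    have hcosh : HasDerivAt (fun y => (1+d) * Real.cosh ((1+d) * y))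
        ((1+d) * ((1+d) * Real.sinh ((1+d) * x))) x := by
      have h := ((Real.hasDerivAt_cosh ((1+d) * x)).comp x hlin).const_mul (1+d)
      rw [show Real.sinh ((1+d)*x) * (1+d) = (1+d) * Real.sinh ((1+d)*x) from mul_comm _ _] at h
      exact h
    have hmain := (hqd.mul hcosh).sub (hqd2.mul hsinh)
    refine hmain.congr_deriv ?_
    rw [hode' x hx']
    ring
  have hJid : ∫ x in (0:ℝ)..L, f x * Real.sinh ((1+d) * x) = g L - g 0 :=
    intervalIntegral.integral_eq_sub_of_hasDerivAt hg
      ((hfc.mul (Real.continuous_sinh.comp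
        (continuous_const.mul continuous_id))).intervalIntegrable _ _)
  set J : ℝ := ∫ x in (0:ℝ)..L, f x * Real.sinh ((1+d) * x) with hJdef
  have hg0 : g 0 = 0 := by simp [hgdef, hq0]
  have hiden : (1+d) * Real.cosh ((1+d) * L) * q L
      = J + Real.sinh ((1+d) * L) * deriv q L := by
    rw [hJid, hg0, hgdef]; ring
  set F : ℝ := Real.sqrt (∫ x in (0:ℝ)..L, (n x + (1 + 2 * d) * m x)^2) with hFdef
  have hFf : F = Real.sqrt (∫ x in (0:ℝ)..L, (f x)^2) := by simp only [hf, hFdef]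
  have hF : 0 ≤ F := Real.sqrt_nonneg _
  have hsinhL : 0 < Real.sinh ((1+d) * L) := Real.sinh_pos_iff.mpr (by positivity)
  have hcoshL : 0 < Real.cosh ((1+d) * L) := Real.cosh_pos _
  have hsc : Real.sinh ((1+d) * L) < Real.cosh ((1+d) * L) := Real.sinh_lt_cosh _
  have hJbound : |J| ≤ Real.sinh ((1+d) * L) * (Real.sqrt L * F) := by
    have h1 : |J| ≤ ∫ x in (0:ℝ)..L, |f x * Real.sinh ((1+d) * x)| :=
      intervalIntegral.abs_integral_le_integral_abs hL.le
    have h2 : (∫ x in (0:ℝ)..L, |f x * Real.sinh ((1+d) * x)|)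
        ≤ ∫ x in (0:ℝ)..L, |f x| * Real.sinh ((1+d) * L) := by
      apply intervalIntegral.integral_mono_on hL.le
      · exact ((hfc.mul (Real.continuous_sinh.comp
          (continuous_const.mul continuous_id))).abs).intervalIntegrable _ _
      · exact ((hfc.abs).mul continuous_const).intervalIntegrable _ _
      · intro x hx
        rw [abs_mul]
        apply mul_le_mul_of_nonneg_left _ (abs_nonneg _)
        rw [abs_of_nonneg (Real.sinh_nonneg_iff.mpr (mul_nonneg hk.le hx.1))]
        exact Real.sinh_le_sinh.mpr (by nlinarith [hx.2] : (1+d) * x ≤ (1+d) * L)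
    have h3 : (∫ x in (0:ℝ)..L, |f x| * Real.sinh ((1+d) * L))
        = (∫ x in (0:ℝ)..L, |f x|) * Real.sinh ((1+d) * L) :=
      intervalIntegral.integral_mul_const _ _
    have h4 : (∫ x in (0:ℝ)..L, |f x|) ≤ Real.sqrt L * F := by
      rw [hFf]; exact cs_L1_L2 f hfc L hL
    calc |J| ≤ ∫ x in (0:ℝ)..L, |f x| * Real.sinh ((1+d) * L) := h1.trans h2
      _ = (∫ x in (0:ℝ)..L, |f x|) * Real.sinh ((1+d) * L) := h3
      _ ≤ (Real.sqrt L * F) * Real.sinh ((1+d) * L) :=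
          mul_le_mul_of_nonneg_right h4 hsinhL.le
      _ = Real.sinh ((1+d) * L) * (Real.sqrt L * F) := by ring
  set α : ℝ := yosidaSign σ (deriv q L) with hαdef
  have habc : d * (hL_ * P) * α = m L - (1+d) * q L := by linear_combination hbc
  have hsf : (0:ℝ) ≤ Real.sqrt L * F := mul_nonneg (Real.sqrt_nonneg _) hF
  have hb2 : Real.sinh ((1+d) * L) * (Real.sqrt L * F)
      ≤ Real.cosh ((1+d) * L) * (Real.sqrt L * F) :=
    mul_le_mul_of_nonneg_right hsc.le hsf
  have hJ2 : J ≤ Real.cosh ((1+d) * L) * (Real.sqrt L * F) :=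
    (le_abs_self J).trans (hJbound.trans hb2)
  have hJ1 : -(Real.cosh ((1+d) * L) * (Real.sqrt L * F)) ≤ J := by
    have h := neg_abs_le J
    have h' := hJbound.trans hb2
    linarith
  have key : |α| * (d * (hL_ * P)) ≤ Real.sqrt L * F + |m L| := by
    rcases lt_trichotomy α 0 with hα | hα | hα
    · -- α < 0 : deriv q L < 0
      have hqL' : deriv q L < 0 := yosidaSign_neg_imp hσ hα
      have hs : Real.sinh ((1+d) * L) * deriv q L < 0 :=
        mul_neg_of_pos_of_neg hsinhL hqL'
      have h5 : Real.cosh ((1+d) * L) * ((1+d) * q L)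
          ≤ Real.cosh ((1+d) * L) * (Real.sqrt L * F) := by
        have := hiden
        nlinarith [hs, hJ2]
      have h6 : (1+d) * q L ≤ Real.sqrt L * F :=
        le_of_mul_le_mul_left h5 hcoshL
      have h7 : (-α) * (d * (hL_ * P)) = (1+d) * q L - m L := by
        linear_combination -habc
      rw [abs_of_neg hα]
      have h8 := neg_abs_le (m L)
      linarith
    · rw [hα, abs_zero, zero_mul]
      exact add_nonneg hsf (abs_nonneg _)
    · -- α > 0 : deriv q L > 0
      have hqL' : 0 < deriv q L := yosidaSign_pos_imp hσ hα
      have hs : 0 < Real.sinh ((1+d) * L) * deriv q L :=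
        mul_pos hsinhL hqL'
      have h5 : Real.cosh ((1+d) * L) * (-(Real.sqrt L * F))
          ≤ Real.cosh ((1+d) * L) * ((1+d) * q L) := by
        have := hiden
        nlinarith [hs, hJ1]
      have h6 : -(Real.sqrt L * F) ≤ (1+d) * q L :=
        le_of_mul_le_mul_left h5 hcoshL
      have h7 : α * (d * (hL_ * P)) = m L - (1+d) * q L := by
        linear_combination habc
      rw [abs_of_pos hα]
      have h8 := le_abs_self (m L)
      linarith
  have hrhs : (Real.sqrt L / d) / (hL_ * P) * F + (1 / d) / (hL_ * P) * |m L|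
      = (Real.sqrt L * F + |m L|) / (d * (hL_ * P)) := by
    field_simp
    try ring
  rw [hrhs, le_div_iff₀ (by positivity)]
  exact key
end

section
/- Let L > 0, d > 0, P > 0 and h_L > 0. Let m : [0,L] → ℝ be continuously differentiable with m(0) = 0 and let n : [0,L] → ℝ be continuous. Then there exist a twice continuously differentiable function q : [0,L] → ℝ and a real number θ with |θ| ≤ 1 and θ·q'(L) = |q'(L)| such that −q''(x) + (1 + 2d + d²)·q(x) = n(x) + (1 + 2d)·m(x) for all x ∈ [0,L], q(0) = 0, and d·q(L) + (q(L) − m(L)) = −d·h_L·P·θ. Moreover q is unique: if (q₁, θ₁) and (q₂, θ₂) are two such pairs, then q₁ = q₂. -/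
/-- Arithmetic lemma: solvability of the scalar inclusion `α A + β ∈ -c·sign(γ A + δ)`. -/
lemma aux_sign_select (α β γ δ c : ℝ) (hα : 0 < α) (hγ : 0 < γ) (hc : 0 < c) :
    ∃ A θ : ℝ, |θ| ≤ 1 ∧ θ * (γ * A + δ) = |γ * A + δ| ∧ α * A + β = -(c * θ) := by
  rcases le_or_gt (|α * (-δ / γ) + β|) c with h | h
  · refine ⟨-δ / γ, -(α * (-δ / γ) + β) / c, ?_, ?_, ?_⟩
    · rw [abs_div, abs_neg, abs_of_pos hc]
      exact (div_le_one hc).mpr h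
    · have h0 : γ * (-δ / γ) + δ = 0 := by field_simp; ring
      rw [h0, abs_zero, mul_zero]
    · field_simp
  · rcases lt_or_ge c (α * (-δ / γ) + β) with h1 | h2
    · refine ⟨(c - β) / α, -1, by norm_num, ?_, by field_simp; ring⟩
      have hA : (c - β) / α < -δ / γ := by
        rw [div_lt_iff₀ hα]
        nlinarith
      have hneg : γ * ((c - β) / α) + δ < 0 := by
        have hγδ : γ * (-δ / γ) = -δ := by field_simp
        nlinarith [mul_lt_mul_of_pos_left hA hγ]
      rw [abs_of_neg hneg]; ring
    · have hv : α * (-δ / γ) + β < -c := by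
        rcases abs_cases (α * (-δ / γ) + β) with ⟨he, _⟩ | ⟨he, _⟩ <;> linarith
      refine ⟨(-c - β) / α, 1, by norm_num, ?_, by field_simp; ring⟩
      have hA : -δ / γ < (-c - β) / α := by
        rw [lt_div_iff₀ hα]
        nlinarith
      have hpos : 0 < γ * ((-c - β) / α) + δ := by
        have hγδ : γ * (-δ / γ) = -δ := by field_simp
        nlinarith [mul_lt_mul_of_pos_left hA hγ]
      rw [abs_of_pos hpos]; ring

set_option maxHeartbeats 1000000 in
/-- solvability (and uniqueness of `q`) of the resolvent boundary value
problem for the Dirichlet–Dirichlet closed-loop operator, where `θ` is a selection of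
the multivalued sign of `q'(L)`. -/
theorem resolvent_dirichlet_dirichlet
    (L d P hL_ : ℝ) (hL : 0 < L) (hd : 0 < d) (hP : 0 < P) (hh : 0 < hL_)
    (m n : ℝ → ℝ) (hm : ContDiff ℝ 1 m) (hm0 : m 0 = 0) (hn : Continuous n) :
    (∃ q : ℝ → ℝ, ∃ θ : ℝ, ContDiff ℝ 2 q ∧ |θ| ≤ 1
      ∧ θ * deriv q L = |deriv q L|
      ∧ (∀ x ∈ Set.Icc (0:ℝ) L,
          -(deriv (deriv q) x) + (1 + 2 * d + d^2) * q x
            = n x + (1 + 2 * d) * m x)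
      ∧ q 0 = 0
      ∧ d * q L + (q L - m L) = -(d * hL_ * P) * θ)
    ∧ (∀ q1 q2 : ℝ → ℝ, ∀ θ1 θ2 : ℝ,
        (ContDiff ℝ 2 q1 ∧ |θ1| ≤ 1 ∧ θ1 * deriv q1 L = |deriv q1 L|
          ∧ (∀ x ∈ Set.Icc (0:ℝ) L,
              -(deriv (deriv q1) x) + (1 + 2 * d + d^2) * q1 x
                = n x + (1 + 2 * d) * m x)
          ∧ q1 0 = 0
          ∧ d * q1 L + (q1 L - m L) = -(d * hL_ * P) * θ1) →
        (ContDiff ℝ 2 q2 ∧ |θ2| ≤ 1 ∧ θ2 * deriv q2 L = |deriv q2 L|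
          ∧ (∀ x ∈ Set.Icc (0:ℝ) L,
              -(deriv (deriv q2) x) + (1 + 2 * d + d^2) * q2 x
                = n x + (1 + 2 * d) * m x)
          ∧ q2 0 = 0
          ∧ d * q2 L + (q2 L - m L) = -(d * hL_ * P) * θ2) →
        ∀ x ∈ Set.Icc (0:ℝ) L, q1 x = q2 x) := by
  constructor
  · -- EXISTENCE
    set μ : ℝ := 1 + d with hμdef
    have hμ : 0 < μ := by simp only [hμdef]; linarith
    set f : ℝ → ℝ := fun x => n x + (1 + 2*d) * m x with hfdef
    have hfc : Continuous f := hn.add (continuous_const.mul hm.continuous)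
    have hcc : Continuous fun t => Real.cosh (μ*t) * f t :=
      (Real.continuous_cosh.comp (continuous_const.mul continuous_id)).mul hfc
    have hsc : Continuous fun t => Real.sinh (μ*t) * f t :=
      (Real.continuous_sinh.comp (continuous_const.mul continuous_id)).mul hfc
    set Ic : ℝ → ℝ := fun x => ∫ t in (0:ℝ)..x, Real.cosh (μ*t) * f t with hIcdef
    set Is : ℝ → ℝ := fun x => ∫ t in (0:ℝ)..x, Real.sinh (μ*t) * f t with hIsdef
    have hIc : ∀ x, HasDerivAt Ic (Real.cosh (μ*x) * f x) x :=
      fun x => (hcc.integral_hasStrictDerivAt 0 x).hasDerivAt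
    have hIs : ∀ x, HasDerivAt Is (Real.sinh (μ*x) * f x) x :=
      fun x => (hsc.integral_hasStrictDerivAt 0 x).hasDerivAt
    -- choose A, θ
    obtain ⟨A, θ, hθ1, hθ2, hθ3⟩ := aux_sign_select
      ((1+d) * Real.sinh (μ*L))
      ((1+d) * ((Real.cosh (μ*L) * Is L - Real.sinh (μ*L) * Ic L)/μ) - m L)
      (μ * Real.cosh (μ*L))
      (Real.sinh (μ*L) * Is L - Real.cosh (μ*L) * Ic L)
      (d * hL_ * P)
      (mul_pos (by linarith) (Real.sinh_pos_iff.mpr (mul_pos hμ hL)))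
      (mul_pos hμ (Real.cosh_pos _))
      (mul_pos (mul_pos hd hh) hP)
    set q : ℝ → ℝ :=
      fun x => A * Real.sinh (μ*x) + (Real.cosh (μ*x) * Is x - Real.sinh (μ*x) * Ic x)/μ
      with hqdef
    set D : ℝ → ℝ :=
      fun x => A * (μ * Real.cosh (μ*x)) + (Real.sinh (μ*x) * Is x - Real.cosh (μ*x) * Ic x)
      with hDdef
    have hsinh : ∀ x : ℝ, HasDerivAt (fun x => Real.sinh (μ*x)) (μ * Real.cosh (μ*x)) x := by
      intro x
      have h := (Real.hasDerivAt_sinh (μ*x)).comp x ((hasDerivAt_id x).const_mul μ)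
      refine h.congr_deriv ?_
      symm
      ring
    have hcosh : ∀ x : ℝ, HasDerivAt (fun x => Real.cosh (μ*x)) (μ * Real.sinh (μ*x)) x := by
      intro x
      have h := (Real.hasDerivAt_cosh (μ*x)).comp x ((hasDerivAt_id x).const_mul μ)
      refine h.congr_deriv ?_
      symm
      ring
    have hQ : ∀ x, HasDerivAt q (D x) x := by
      intro x
      have h := (((hsinh x).const_mul A).add
        ((((hcosh x).mul (hIs x)).sub ((hsinh x).mul (hIc x))).div_const μ))
      refine h.congr_deriv ?_
      symm
      simp only [hDdef]
      field_simp
      ring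
    have hD : ∀ x, HasDerivAt D (μ^2 * q x - f x) x := by
      intro x
      have h := ((((hcosh x).const_mul μ).const_mul A).add
        (((hsinh x).mul (hIs x)).sub ((hcosh x).mul (hIc x))))
      refine h.congr_deriv ?_
      symm
      have hcs := Real.cosh_sq_sub_sinh_sq (μ*x)
      simp only [hqdef]
      field_simp
      linear_combination (μ * f x - (d * n x + d * m x + 2 * d^2 * m x)) * hcs
    have hderivq : deriv q = D := funext fun x => (hQ x).deriv
    have hderivD : deriv D = fun x => μ^2 * q x - f x := funext fun x => (hD x).deriv
    have hqdiff : Differentiable ℝ q := fun x => (hQ x).differentiableAt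
    refine ⟨q, θ, ?_, hθ1, ?_, ?_, ?_, ?_⟩
    · rw [show (2 : WithTop ℕ∞) = 1 + 1 from rfl, contDiff_succ_iff_deriv]
      refine ⟨hqdiff, by simp, ?_⟩
      rw [hderivq, contDiff_one_iff_deriv]
      refine ⟨fun x => (hD x).differentiableAt, ?_⟩
      rw [hderivD]
      exact (continuous_const.mul hqdiff.continuous).sub hfc
    · rw [hderivq]
      have hDL : D L = (μ * Real.cosh (μ*L)) * A
          + (Real.sinh (μ*L) * Is L - Real.cosh (μ*L) * Ic L) := by
        simp only [hDdef]; ring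
      rw [hDL]; exact hθ2
    · intro x hx
      rw [hderivq, hderivD]
      have hμ2 : (1 + 2*d + d^2) = μ^2 := by simp only [hμdef]; ring
      rw [hμ2]
      simp only [hfdef]
      ring
    · simp only [hqdef, hIcdef, hIsdef, mul_zero, Real.sinh_zero, Real.cosh_zero,
        intervalIntegral.integral_same]
      ring
    · have hqL : q L = A * Real.sinh (μ*L)
          + (Real.cosh (μ*L) * Is L - Real.sinh (μ*L) * Ic L)/μ := by
        simp only [hqdef]
      rw [hqL]
      linear_combination hθ3
  · -- UNIQUENESS
    rintro q1 q2 θ1 θ2 ⟨hq1c, hθ1a, hθ1s, hode1, hq10, hb1⟩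
      ⟨hq2c, hθ2a, hθ2s, hode2, hq20, hb2⟩ x hx
    have h1d : Differentiable ℝ q1 := hq1c.differentiable (by norm_num)
    have h2d : Differentiable ℝ q2 := hq2c.differentiable (by norm_num)
    have h1c1 : ContDiff ℝ 1 (deriv q1) := by
      rw [show (2 : WithTop ℕ∞) = 1 + 1 from rfl, contDiff_succ_iff_deriv] at hq1c
      exact hq1c.2.2
    have h2c1 : ContDiff ℝ 1 (deriv q2) := by
      rw [show (2 : WithTop ℕ∞) = 1 + 1 from rfl, contDiff_succ_iff_deriv] at hq2c
      exact hq2c.2.2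
    have h1d' : Differentiable ℝ (deriv q1) := h1c1.differentiable one_ne_zero
    have h2d' : Differentiable ℝ (deriv q2) := h2c1.differentiable one_ne_zero
    have h1c'' : Continuous (deriv (deriv q1)) := h1c1.continuous_deriv le_rfl
    have h2c'' : Continuous (deriv (deriv q2)) := h2c1.continuous_deriv le_rfl
    set w : ℝ → ℝ := fun y => q1 y - q2 y with hwdef
    have hwc : Continuous w := h1d.continuous.sub h2d.continuous
    have hwd : Differentiable ℝ w := h1d.sub h2d
    have hwfun : deriv w = fun y => deriv q1 y - deriv q2 y :=
      funext fun y => deriv_sub (h1d y) (h2d y)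
    have hwd' : Differentiable ℝ (deriv w) := by rw [hwfun]; exact h1d'.sub h2d'
    have hw'' : ∀ y, deriv (deriv w) y = deriv (deriv q1) y - deriv (deriv q2) y := by
      intro y; rw [hwfun]; exact deriv_sub (h1d' y) (h2d' y)
    have hwc'' : Continuous (deriv (deriv w)) := by
      have : deriv (deriv w) = fun y => deriv (deriv q1) y - deriv (deriv q2) y :=
        funext hw''
      rw [this]; exact h1c''.sub h2c''
    have hode : ∀ y ∈ Set.Icc (0:ℝ) L,
        deriv (deriv w) y = (1 + 2*d + d^2) * w y := by
      intro y hy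
      have e1 := hode1 y hy
      have e2 := hode2 y hy
      rw [hw'' y]
      simp only [hwdef]
      linarith
    have hw0 : w 0 = 0 := by simp only [hwdef]; rw [hq10, hq20]; ring
    -- energy identity
    have key : (∫ y in (0:ℝ)..L, (deriv (deriv w) y * w y + deriv w y * deriv w y))
        = deriv w L * w L - deriv w 0 * w 0 := by
      apply intervalIntegral.integral_eq_sub_of_hasDerivAt
      · intro y _
        exact ((hwd' y).hasDerivAt).mul ((hwd y).hasDerivAt)
      · exact ((hwc''.mul hwc).add ((hwd'.continuous).mul (hwd'.continuous))).intervalIntegrable 0 L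
    rw [hw0, mul_zero, sub_zero] at key
    have key2 : (∫ y in (0:ℝ)..L, ((1 + 2*d + d^2) * (w y * w y) + deriv w y * deriv w y))
        = deriv w L * w L := by
      rw [← key]
      apply intervalIntegral.integral_congr
      intro y hy
      rw [Set.uIcc_of_le hL.le] at hy
      simp only [hode y hy]
      ring
    -- boundary monotonicity
    have hbd : (1+d) * w L = -((d * hL_ * P) * (θ1 - θ2)) := by
      simp only [hwdef]
      linear_combination hb1 - hb2
    have hmono : 0 ≤ (θ1 - θ2) * (deriv q1 L - deriv q2 L) := by
      have e1 : θ1 * deriv q2 L ≤ |deriv q2 L| := by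
        calc θ1 * deriv q2 L ≤ |θ1 * deriv q2 L| := le_abs_self _
        _ = |θ1| * |deriv q2 L| := abs_mul _ _
        _ ≤ 1 * |deriv q2 L| := mul_le_mul_of_nonneg_right hθ1a (abs_nonneg _)
        _ = |deriv q2 L| := one_mul _
      have e2 : θ2 * deriv q1 L ≤ |deriv q1 L| := by
        calc θ2 * deriv q1 L ≤ |θ2 * deriv q1 L| := le_abs_self _
        _ = |θ2| * |deriv q1 L| := abs_mul _ _
        _ ≤ 1 * |deriv q1 L| := mul_le_mul_of_nonneg_right hθ2a (abs_nonneg _)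
        _ = |deriv q1 L| := one_mul _
      nlinarith [hθ1s, hθ2s]
    have hbnd : deriv w L * w L ≤ 0 := by
      have hdL : deriv w L = deriv q1 L - deriv q2 L := by rw [hwfun]
      have h1d0 : (0:ℝ) < 1 + d := by linarith
      have hcP : (0:ℝ) < d * hL_ * P := mul_pos (mul_pos hd hh) hP
      have hkey : (1+d) * (deriv w L * w L)
          = -((d * hL_ * P) * ((θ1 - θ2) * (deriv q1 L - deriv q2 L))) := by
        rw [hdL]
        linear_combination (deriv q1 L - deriv q2 L) * hbd
      nlinarith [mul_nonneg hcP.le hmono]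
    -- nonnegativity and splitting
    have hint1 : IntervalIntegrable (fun y => w y * w y) MeasureTheory.volume 0 L :=
      (hwc.mul hwc).intervalIntegrable 0 L
    have hint2 : IntervalIntegrable (fun y => deriv w y * deriv w y) MeasureTheory.volume 0 L :=
      (hwd'.continuous.mul hwd'.continuous).intervalIntegrable 0 L
    have hsplit : (∫ y in (0:ℝ)..L, ((1 + 2*d + d^2) * (w y * w y) + deriv w y * deriv w y))
        = (1 + 2*d + d^2) * (∫ y in (0:ℝ)..L, w y * w y)
          + ∫ y in (0:ℝ)..L, deriv w y * deriv w y := by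
      rw [intervalIntegral.integral_add (hint1.const_mul _) hint2,
        intervalIntegral.integral_const_mul]
    have hI1 : 0 ≤ ∫ y in (0:ℝ)..L, deriv w y * deriv w y :=
      intervalIntegral.integral_nonneg hL.le (fun y _ => mul_self_nonneg _)
    have hI2 : 0 ≤ ∫ y in (0:ℝ)..L, w y * w y :=
      intervalIntegral.integral_nonneg hL.le (fun y _ => mul_self_nonneg _)
    have hμ2pos : (0:ℝ) < 1 + 2*d + d^2 := by nlinarith
    have hIzero : (∫ y in (0:ℝ)..L, w y * w y) = 0 := by
      have heq := key2
      rw [hsplit] at heq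
      have h6 : (1 + 2*d + d^2) * (∫ y in (0:ℝ)..L, w y * w y)
          ≤ (1 + 2*d + d^2) * 0 := by rw [mul_zero]; linarith
      exact le_antisymm (le_of_mul_le_mul_left h6 hμ2pos) hI2
    -- conclude pointwise
    set W : ℝ → ℝ := fun z => ∫ t in (0:ℝ)..z, w t * w t with hWdef
    have hW : ∀ z, HasDerivAt W (w z * w z) z :=
      fun z => ((hwc.mul hwc).integral_hasStrictDerivAt 0 z).hasDerivAt
    have hW0 : ∀ y ∈ Set.Icc (0:ℝ) L, W y = 0 := by
      intro y hy
      have h1 : 0 ≤ W y :=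
        intervalIntegral.integral_nonneg hy.1 (fun t _ => mul_self_nonneg _)
      have hadd : W y + (∫ t in y..L, w t * w t) = W L := by
        simp only [hWdef]
        exact intervalIntegral.integral_add_adjacent_intervals
          ((hwc.mul hwc).intervalIntegrable 0 y) ((hwc.mul hwc).intervalIntegrable y L)
      have h2 : 0 ≤ ∫ t in y..L, w t * w t :=
        intervalIntegral.integral_nonneg hy.2 (fun t _ => mul_self_nonneg _)
      have hWL : W L = 0 := hIzero
      linarith
    have hU : UniqueDiffWithinAt ℝ (Set.Icc (0:ℝ) L) x := uniqueDiffOn_Icc hL x hx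
    have e1 : derivWithin W (Set.Icc (0:ℝ) L) x = w x * w x :=
      ((hW x).hasDerivWithinAt).derivWithin hU
    have e2 : derivWithin W (Set.Icc (0:ℝ) L) x = 0 := by
      have hcongr : HasDerivWithinAt W 0 (Set.Icc (0:ℝ) L) x :=
        (hasDerivWithinAt_const x _ (0:ℝ)).congr (fun y hy => hW0 y hy) (hW0 x hx)
      exact hcongr.derivWithin hU
    have : w x = 0 := by
      have := e1.symm.trans e2
      exact mul_self_eq_zero.mp this
    simpa [hwdef, sub_eq_zero] using this
end

section
/- Let L > 0, d > 0, P > 0 and h_L > 0. Let w : [0,∞) × [0,L] → ℝ be twice continuously differentiable and satisfy w_tt = w_xx − 2d·w_t − d²·w for all (t,x) ∈ (0,∞) × (0,L) and w(t,0) = 0 for all t ≥ 0. Suppose there are functions p, θ : (0,∞) → ℝ with |p(t)| ≤ P, |θ(t)| ≤ 1, θ(t)·(w_t(t,L) + d·w(t,L)) = |w_t(t,L) + d·w(t,L)|, and w_x(t,L) = h_L·p(t) − h_L·P·θ(t) for every t > 0. Define V(t) = (1/2)∫₀ᴸ (w_t(t,x) + d·w(t,x))² dx + (1/2)∫₀ᴸ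 w_x(t,x)² dx. Then V(t) ≤ e^{−2dt}·V(0) for all t ≥ 0. -/
open MeasureTheory Set intervalIntegral

private lemma lineDeriv_fst (g : ℝ × ℝ → ℝ) (hg : Differentiable ℝ g) (t x : ℝ) :
    HasDerivAt (fun s => g (s, x)) (fderiv ℝ g (t, x) (1, 0)) t :=
  (hg (t, x)).hasFDerivAt.comp_hasDerivAt t
    ((hasDerivAt_id t).prodMk (hasDerivAt_const t x))

private lemma lineDeriv_snd (g : ℝ × ℝ → ℝ) (hg : Differentiable ℝ g) (t x : ℝ) :
    HasDerivAt (fun y => g (t, y)) (fderiv ℝ g (t, x) (0, 1)) x :=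
  (hg (t, x)).hasFDerivAt.comp_hasDerivAt x
    ((hasDerivAt_const x t).prodMk (hasDerivAt_id x))

private lemma contDiff_fderiv_apply (g : ℝ × ℝ → ℝ) (hg : ContDiff ℝ 2 g) (v : ℝ × ℝ) :
    ContDiff ℝ 1 (fun q => fderiv ℝ g q v) :=
  (ContinuousLinearMap.apply ℝ ℝ v).contDiff.comp (hg.fderiv_right (by norm_num))

private lemma cont_fderiv_apply (g : ℝ × ℝ → ℝ) (hg : ContDiff ℝ 1 g) (v : ℝ × ℝ) :
    Continuous (fun q => fderiv ℝ g q v) := by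
  have : ContDiff ℝ 0 (fun q => fderiv ℝ g q v) :=
    (ContinuousLinearMap.apply ℝ ℝ v).contDiff.comp (hg.fderiv_right (by norm_num))
  exact this.continuous

/-- Lyapunov decay `V(t) ≤ e^{−2dt} V(0)` for the Dirichlet–Neumann
closed-loop target system, where `θ(t)` is a selection of
`sign(w_t(t,L) + d w(t,L))` and the right boundary condition is
`w_x(t,L) = h_L p(t) − h_L P θ(t)`. -/
theorem lyapunov_decay_dirichlet_neumann
    (L d P hL_ : ℝ) (hL : 0 < L) (hd : 0 < d) (hP : 0 < P) (hh : 0 < hL_)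
    (w : ℝ → ℝ → ℝ)
    (hw : ContDiff ℝ 2 (fun p : ℝ × ℝ => w p.1 p.2))
    (hPDE : ∀ t ∈ Set.Ioi (0:ℝ), ∀ x ∈ Set.Ioo (0:ℝ) L,
      deriv (deriv (fun s => w s x)) t =
        deriv (deriv (fun y => w t y)) x
        - 2 * d * deriv (fun s => w s x) t - d^2 * w t x)
    (hbc0 : ∀ t ≥ (0:ℝ), w t 0 = 0)
    (p θ : ℝ → ℝ)
    (hp : ∀ t ∈ Set.Ioi (0:ℝ), |p t| ≤ P)
    (hθ : ∀ t ∈ Set.Ioi (0:ℝ), |θ t| ≤ 1)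
    (hsel : ∀ t ∈ Set.Ioi (0:ℝ),
      θ t * (deriv (fun s => w s L) t + d * w t L)
        = |deriv (fun s => w s L) t + d * w t L|)
    (hbcL : ∀ t ∈ Set.Ioi (0:ℝ),
      deriv (fun y => w t y) L = hL_ * p t - hL_ * P * θ t)
    (V : ℝ → ℝ)
    (hV : ∀ t, V t =
        (1/2) * (∫ x in (0:ℝ)..L, (deriv (fun s => w s x) t + d * w t x)^2)
      + (1/2) * (∫ x in (0:ℝ)..L, (deriv (fun y => w t y) x)^2)) :
    ∀ t ≥ (0:ℝ), V t ≤ Real.exp (-(2 * d * t)) * V 0 := by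
  set W : ℝ × ℝ → ℝ := fun q => w q.1 q.2 with hWdef
  have hWd : Differentiable ℝ W := hw.differentiable (by norm_num)
  set A : ℝ × ℝ → ℝ := fun q => fderiv ℝ W q (1, 0) with hAdef
  set B : ℝ × ℝ → ℝ := fun q => fderiv ℝ W q (0, 1) with hBdef
  have hA1 : ContDiff ℝ 1 A := contDiff_fderiv_apply W hw _
  have hB1 : ContDiff ℝ 1 B := contDiff_fderiv_apply W hw _
  have hAd : Differentiable ℝ A := hA1.differentiable (by norm_num)
  have hBd : Differentiable ℝ B := hB1.differentiable (by norm_num)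
  set U : ℝ × ℝ → ℝ := fun q => A q + d * W q with hUdef
  have hUc : Continuous U := hA1.continuous.add (continuous_const.mul hw.continuous)
  have hBc : Continuous B := hB1.continuous
  -- first derivative identifications
  have hAt : ∀ t x : ℝ, deriv (fun s => w s x) t = A (t, x) := fun t x =>
    (lineDeriv_fst W hWd t x).deriv
  have hBx : ∀ t x : ℝ, deriv (fun y => w t y) x = B (t, x) := fun t x =>
    (lineDeriv_snd W hWd t x).deriv
  -- second derivative identifications
  have hAtt : ∀ t x : ℝ, deriv (deriv (fun s => w s x)) t = fderiv ℝ A (t, x) (1, 0) := by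
    intro t x
    have h1 : deriv (fun s => w s x) = fun s => A (s, x) := funext fun s => hAt s x
    rw [h1]
    exact (lineDeriv_fst A hAd t x).deriv
  have hBxx : ∀ t x : ℝ, deriv (deriv (fun y => w t y)) x = fderiv ℝ B (t, x) (0, 1) := by
    intro t x
    have h1 : deriv (fun y => w t y) = fun y => B (t, y) := funext fun y => hBx t y
    rw [h1]
    exact (lineDeriv_snd B hBd t x).deriv
  -- symmetry of second derivatives
  have hsymm : ∀ q : ℝ × ℝ, fderiv ℝ B q (1, 0) = fderiv ℝ A q (0, 1) := by
    intro q
    have hW1 : ContDiff ℝ 1 (fderiv ℝ W) := hw.fderiv_right (by norm_num)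
    have h2 : HasFDerivAt (fderiv ℝ W) (fderiv ℝ (fderiv ℝ W) q) q :=
      ((hW1.differentiable (by norm_num)) q).hasFDerivAt
    have hAder : HasFDerivAt A
        ((ContinuousLinearMap.apply ℝ ℝ ((1:ℝ), (0:ℝ))).comp (fderiv ℝ (fderiv ℝ W) q)) q :=
      (ContinuousLinearMap.apply ℝ ℝ ((1:ℝ), (0:ℝ))).hasFDerivAt.comp q h2
    have hBder : HasFDerivAt B
        ((ContinuousLinearMap.apply ℝ ℝ ((0:ℝ), (1:ℝ))).comp (fderiv ℝ (fderiv ℝ W) q)) q :=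
      (ContinuousLinearMap.apply ℝ ℝ ((0:ℝ), (1:ℝ))).hasFDerivAt.comp q h2
    have hs := second_derivative_symmetric (f := W) (f' := fderiv ℝ W)
      (fun y => (hWd y).hasFDerivAt) h2 ((1:ℝ), (0:ℝ)) ((0:ℝ), (1:ℝ))
    rw [hBder.fderiv, hAder.fderiv]
    simpa using hs
  -- boundary values at x = 0
  have hW0 : ∀ t : ℝ, 0 ≤ t → W (t, 0) = 0 := fun t ht => hbc0 t ht
  have hA0 : ∀ t : ℝ, 0 < t → A (t, 0) = 0 := by
    intro t ht
    have h1 : HasDerivAt (fun s => W (s, 0)) (A (t, 0)) t := lineDeriv_fst W hWd t 0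
    have hev : (fun s : ℝ => W (s, 0)) =ᶠ[nhds t] fun _ => (0:ℝ) := by
      filter_upwards [Ioi_mem_nhds ht] with s hs
      exact hW0 s (le_of_lt hs)
    have h2 : HasDerivAt (fun _ : ℝ => (0:ℝ)) (A (t, 0)) t := h1.congr_of_eventuallyEq hev.symm
    have := h2.unique (hasDerivAt_const t 0)
    linarith
  have hU0 : ∀ t : ℝ, 0 < t → U (t, 0) = 0 := by
    intro t ht
    simp only [hUdef, hA0 t ht, hW0 t ht.le]
    ring
  -- the energy integrand and its time derivative
  set F : ℝ × ℝ → ℝ := fun q => U q ^ 2 + B q ^ 2 with hFdef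
  set Ft : ℝ × ℝ → ℝ := fun q =>
    2 * U q * (fderiv ℝ A q (1, 0) + d * A q) + 2 * B q * fderiv ℝ A q (0, 1) with hFtdef
  have hFc : Continuous F := (hUc.pow 2).add (hBc.pow 2)
  have hFtc : Continuous Ft := by
    have h1 := cont_fderiv_apply A hA1 ((1:ℝ), (0:ℝ))
    have h2 := cont_fderiv_apply A hA1 ((0:ℝ), (1:ℝ))
    fun_prop
  -- time-line derivative of F
  have hUt : ∀ t x : ℝ, HasDerivAt (fun s => U (s, x))
      (fderiv ℝ A (t, x) (1, 0) + d * A (t, x)) t := by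
    intro t x
    exact (lineDeriv_fst A hAd t x).add ((lineDeriv_fst W hWd t x).const_mul d)
  have hBt : ∀ t x : ℝ, HasDerivAt (fun s => B (s, x)) (fderiv ℝ A (t, x) (0, 1)) t := by
    intro t x
    have := lineDeriv_fst B hBd t x
    rwa [hsymm (t, x)] at this
  have hFline : ∀ t x : ℝ, HasDerivAt (fun s => F (s, x)) (Ft (t, x)) t := by
    intro t x
    have h := ((hUt t x).pow 2).add ((hBt t x).pow 2)
    refine h.congr_deriv ?_
    simp only [hFtdef]
    push_cast
    ring
  set G : ℝ → ℝ := fun t => ∫ x in (0:ℝ)..L, F (t, x) with hGdef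
  -- derivative of G everywhere
  have hGderiv : ∀ t₀ : ℝ, HasDerivAt G (∫ x in (0:ℝ)..L, Ft (t₀, x)) t₀ := by
    intro t₀
    have hK : IsCompact (Icc (t₀ - 1) (t₀ + 1) ×ˢ uIcc (0:ℝ) L) :=
      isCompact_Icc.prod isCompact_uIcc
    obtain ⟨C, hC⟩ := hK.exists_bound_of_continuousOn hFtc.continuousOn
    have key := intervalIntegral.hasDerivAt_integral_of_dominated_loc_of_deriv_le
      (F := fun t x => F (t, x)) (F' := fun t x => Ft (t, x)) (x₀ := t₀)
      (a := (0:ℝ)) (b := L) (bound := fun _ => C) (s := Metric.ball t₀ 1) (μ := MeasureTheory.volume) (Metric.ball_mem_nhds t₀ one_pos)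
      (Filter.Eventually.of_forall fun t =>
        ((hFc.comp (Continuous.prodMk_right t)).aestronglyMeasurable))
      ((hFc.comp (Continuous.prodMk_right t₀)).intervalIntegrable 0 L)
      ((hFtc.comp (Continuous.prodMk_right t₀)).aestronglyMeasurable)
      (Filter.Eventually.of_forall ?_) intervalIntegrable_const
      (Filter.Eventually.of_forall fun x _ s _ => hFline s x)
    · exact key.2
    · intro x hx s hs
      have hs' : s ∈ Icc (t₀ - 1) (t₀ + 1) := by
        rw [Metric.mem_ball, Real.dist_eq, abs_sub_lt_iff] at hs
        constructor <;> linarith [hs.1, hs.2]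
      exact hC (s, x) ⟨hs', uIoc_subset_uIcc hx⟩
  have hGc : Continuous G := continuous_iff_continuousAt.mpr fun t => (hGderiv t).continuousAt
  -- identify V with G/2
  have hVG : ∀ t : ℝ, V t = (1/2) * G t := by
    intro t
    rw [hV t]
    have e1 : (∫ x in (0:ℝ)..L, (deriv (fun s => w s x) t + d * w t x)^2)
        = ∫ x in (0:ℝ)..L, U (t, x) ^ 2 := by
      apply intervalIntegral.integral_congr
      intro x _
      show (deriv (fun s => w s x) t + d * w t x)^2 = U (t, x) ^ 2
      rw [hAt t x]
    have e2 : (∫ x in (0:ℝ)..L, (deriv (fun y => w t y) x)^2)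
        = ∫ x in (0:ℝ)..L, B (t, x) ^ 2 := by
      apply intervalIntegral.integral_congr
      intro x _
      show (deriv (fun y => w t y) x)^2 = B (t, x) ^ 2
      rw [hBx t x]
    rw [e1, e2]
    have hadd : G t
        = (∫ x in (0:ℝ)..L, U (t, x) ^ 2) + ∫ x in (0:ℝ)..L, B (t, x) ^ 2 :=
      intervalIntegral.integral_add
        (((hUc.comp (Continuous.prodMk_right t)).pow 2).intervalIntegrable 0 L)
        (((hBc.comp (Continuous.prodMk_right t)).pow 2).intervalIntegrable 0 L)
    rw [hadd]; ring
  -- the decay inequality for the derivative of G on (0, ∞)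
  have hkey : ∀ t : ℝ, 0 < t →
      (∫ x in (0:ℝ)..L, Ft (t, x)) ≤ -(2 * d) * G t := by
    intro t ht
    -- spatial derivative of 2 U B
    have hQ : ∀ x : ℝ, HasDerivAt (fun y => 2 * (U (t, y) * B (t, y)))
        (2 * ((fderiv ℝ A (t, x) (0, 1) + d * B (t, x)) * B (t, x)
            + U (t, x) * fderiv ℝ B (t, x) (0, 1))) x := by
      intro x
      have hUx : HasDerivAt (fun y => U (t, y))
          (fderiv ℝ A (t, x) (0, 1) + d * B (t, x)) x :=
        (lineDeriv_snd A hAd t x).add ((lineDeriv_snd W hWd t x).const_mul d)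
      exact ((hUx.mul (lineDeriv_snd B hBd t x)).const_mul 2)
    set QX : ℝ → ℝ := fun x =>
      2 * ((fderiv ℝ A (t, x) (0, 1) + d * B (t, x)) * B (t, x)
        + U (t, x) * fderiv ℝ B (t, x) (0, 1)) with hQXdef
    have hQXc : Continuous QX := by
      have h1 := (cont_fderiv_apply A hA1 ((0:ℝ), (1:ℝ))).comp (Continuous.prodMk_right t)
      have h2 := (cont_fderiv_apply B hB1 ((0:ℝ), (1:ℝ))).comp (Continuous.prodMk_right t)
      have h3 := hUc.comp (Continuous.prodMk_right t)
      have h4 := hBc.comp (Continuous.prodMk_right t)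
      fun_prop
    have hFTC : (∫ x in (0:ℝ)..L, QX x)
        = 2 * (U (t, L) * B (t, L)) - 2 * (U (t, 0) * B (t, 0)) :=
      intervalIntegral.integral_eq_sub_of_hasDerivAt
        (fun x _ => hQ x) (hQXc.intervalIntegrable 0 L)
    -- pointwise PDE identity on (0, L)
    have hpt : ∀ x ∈ Ioo (0:ℝ) L, Ft (t, x) = QX x - 2 * d * F (t, x) := by
      intro x hx
      have hpde := hPDE t ht x hx
      rw [hAtt t x, hBxx t x, hAt t x] at hpde
      simp only [hFtdef, hQXdef, hFdef, hUdef]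
      rw [hpde]
      ring
    have hcong : (∫ x in (0:ℝ)..L, Ft (t, x))
        = ∫ x in (0:ℝ)..L, (QX x - 2 * d * F (t, x)) := by
      apply intervalIntegral.integral_congr_ae
      have hae : ∀ᵐ x : ℝ, x ≠ L := by
        rw [MeasureTheory.ae_iff]
        have hset : {x : ℝ | ¬ x ≠ L} = {L} := by ext y; simp
        rw [hset]
        exact MeasureTheory.measure_singleton L
      filter_upwards [hae] with x hx hmem
      have hx' : x ∈ Ioo (0:ℝ) L := by
        rw [uIoc_of_le hL.le] at hmem
        exact ⟨hmem.1, lt_of_le_of_ne hmem.2 hx⟩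
      exact hpt x hx'
    have hsub : (∫ x in (0:ℝ)..L, (QX x - 2 * d * F (t, x)))
        = (∫ x in (0:ℝ)..L, QX x) - 2 * d * ∫ x in (0:ℝ)..L, F (t, x) := by
      have hcF2 : Continuous (fun x : ℝ => 2 * d * F (t, x)) := by fun_prop
      rw [intervalIntegral.integral_sub
          (hQXc.intervalIntegrable (μ := MeasureTheory.volume) 0 L)
          (hcF2.intervalIntegrable (μ := MeasureTheory.volume) 0 L),
        intervalIntegral.integral_const_mul (2*d) (fun x : ℝ => F (t, x))]
    -- boundary term is nonpositive
    have hbdry : 2 * (U (t, L) * B (t, L)) ≤ 0 := by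
      have hBL : B (t, L) = hL_ * p t - hL_ * P * θ t := by
        rw [← hBx t L]; exact hbcL t ht
      set uL : ℝ := U (t, L) with huLdef
      have hrw : θ t * uL = |uL| := by
        have heq : uL = deriv (fun s => w s L) t + d * w t L := by
          rw [hAt t L]
        rw [heq]
        exact hsel t ht
      have h1 : p t * uL ≤ P * |uL| := by
        calc p t * uL ≤ |p t * uL| := le_abs_self _
          _ = |p t| * |uL| := abs_mul _ _
          _ ≤ P * |uL| := mul_le_mul_of_nonneg_right (hp t ht) (abs_nonneg _)
      have h2 : uL * B (t, L) = hL_ * (p t * uL - P * |uL|) := by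
        rw [hBL, ← hrw]
        ring
      have h3 : p t * uL - P * |uL| ≤ 0 := by linarith
      nlinarith [mul_nonpos_of_nonneg_of_nonpos hh.le h3]
    have hU0t : U (t, 0) = 0 := hU0 t ht
    rw [hcong, hsub, hFTC, hU0t]
    simp only [zero_mul, mul_zero, sub_zero]
    have hGt : G t = ∫ x in (0:ℝ)..L, F (t, x) := rfl
    rw [← hGt]
    linarith
  -- the Lyapunov function with exponential weight is antitone on [0, ∞)
  set φ : ℝ → ℝ := fun t => Real.exp (2 * d * t) * G t with hφdef
  have hφderiv : ∀ t : ℝ, HasDerivAt φ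
      (Real.exp (2 * d * t) * (2 * d) * G t
        + Real.exp (2 * d * t) * ∫ x in (0:ℝ)..L, Ft (t, x)) t := by
    intro t
    have hlin : HasDerivAt (fun s : ℝ => 2 * d * s) (2 * d) t := by
      simpa using (hasDerivAt_id t).const_mul (2 * d)
    have hexp : HasDerivAt (fun s : ℝ => Real.exp (2 * d * s))
        (Real.exp (2 * d * t) * (2 * d)) t := (Real.hasDerivAt_exp _).comp t hlin
    exact hexp.mul (hGderiv t)
  have hanti : AntitoneOn φ (Ici (0:ℝ)) := by
    apply antitoneOn_of_deriv_nonpos (convex_Ici 0)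
    · exact ((Real.continuous_exp.comp (continuous_const.mul continuous_id)).mul hGc).continuousOn
    · intro x hx
      exact ((hφderiv x).differentiableAt).differentiableWithinAt
    · intro x hx
      rw [interior_Ici] at hx
      rw [(hφderiv x).deriv]
      have hkx := hkey x hx
      have hGnn : 0 ≤ G x := by
        have : (0:ℝ) ≤ ∫ y in (0:ℝ)..L, F (x, y) := by
          apply intervalIntegral.integral_nonneg hL.le
          intro u _
          positivity
        simpa [hGdef] using this
      have hexp_pos : 0 < Real.exp (2 * d * x) := Real.exp_pos _
      nlinarith
  -- conclude
  intro t ht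
  have hφ : φ t ≤ φ 0 := hanti (self_mem_Ici) ht ht
  have hφ0 : φ 0 = G 0 := by simp [hφdef]
  have hexp_pos : 0 < Real.exp (2 * d * t) := Real.exp_pos _
  have hGle : G t ≤ Real.exp (-(2 * d * t)) * G 0 := by
    rw [hφ0] at hφ
    have := mul_le_mul_of_nonneg_left hφ (Real.exp_pos (-(2 * d * t))).le
    calc G t = Real.exp (-(2 * d * t)) * (Real.exp (2 * d * t) * G t) := by
          rw [← mul_assoc, ← Real.exp_add]; simp
      _ ≤ Real.exp (-(2 * d * t)) * G 0 := this
  rw [hVG t, hVG 0]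
  calc (1/2) * G t ≤ (1/2) * (Real.exp (-(2 * d * t)) * G 0) := by linarith
    _ = Real.exp (-(2 * d * t)) * ((1/2) * G 0) := by ring
end

section
/- Let L > 0, d > 0, P > 0 and h_L > 0. Let w : [0,∞) × [0,L] → ℝ be twice continuously differentiable and satisfy w_tt = w_xx − 2d·w_t − d²·w for all (t,x) ∈ (0,∞) × (0,L) and w(t,0) = 0 for all t ≥ 0. Suppose there are functions p, θ : (0,∞) → ℝ with |p(t)| ≤ P, |θ(t)| ≤ 1, θ(t)·(w_t(t,L) + d·w(t,L)) = |w_t(t,L) + d·w(t,L)|, and w_x(t,L) = h_L·p(t) − h_L·P·θ(t) for every t > 0. Set K = max{8L²d²+1, 2} / min{1/(8L²d²+1), 1/2}. Then ∫₀ᴸ (w_t(t,x)² + w_x(t,x)²) dx ≤ K·e^{−2dt}·∫₀ᴸ (w_t(0,x)² + w_x(0,x)²) dx for all t ≥ 0. -/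
open intervalIntegral MeasureTheory Set

lemma cs_aux (g : ℝ → ℝ) (hg : Continuous g) {x : ℝ} (hx : 0 ≤ x) :
    (∫ y in (0:ℝ)..x, g y)^2 ≤ x * ∫ y in (0:ℝ)..x, (g y)^2 := by
  set F : ℝ → ℝ := fun z => z * (∫ y in (0:ℝ)..z, (g y)^2) - (∫ y in (0:ℝ)..z, g y)^2 with hF
  have hint : ∀ z : ℝ, HasDerivAt (fun z => ∫ y in (0:ℝ)..z, g y) (g z) z := fun z =>
    (intervalIntegral.integral_hasDerivAt_right (hg.intervalIntegrable 0 z)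
      (hg.stronglyMeasurableAtFilter _ _) hg.continuousAt)
  have hint2 : ∀ z : ℝ, HasDerivAt (fun z => ∫ y in (0:ℝ)..z, (g y)^2) ((g z)^2) z := fun z =>
    (intervalIntegral.integral_hasDerivAt_right ((hg.pow 2).intervalIntegrable 0 z)
      ((hg.pow 2).stronglyMeasurableAtFilter _ _) (hg.pow 2).continuousAt)
  have hder : ∀ z : ℝ, HasDerivAt F
      ((∫ y in (0:ℝ)..z, (g y)^2) + z * (g z)^2 - 2 * (∫ y in (0:ℝ)..z, g y) * g z) z := by
    intro z
    have h1 := ((hasDerivAt_id z).mul (hint2 z))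
    have h2 := ((hint z).pow 2)
    simpa [F, pow_two, mul_comm, mul_assoc, mul_left_comm, Pi.mul_def, Pi.sub_def, Pi.pow_def, id] using h1.sub h2
  have hmono : MonotoneOn F (Set.Ici (0:ℝ)) := by
    apply monotoneOn_of_deriv_nonneg (convex_Ici 0)
    · exact (Continuous.continuousOn (by
        apply Continuous.sub
        · exact continuous_id.mul (intervalIntegral.continuous_primitive (fun a b => (hg.pow 2).intervalIntegrable a b) 0)
        · exact (intervalIntegral.continuous_primitive (fun a b => hg.intervalIntegrable a b) 0).pow 2))
    · intro z hz; exact ((hder z).differentiableAt).differentiableWithinAt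
    · intro z hz
      rw [(hder z).deriv]
      rw [interior_Ici] at hz
      have key : (∫ y in (0:ℝ)..z, (g y)^2) + z * (g z)^2 - 2 * (∫ y in (0:ℝ)..z, g y) * g z
          = ∫ y in (0:ℝ)..z, (g y - g z)^2 := by
        have : ∀ y, (g y - g z)^2 = (g y)^2 + (g z)^2 - 2 * g z * g y := by intro y; ring
        rw [intervalIntegral.integral_congr (fun y _ => this y)]
        rw [intervalIntegral.integral_sub (f := fun y => g y ^ 2 + g z ^ 2) (g := fun y => 2 * g z * g y) (((hg.pow 2).add continuous_const).intervalIntegrable 0 z)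
          ((continuous_const.mul hg).intervalIntegrable 0 z),
          intervalIntegral.integral_add (f := fun y => g y ^ 2) (g := fun _ => g z ^ 2) ((hg.pow 2).intervalIntegrable 0 z)
            (continuous_const.intervalIntegrable 0 z),
          intervalIntegral.integral_const, intervalIntegral.integral_const_mul]
        simp only [smul_eq_mul]; ring
      rw [key]
      apply intervalIntegral.integral_nonneg (le_of_lt hz)
      intro y _; positivity
  have h0 : F 0 ≤ F x := hmono (by simp) hx hx
  simp only [F] at h0
  simp only [intervalIntegral.integral_same] at h0
  linarith


set_option maxHeartbeats 2000000 in
/-- rapid exponential decay of the energy with explicit constant `K`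
for the Dirichlet–Neumann closed-loop target system. -/
theorem energy_decay_dirichlet_neumann
    (L d P hL_ : ℝ) (hL : 0 < L) (hd : 0 < d) (hP : 0 < P) (hh : 0 < hL_)
    (w : ℝ → ℝ → ℝ)
    (hw : ContDiff ℝ 2 (fun p : ℝ × ℝ => w p.1 p.2))
    (hPDE : ∀ t ∈ Set.Ioi (0:ℝ), ∀ x ∈ Set.Ioo (0:ℝ) L,
      deriv (deriv (fun s => w s x)) t =
        deriv (deriv (fun y => w t y)) x
        - 2 * d * deriv (fun s => w s x) t - d^2 * w t x)
    (hbc0 : ∀ t ≥ (0:ℝ), w t 0 = 0)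
    (p θ : ℝ → ℝ)
    (hp : ∀ t ∈ Set.Ioi (0:ℝ), |p t| ≤ P)
    (hθ : ∀ t ∈ Set.Ioi (0:ℝ), |θ t| ≤ 1)
    (hsel : ∀ t ∈ Set.Ioi (0:ℝ),
      θ t * (deriv (fun s => w s L) t + d * w t L)
        = |deriv (fun s => w s L) t + d * w t L|)
    (hbcL : ∀ t ∈ Set.Ioi (0:ℝ),
      deriv (fun y => w t y) L = hL_ * p t - hL_ * P * θ t) :
    ∀ t ≥ (0:ℝ),
      (∫ x in (0:ℝ)..L,
          ((deriv (fun s => w s x) t)^2 + (deriv (fun y => w t y) x)^2))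
        ≤ (max (8 * L^2 * d^2 + 1) 2 / min (1 / (8 * L^2 * d^2 + 1)) (1/2))
          * Real.exp (-(2 * d * t))
          * (∫ x in (0:ℝ)..L,
              ((deriv (fun s => w s x) 0)^2 + (deriv (fun y => w 0 y) x)^2)) := by
  -- notation
  set W : ℝ × ℝ → ℝ := fun q => w q.1 q.2 with hWdef
  set D1 : ℝ × ℝ → ℝ := fun q => fderiv ℝ W q (1,0) with hD1def
  set D2 : ℝ × ℝ → ℝ := fun q => fderiv ℝ W q (0,1) with hD2def
  have hW1 : ContDiff ℝ 1 W := hw.of_le one_le_two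
  have hWc : Continuous W := hW1.continuous
  have hfd1 : ContDiff ℝ 1 (fderiv ℝ W) := hw.fderiv_right (m := 1) (by norm_num)
  have hD1c1 : ContDiff ℝ 1 D1 := hfd1.clm_apply contDiff_const
  have hD2c1 : ContDiff ℝ 1 D2 := hfd1.clm_apply contDiff_const
  -- first derivatives
  have hd1 : ∀ t x : ℝ, HasDerivAt (fun s => w s x) (D1 (t,x)) t := by
    intro t x
    exact ((hW1.differentiable one_ne_zero (t,x)).hasFDerivAt).comp_hasDerivAt t
      ((hasDerivAt_id t).prodMk (hasDerivAt_const t x))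
  have hd2 : ∀ t x : ℝ, HasDerivAt (fun y => w t y) (D2 (t,x)) x := by
    intro t x
    exact ((hW1.differentiable one_ne_zero (t,x)).hasFDerivAt).comp_hasDerivAt x
      ((hasDerivAt_const x t).prodMk (hasDerivAt_id x))
  have hder1 : ∀ t x : ℝ, deriv (fun s => w s x) t = D1 (t,x) := fun t x => (hd1 t x).deriv
  have hder2 : ∀ t x : ℝ, deriv (fun y => w t y) x = D2 (t,x) := fun t x => (hd2 t x).deriv
  -- second derivatives
  set D11 : ℝ × ℝ → ℝ := fun q => fderiv ℝ D1 q (1,0) with hD11def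
  set D21 : ℝ × ℝ → ℝ := fun q => fderiv ℝ D2 q (1,0) with hD21def
  set D12 : ℝ × ℝ → ℝ := fun q => fderiv ℝ D1 q (0,1) with hD12def
  set D22 : ℝ × ℝ → ℝ := fun q => fderiv ℝ D2 q (0,1) with hD22def
  have hdD1t : ∀ t x : ℝ, HasDerivAt (fun s => D1 (s,x)) (D11 (t,x)) t := by
    intro t x
    exact ((hD1c1.differentiable one_ne_zero (t,x)).hasFDerivAt).comp_hasDerivAt t
      ((hasDerivAt_id t).prodMk (hasDerivAt_const t x))
  have hdD1x : ∀ t x : ℝ, HasDerivAt (fun y => D1 (t,y)) (D12 (t,x)) x := by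
    intro t x
    exact ((hD1c1.differentiable one_ne_zero (t,x)).hasFDerivAt).comp_hasDerivAt x
      ((hasDerivAt_const x t).prodMk (hasDerivAt_id x))
  have hdD2t : ∀ t x : ℝ, HasDerivAt (fun s => D2 (s,x)) (D21 (t,x)) t := by
    intro t x
    exact ((hD2c1.differentiable one_ne_zero (t,x)).hasFDerivAt).comp_hasDerivAt t
      ((hasDerivAt_id t).prodMk (hasDerivAt_const t x))
  have hdD2x : ∀ t x : ℝ, HasDerivAt (fun y => D2 (t,y)) (D22 (t,x)) x := by
    intro t x
    exact ((hD2c1.differentiable one_ne_zero (t,x)).hasFDerivAt).comp_hasDerivAt x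
      ((hasDerivAt_const x t).prodMk (hasDerivAt_id x))
  -- symmetry of mixed derivatives
  have hsymm : ∀ q : ℝ × ℝ, D12 q = D21 q := by
    intro q
    have hfdq : DifferentiableAt ℝ (fderiv ℝ W) q := hfd1.differentiable one_ne_zero q
    have h1 : HasFDerivAt D1
        ((ContinuousLinearMap.apply ℝ ℝ ((1:ℝ),(0:ℝ))).comp (fderiv ℝ (fderiv ℝ W) q)) q :=
      (ContinuousLinearMap.apply ℝ ℝ ((1:ℝ),(0:ℝ))).hasFDerivAt.comp q hfdq.hasFDerivAt
    have h2 : HasFDerivAt D2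
        ((ContinuousLinearMap.apply ℝ ℝ ((0:ℝ),(1:ℝ))).comp (fderiv ℝ (fderiv ℝ W) q)) q :=
      (ContinuousLinearMap.apply ℝ ℝ ((0:ℝ),(1:ℝ))).hasFDerivAt.comp q hfdq.hasFDerivAt
    have e1 : D12 q = fderiv ℝ (fderiv ℝ W) q (0,1) (1,0) := by
      simp only [hD12def]; rw [h1.fderiv]; rfl
    have e2 : D21 q = fderiv ℝ (fderiv ℝ W) q (1,0) (0,1) := by
      simp only [hD21def]; rw [h2.fderiv]; rfl
    rw [e1, e2]
    exact (hw.contDiffAt.isSymmSndFDerivAt (by norm_num)).eq _ _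
  -- PDE in our notation
  have hPDE' : ∀ t ∈ Set.Ioi (0:ℝ), ∀ x ∈ Set.Ioo (0:ℝ) L,
      D11 (t,x) = D22 (t,x) - 2 * d * D1 (t,x) - d^2 * W (t,x) := by
    intro t ht x hx
    have h := hPDE t ht x hx
    have e1 : deriv (deriv (fun s => w s x)) t = D11 (t,x) := by
      have : deriv (fun s => w s x) = fun s => D1 (s,x) := funext fun s => (hd1 s x).deriv
      rw [this]; exact (hdD1t t x).deriv
    have e2 : deriv (deriv (fun y => w t y)) x = D22 (t,x) := by
      have : deriv (fun y => w t y) = fun y => D2 (t,y) := funext fun y => (hd2 t y).deriv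
      rw [this]; exact (hdD2x t x).deriv
    rw [e1, e2, hder1] at h
    exact h
  -- the Lyapunov functional pieces
  set U : ℝ × ℝ → ℝ := fun q => D1 q + d * W q with hUdef
  have hUc1 : ContDiff ℝ 1 U := hD1c1.add (contDiff_const.mul hW1)
  set G : ℝ × ℝ → ℝ := fun q => (U q)^2 / 2 + (D2 q)^2 / 2 with hGdef
  set Gt : ℝ × ℝ → ℝ := fun q => U q * (D11 q + d * D1 q) + D2 q * D21 q with hGtdef
  have hGc : Continuous G := by
    apply Continuous.add
    · exact ((hUc1.continuous.pow 2).div_const 2)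
    · exact ((hD2c1.continuous.pow 2).div_const 2)
  have hD11c : Continuous D11 :=
    ((hD1c1.fderiv_right (m := 0) (by norm_num)).clm_apply contDiff_const).continuous
  have hD21c : Continuous D21 :=
    ((hD2c1.fderiv_right (m := 0) (by norm_num)).clm_apply contDiff_const).continuous
  have hD12c : Continuous D12 :=
    ((hD1c1.fderiv_right (m := 0) (by norm_num)).clm_apply contDiff_const).continuous
  have hD22c : Continuous D22 :=
    ((hD2c1.fderiv_right (m := 0) (by norm_num)).clm_apply contDiff_const).continuous
  have hGtc : Continuous Gt :=
    (hUc1.continuous.mul (hD11c.add (continuous_const.mul hD1c1.continuous))).add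
      (hD2c1.continuous.mul hD21c)
  set V : ℝ → ℝ := fun t => ∫ x in (0:ℝ)..L, G (t,x) with hVdef
  -- derivative of G in time
  have hGt : ∀ t x : ℝ, HasDerivAt (fun s => G (s,x)) (Gt (t,x)) t := by
    intro t x
    have hu : HasDerivAt (fun s => U (s,x)) (D11 (t,x) + d * D1 (t,x)) t :=
      (hdD1t t x).add ((hd1 t x).const_mul d)
    have h1 : HasDerivAt (fun s => (U (s,x))^2 / 2) (U (t,x) * (D11 (t,x) + d * D1 (t,x))) t := by
      have := (hu.pow 2).div_const 2
      simpa [pow_two, mul_comm, mul_assoc, mul_left_comm] using this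
    have h2 : HasDerivAt (fun s => (D2 (s,x))^2 / 2) (D2 (t,x) * D21 (t,x)) t := by
      have := ((hdD2t t x).pow 2).div_const 2
      simpa [pow_two, mul_comm, mul_assoc, mul_left_comm] using this
    exact h1.add h2
  -- V is differentiable with derivative ∫ Gt
  have hVder : ∀ t : ℝ, HasDerivAt V (∫ x in (0:ℝ)..L, Gt (t,x)) t := by
    intro t₀
    have hK : IsCompact ((Set.Icc (t₀-1) (t₀+1)) ×ˢ (Set.uIcc (0:ℝ) L)) :=
      isCompact_Icc.prod isCompact_uIcc
    obtain ⟨C, hC⟩ := hK.exists_bound_of_continuousOn hGtc.continuousOn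
    have main := intervalIntegral.hasDerivAt_integral_of_dominated_loc_of_deriv_le
      (F := fun s x => G (s,x)) (F' := fun s x => Gt (s,x)) (x₀ := t₀)
      (a := (0:ℝ)) (b := L) (bound := fun _ => C) (s := Metric.ball t₀ 1) (μ := MeasureTheory.volume) (Metric.ball_mem_nhds t₀ one_pos)
      (Filter.Eventually.of_forall (fun s =>
        (hGc.comp (continuous_const.prodMk continuous_id)).aestronglyMeasurable))
      ((hGc.comp (continuous_const.prodMk continuous_id)).intervalIntegrable 0 L)
      ((hGtc.comp (continuous_const.prodMk continuous_id)).aestronglyMeasurable)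
      (ae_of_all _ (fun x hx s hs => by
        apply hC (s,x)
        refine ⟨?_, Set.uIoc_subset_uIcc hx⟩
        have := Metric.mem_ball.mp hs
        rw [Real.dist_eq] at this
        constructor <;> [linarith [neg_abs_le (s - t₀)]; linarith [le_abs_self (s - t₀)]]))
      (intervalIntegrable_const)
      (ae_of_all _ (fun x hx s hs => hGt s x))
    exact main.2
  -- the derivative bound for t > 0
  have hVbound : ∀ t ∈ Set.Ioi (0:ℝ), (∫ x in (0:ℝ)..L, Gt (t,x)) ≤ -(2*d) * V t := by
    intro t ht
    set dxH : ℝ → ℝ := fun x => (D12 (t,x) + d * D2 (t,x)) * D2 (t,x) + U (t,x) * D22 (t,x)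
      with hdxHdef
    have hdxHc : Continuous dxH :=
      (((hD12c.comp (continuous_const.prodMk continuous_id)).add
        (continuous_const.mul (hD2c1.continuous.comp (continuous_const.prodMk continuous_id)))).mul
        (hD2c1.continuous.comp (continuous_const.prodMk continuous_id))).add
        ((hUc1.continuous.comp (continuous_const.prodMk continuous_id)).mul
          (hD22c.comp (continuous_const.prodMk continuous_id)))
    -- pointwise identity on the open interval
    have hpt : Set.EqOn (fun x => Gt (t,x)) (fun x => dxH x - 2*d* G (t,x)) (Set.Ioo 0 L) := by
      intro x hx
      have hpde := hPDE' t ht x hx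
      have hsym := hsymm (t,x)
      simp only [hGtdef, hdxHdef, hGdef, hUdef]
      rw [hpde, ← hsym]
      ring
    -- extend to the closed interval by continuity
    have hptc : Set.EqOn (fun x => Gt (t,x)) (fun x => dxH x - 2*d* G (t,x))
        (Set.Icc 0 L) := by
      have hcl : closure (Set.Ioo (0:ℝ) L) = Set.Icc 0 L := closure_Ioo hL.ne
      rw [← hcl]
      exact Set.EqOn.closure hpt (hGtc.comp (continuous_const.prodMk continuous_id))
        (hdxHc.sub (continuous_const.mul (hGc.comp (continuous_const.prodMk continuous_id))))
    -- rewrite the integral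
    have e1 : (∫ x in (0:ℝ)..L, Gt (t,x)) = ∫ x in (0:ℝ)..L, (dxH x - 2*d* G (t,x)) := by
      apply intervalIntegral.integral_congr
      rwa [Set.uIcc_of_le hL.le]
    have e2 : (∫ x in (0:ℝ)..L, (dxH x - 2*d* G (t,x)))
        = (∫ x in (0:ℝ)..L, dxH x) - 2*d* V t := by
      have hGtx : Continuous (fun x => G (t,x)) := hGc.comp (continuous_const.prodMk continuous_id)
      rw [intervalIntegral.integral_sub (f := dxH) (g := fun x => 2*d* G (t,x)) (hdxHc.intervalIntegrable 0 L)
        ((continuous_const.mul hGtx).intervalIntegrable 0 L),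
        intervalIntegral.integral_const_mul]
    -- FTC for the divergence term
    have e3 : (∫ x in (0:ℝ)..L, dxH x) = U (t,L) * D2 (t,L) - U (t,0) * D2 (t,0) := by
      apply intervalIntegral.integral_eq_sub_of_hasDerivAt
      · intro x hx
        have hU' : HasDerivAt (fun y => U (t,y)) (D12 (t,x) + d * D2 (t,x)) x :=
          (hdD1x t x).add ((hd2 t x).const_mul d)
        exact hU'.mul (hdD2x t x)
      · exact hdxHc.intervalIntegrable 0 L
    -- boundary at 0 vanishes
    have hU0 : U (t,0) = 0 := by
      have hw0 : w t 0 = 0 := hbc0 t (le_of_lt ht)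
      have hD10 : D1 (t,0) = 0 := by
        rw [← hder1 t 0]
        have heq : (fun s => w s 0) =ᶠ[nhds t] (fun _ => (0:ℝ)) := by
          filter_upwards [isOpen_Ioi.mem_nhds ht] with s hs
          exact hbc0 s (le_of_lt hs)
        rw [heq.deriv_eq, deriv_const]
      simp [hUdef, hD10, show W (t,0) = 0 from hw0]
    -- boundary at L is nonpositive
    have hUL : U (t,L) * D2 (t,L) ≤ 0 := by
      set u : ℝ := U (t,L) with hu
      have hu' : u = deriv (fun s => w s L) t + d * w t L := by
        rw [hu, hUdef]; simp [hder1, hWdef]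
      have hselL : θ t * u = |u| := by rw [hu']; exact hsel t ht
      have hD2L : D2 (t,L) = hL_ * p t - hL_ * P * θ t := by
        rw [← hder2 t L]; exact hbcL t ht
      have hpu : u * p t ≤ P * |u| := by
        calc u * p t ≤ |u * p t| := le_abs_self _
        _ = |u| * |p t| := abs_mul _ _
        _ ≤ |u| * P := by
            apply mul_le_mul_of_nonneg_left (hp t ht) (abs_nonneg u)
        _ = P * |u| := mul_comm _ _
      have hθu : u * θ t = |u| := by rw [mul_comm]; exact hselL
      calc U (t,L) * D2 (t,L) = hL_ * (u * p t) - hL_ * P * (u * θ t) := by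
            rw [hD2L, ← hu]; ring
      _ ≤ hL_ * (P * |u|) - hL_ * P * |u| := by
          rw [hθu]
          have := mul_le_mul_of_nonneg_left hpu (le_of_lt hh)
          linarith
      _ = 0 := by ring
    rw [e1, e2, e3, hU0]
    have : U (t, L) * D2 (t, L) - 0 * D2 (t, 0) - 2 * d * V t ≤ 0 - 2*d*V t := by
      rw [zero_mul]; linarith
    linarith
  -- Gronwall
  have hgron : ∀ t ≥ (0:ℝ), V t ≤ Real.exp (-(2*d*t)) * V 0 := by
    have hhder : ∀ t : ℝ, HasDerivAt (fun t => Real.exp (2*d*t) * V t)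
        (Real.exp (2*d*t) * ((∫ x in (0:ℝ)..L, Gt (t,x)) + 2*d*V t)) t := by
      intro t
      have he : HasDerivAt (fun t : ℝ => Real.exp (2*d*t)) (Real.exp (2*d*t) * (2*d)) t := by
        have := ((hasDerivAt_id t).const_mul (2*d)).exp
        simpa [mul_comm] using this
      have := he.mul (hVder t)
      exact this.congr_deriv (by ring)
    have hanti : AntitoneOn (fun t => Real.exp (2*d*t) * V t) (Set.Ici (0:ℝ)) := by
      apply antitoneOn_of_deriv_nonpos (convex_Ici 0)
      · apply Continuous.continuousOn
        apply continuous_iff_continuousAt.mpr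
        exact fun t => (hhder t).continuousAt
      · intro t _
        exact (hhder t).differentiableAt.differentiableWithinAt
      · intro t htt
        rw [interior_Ici] at htt
        rw [(hhder t).deriv]
        apply mul_nonpos_of_nonneg_of_nonpos (le_of_lt (Real.exp_pos _))
        have := hVbound t htt
        linarith
    intro t ht
    have hle : Real.exp (2*d*t) * V t ≤ Real.exp (2*d*0) * V 0 :=
      hanti (Set.self_mem_Ici) ht ht
    calc V t = Real.exp (-(2*d*t)) * (Real.exp (2*d*t) * V t) := by
          rw [← mul_assoc, ← Real.exp_add]; simp
    _ ≤ Real.exp (-(2*d*t)) * (Real.exp (2*d*0) * V 0) :=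
        mul_le_mul_of_nonneg_left hle (le_of_lt (Real.exp_pos _))
    _ = Real.exp (-(2*d*t)) * V 0 := by norm_num
  -- Poincaré at any time t ≥ 0
  have hpoin : ∀ t ≥ (0:ℝ), ∀ x ∈ Set.Icc (0:ℝ) L,
      (w t x)^2 ≤ L * ∫ y in (0:ℝ)..L, (D2 (t,y))^2 := by
    intro t ht x hx
    have hD2tc : Continuous (fun y => D2 (t,y)) :=
      hD2c1.continuous.comp (continuous_const.prodMk continuous_id)
    have hftc : (∫ y in (0:ℝ)..x, D2 (t,y)) = w t x - w t 0 := by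
      apply intervalIntegral.integral_eq_sub_of_hasDerivAt (fun y _ => hd2 t y)
      exact hD2tc.intervalIntegrable 0 x
    have hwx : w t x = ∫ y in (0:ℝ)..x, D2 (t,y) := by
      rw [hftc, hbc0 t ht, sub_zero]
    have h1 : (w t x)^2 ≤ x * ∫ y in (0:ℝ)..x, (D2 (t,y))^2 := by
      rw [hwx]; exact cs_aux _ hD2tc hx.1
    have h2 : (∫ y in (0:ℝ)..x, (D2 (t,y))^2) ≤ ∫ y in (0:ℝ)..L, (D2 (t,y))^2 := by
      rw [← intervalIntegral.integral_add_adjacent_intervals (f := fun y => (D2 (t,y))^2)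
        (by exact (hD2tc.pow 2).intervalIntegrable 0 x) (c := L)
        (by exact (hD2tc.pow 2).intervalIntegrable x L)]
      have : (0:ℝ) ≤ ∫ y in x..L, (D2 (t,y))^2 :=
        intervalIntegral.integral_nonneg hx.2 (fun y _ => sq_nonneg _)
      linarith
    have h3 : (0:ℝ) ≤ ∫ y in (0:ℝ)..x, (D2 (t,y))^2 :=
      intervalIntegral.integral_nonneg hx.1 (fun y _ => sq_nonneg _)
    calc (w t x)^2 ≤ x * ∫ y in (0:ℝ)..x, (D2 (t,y))^2 := h1
    _ ≤ L * ∫ y in (0:ℝ)..L, (D2 (t,y))^2 := by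
        apply mul_le_mul hx.2 h2 h3 (le_of_lt hL)
  -- continuity helpers
  have hcU : ∀ t : ℝ, Continuous (fun x => U (t,x)) :=
    fun t => hUc1.continuous.comp (continuous_const.prodMk continuous_id)
  have hcD1 : ∀ t : ℝ, Continuous (fun x => D1 (t,x)) :=
    fun t => hD1c1.continuous.comp (continuous_const.prodMk continuous_id)
  have hcD2 : ∀ t : ℝ, Continuous (fun x => D2 (t,x)) :=
    fun t => hD2c1.continuous.comp (continuous_const.prodMk continuous_id)
  -- V splits
  have hVsplit : ∀ t : ℝ, V t = (∫ x in (0:ℝ)..L, (U (t,x))^2)/2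
      + (∫ x in (0:ℝ)..L, (D2 (t,x))^2)/2 := by
    intro t
    show (∫ x in (0:ℝ)..L, ((U (t,x))^2/2 + (D2 (t,x))^2/2)) = _
    rw [intervalIntegral.integral_add (f := fun x => (U (t,x))^2/2) (g := fun x => (D2 (t,x))^2/2) ((((hcU t).pow 2).div_const 2).intervalIntegrable 0 L)
      ((((hcD2 t).pow 2).div_const 2).intervalIntegrable 0 L),
      intervalIntegral.integral_div, intervalIntegral.integral_div]
  have hM1 : (1:ℝ) ≤ max 1 (L^2*d^2 + 1/2) := le_max_left _ _
  have hM2 : L^2*d^2 + 1/2 ≤ max 1 (L^2*d^2 + 1/2) := le_max_right _ _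
  -- energy comparisons
  have hEV : ∀ t ≥ (0:ℝ),
      (∫ x in (0:ℝ)..L, ((D1 (t,x))^2 + (D2 (t,x))^2))
        ≤ (4 * max 1 (L^2*d^2 + 1/2)) * V t := by
    intro t ht
    set IU : ℝ := ∫ x in (0:ℝ)..L, (U (t,x))^2 with hIU
    set ID : ℝ := ∫ x in (0:ℝ)..L, (D2 (t,x))^2 with hID
    have hIU0 : 0 ≤ IU := intervalIntegral.integral_nonneg hL.le (fun x _ => sq_nonneg _)
    have hID0 : 0 ≤ ID := intervalIntegral.integral_nonneg hL.le (fun x _ => sq_nonneg _)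
    have hmono : (∫ x in (0:ℝ)..L, ((D1 (t,x))^2 + (D2 (t,x))^2))
        ≤ ∫ x in (0:ℝ)..L, (2*(U (t,x))^2 + (D2 (t,x))^2 + 2*d^2*(L*ID)) := by
      apply intervalIntegral.integral_mono_on hL.le
      · exact (((hcD1 t).pow 2).add ((hcD2 t).pow 2)).intervalIntegrable 0 L
      · exact (((continuous_const.mul ((hcU t).pow 2)).add ((hcD2 t).pow 2)).add
          continuous_const).intervalIntegrable 0 L
      · intro x hx
        have hpw := hpoin t ht x hx
        have hUe : D1 (t,x) = U (t,x) - d * w t x := by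
          simp only [hUdef]; ring
        have h1 : (D1 (t,x))^2 ≤ 2*(U (t,x))^2 + 2*d^2*(w t x)^2 := by
          rw [hUe]; nlinarith [sq_nonneg (U (t,x) + d * w t x)]
        have h2 : 2*d^2*(w t x)^2 ≤ 2*d^2*(L*ID) := by
          apply mul_le_mul_of_nonneg_left hpw (by positivity)
        linarith
    have hcomp : (∫ x in (0:ℝ)..L, (2*(U (t,x))^2 + (D2 (t,x))^2 + 2*d^2*(L*ID)))
        = 2*IU + ID + L*(2*d^2*(L*ID)) := by
      rw [intervalIntegral.integral_add (f := fun x => 2*(U (t,x))^2 + (D2 (t,x))^2) (g := fun _ => 2*d^2*(L*ID))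
          (((continuous_const.mul ((hcU t).pow 2)).add ((hcD2 t).pow 2)).intervalIntegrable 0 L)
          (continuous_const.intervalIntegrable 0 L),
        intervalIntegral.integral_add (f := fun x => 2*(U (t,x))^2) (g := fun x => (D2 (t,x))^2)
          ((continuous_const.mul ((hcU t).pow 2)).intervalIntegrable 0 L)
          (((hcD2 t).pow 2).intervalIntegrable 0 L),
        intervalIntegral.integral_const_mul, intervalIntegral.integral_const]
      simp [smul_eq_mul, hIU, hID]
    rw [hVsplit t, ← hIU, ← hID]
    have h1' : 1*IU ≤ max 1 (L^2*d^2 + 1/2)*IU := mul_le_mul_of_nonneg_right hM1 hIU0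
    have h2' : (L^2*d^2 + 1/2)*ID ≤ max 1 (L^2*d^2 + 1/2)*ID :=
      mul_le_mul_of_nonneg_right hM2 hID0
    have hkey : 2*IU + ID + L*(2*d^2*(L*ID)) ≤ 4 * max 1 (L^2*d^2 + 1/2) * (IU/2 + ID/2) := by
      linarith [h1', h2']
    linarith [hmono, hcomp.le, hcomp.ge]
  have hVE : V 0 ≤ max 1 (L^2*d^2 + 1/2)
      * (∫ x in (0:ℝ)..L, ((D1 (0,x))^2 + (D2 (0,x))^2)) := by
    set ID1 : ℝ := ∫ x in (0:ℝ)..L, (D1 (0,x))^2 with hID1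
    set ID0 : ℝ := ∫ x in (0:ℝ)..L, (D2 (0,x))^2 with hID0'
    have hID1n : 0 ≤ ID1 := intervalIntegral.integral_nonneg hL.le (fun x _ => sq_nonneg _)
    have hID0n : 0 ≤ ID0 := intervalIntegral.integral_nonneg hL.le (fun x _ => sq_nonneg _)
    have hE0split : (∫ x in (0:ℝ)..L, ((D1 (0,x))^2 + (D2 (0,x))^2)) = ID1 + ID0 := by
      rw [intervalIntegral.integral_add (f := fun x => (D1 (0,x))^2) (g := fun x => (D2 (0,x))^2) (((hcD1 0).pow 2).intervalIntegrable 0 L)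
        (((hcD2 0).pow 2).intervalIntegrable 0 L)]
    have hmono : (∫ x in (0:ℝ)..L, (U (0,x))^2)
        ≤ ∫ x in (0:ℝ)..L, (2*(D1 (0,x))^2 + 2*d^2*(L*ID0)) := by
      apply intervalIntegral.integral_mono_on hL.le
      · exact ((hcU 0).pow 2).intervalIntegrable 0 L
      · exact ((continuous_const.mul ((hcD1 0).pow 2)).add
          continuous_const).intervalIntegrable 0 L
      · intro x hx
        have hpw := hpoin 0 le_rfl x hx
        have h1 : (U (0,x))^2 ≤ 2*(D1 (0,x))^2 + 2*d^2*(w 0 x)^2 := by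
          have : U (0,x) = D1 (0,x) + d * w 0 x := rfl
          rw [this]; nlinarith [sq_nonneg (D1 (0,x) - d * w 0 x)]
        have h2 : 2*d^2*(w 0 x)^2 ≤ 2*d^2*(L*ID0) := by
          apply mul_le_mul_of_nonneg_left hpw (by positivity)
        linarith
    have hcomp : (∫ x in (0:ℝ)..L, (2*(D1 (0,x))^2 + 2*d^2*(L*ID0)))
        = 2*ID1 + L*(2*d^2*(L*ID0)) := by
      rw [intervalIntegral.integral_add (f := fun x => 2*(D1 (0,x))^2) (g := fun _ => 2*d^2*(L*ID0))
          ((continuous_const.mul ((hcD1 0).pow 2)).intervalIntegrable 0 L)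
          (continuous_const.intervalIntegrable 0 L),
        intervalIntegral.integral_const_mul, intervalIntegral.integral_const]
      simp [smul_eq_mul, hID1]
    rw [hVsplit 0, hE0split, ← hID0']
    rw [hcomp] at hmono
    have h1' : 1*ID1 ≤ max 1 (L^2*d^2 + 1/2)*ID1 := mul_le_mul_of_nonneg_right hM1 hID1n
    have h2' : (L^2*d^2 + 1/2)*ID0 ≤ max 1 (L^2*d^2 + 1/2)*ID0 :=
      mul_le_mul_of_nonneg_right hM2 hID0n
    linarith [hmono, h1', h2']
  -- final arithmetic
  intro t ht
  have hrw : ∀ τ : ℝ, (∫ x in (0:ℝ)..L,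
      ((deriv (fun s => w s x) τ)^2 + (deriv (fun y => w τ y) x)^2))
      = ∫ x in (0:ℝ)..L, ((D1 (τ,x))^2 + (D2 (τ,x))^2) := by
    intro τ; simp only [hder1, hder2]
  rw [hrw t, hrw 0]
  set M' : ℝ := max 1 (L^2*d^2 + 1/2) with hM'
  have hE0 : (0:ℝ) ≤ ∫ x in (0:ℝ)..L, ((D1 (0,x))^2 + (D2 (0,x))^2) :=
    intervalIntegral.integral_nonneg hL.le (fun x _ => add_nonneg (sq_nonneg _) (sq_nonneg _))
  have hexp : (0:ℝ) < Real.exp (-(2*d*t)) := Real.exp_pos _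
  have hKge : 4 * M'^2 ≤ max (8*L^2*d^2+1) 2 / min (1/(8*L^2*d^2+1)) (1/2) := by
    have hpos : (0:ℝ) < 8*L^2*d^2+1 := by positivity
    rcases le_total (8*L^2*d^2+1) 2 with hc | hc
    · have h1 : min (1/(8*L^2*d^2+1)) ((1:ℝ)/2) = 1/2 := by
        apply min_eq_right
        rw [div_le_div_iff₀ two_pos hpos]; linarith
      have h2 : max (8*L^2*d^2+1) (2:ℝ) = 2 := max_eq_right hc
      have hM'1 : M' = 1 := by
        apply max_eq_left; linarith
      rw [h1, h2, hM'1]; norm_num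
    · have h1 : min (1/(8*L^2*d^2+1)) ((1:ℝ)/2) = 1/(8*L^2*d^2+1) := by
        apply min_eq_left
        rw [div_le_div_iff₀ hpos two_pos]; linarith
      have h2 : max (8*L^2*d^2+1) (2:ℝ) = 8*L^2*d^2+1 := max_eq_left hc
      rw [h1, h2, div_div_eq_mul_div, div_one]
      have hMle : 2*M' ≤ 8*L^2*d^2+1 := by
        rw [hM']
        have hLd : (0:ℝ) ≤ L^2*d^2 := by positivity
        have : max 1 (L^2*d^2 + 1/2) ≤ (8*L^2*d^2+1)/2 := by
          apply max_le <;> linarith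
        linarith
      have hM'pos : (0:ℝ) < M' := lt_of_lt_of_le one_pos hM1
      have hsq := mul_self_le_mul_self (by linarith : (0:ℝ) ≤ 2*M') hMle
      linarith [hsq]
  calc (∫ x in (0:ℝ)..L, ((D1 (t,x))^2 + (D2 (t,x))^2))
      ≤ (4 * M') * V t := hEV t ht
  _ ≤ (4 * M') * (Real.exp (-(2*d*t)) * V 0) := by
      apply mul_le_mul_of_nonneg_left (hgron t ht) (by positivity)
  _ ≤ (4 * M') * (Real.exp (-(2*d*t)) * (M' * (∫ x in (0:ℝ)..L, ((D1 (0,x))^2 + (D2 (0,x))^2)))) := by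
      apply mul_le_mul_of_nonneg_left
        (mul_le_mul_of_nonneg_left hVE hexp.le) (by positivity)
  _ = (4 * M'^2) * Real.exp (-(2*d*t)) * (∫ x in (0:ℝ)..L, ((D1 (0,x))^2 + (D2 (0,x))^2)) := by
      ring
  _ ≤ (max (8*L^2*d^2+1) 2 / min (1/(8*L^2*d^2+1)) (1/2)) * Real.exp (-(2*d*t))
        * (∫ x in (0:ℝ)..L, ((D1 (0,x))^2 + (D2 (0,x))^2)) := by
      apply mul_le_mul_of_nonneg_right
        (mul_le_mul_of_nonneg_right hKge hexp.le) hE0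
  _ = (max (8*L^2*d^2+1) 2 / min (1/(8*L^2*d^2+1)) (1/2)) * Real.exp (-(2*d*t))
        * (∫ x in (0:ℝ)..L, ((D1 (0,x))^2 + (D2 (0,x))^2)) := rfl
end
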